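/- arXiv:math-ph/0007030 — 4 statements merged into one kernel-verified Lean document; each statement's English description precedes it below -/
import Mathlib

section
/- Let k₁, k₂, k₃ : ℝ × ℝⁿ × ℝⁿ → ℂ be integrable, and assume that all convolutions and antiderivatives appearing below are given by absolutely convergent integrals (in particular A(kᵢ ⋆ k₃ − k₃ ⋆ kᵢ) for i = 1,2 and A((k₁ ⋆ k₂) ⋆ k₃ − k₃ ⋆ (k₁ ⋆ k₂)) are integrable). Then the p-mechanical bracket satisfies the Leibniz rule: ⟦k₁ ⋆ k₂, k₃⟧ = ⟦k₁, k₃⟧ ⋆ k₂ + k₁ ⋆ ⟦k₂, k₃⟧ almost everywhere on ℝ × ℝⁿ × ℝⁿ. -/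
open MeasureTheory

noncomputable section

/-- The underlying space of the Heisenberg group `ℍⁿ = ℝ × ℝⁿ × ℝⁿ`. -/
abbrev Hn (n : ℕ) : Type := ℝ × (Fin n → ℝ) × (Fin n → ℝ)

/-- Euclidean inner product on ℝⁿ. -/
def dotR {n : ℕ} (x y : Fin n → ℝ) : ℝ := ∑ j, x j * y j

/-- Group convolution on the Heisenberg group:
`(k₁ ⋆ k₂)(s,x,y) = ∫ k₁(s',x',y') k₂(s − s' + (⟨x,y'⟩ − ⟨x',y⟩)/2, x − x', y − y')`. -/
def hconv {n : ℕ} (k₁ k₂ : Hn n → ℂ) : Hn n → ℂ := fun g =>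
  ∫ h : Hn n, k₁ h *
    k₂ (g.1 - h.1 + (dotR g.2.1 h.2.2 - dotR h.2.1 g.2.2) / 2,
        g.2.1 - h.2.1, g.2.2 - h.2.2)

/-- The antiderivative operator acting in the first variable `s`:
`(A k)(s,x,y) = ∫_{t ≤ s} k(t,x,y) dt`. -/
def AopH {n : ℕ} (k : Hn n → ℂ) : Hn n → ℂ := fun g =>
  ∫ t in Set.Iic g.1, k (t, g.2.1, g.2.2)

/-- The character `e^{i(⟨q,x⟩ + ⟨p,y⟩)}` of the one-dimensional representation `ρ_{(q,p)}`. -/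
def charQP {n : ℕ} (q p : Fin n → ℝ) (g : Hn n) : ℂ :=
  Complex.exp (Complex.I * ((dotR q g.2.1 + dotR p g.2.2 : ℝ) : ℂ))

/-- The one-dimensional representation `ρ_{(q,p)}` applied to an integrable kernel:
`k̂(q,p) = ∫ k(s,x,y) e^{i(⟨q,x⟩ + ⟨p,y⟩)} ds dx dy`. -/
def khat {n : ℕ} (k : Hn n → ℂ) : ((Fin n → ℝ) × (Fin n → ℝ)) → ℂ := fun qp =>
  ∫ g : Hn n, k g * charQP qp.1 qp.2 g

/-- The p-mechanical bracket `⟦k₁,k₂⟧ = A(k₁ ⋆ k₂ − k₂ ⋆ k₁)`. -/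
def pbracket {n : ℕ} (k₁ k₂ : Hn n → ℂ) : Hn n → ℂ :=
  AopH (fun g => hconv k₁ k₂ g - hconv k₂ k₁ g)

namespace PBL

open Set
open scoped ENNReal NNReal
set_option maxHeartbeats 1000000

variable {n : ℕ}

abbrev Vn (n : ℕ) : Type := (Fin n → ℝ) × (Fin n → ℝ)

def cc (v w : Vn n) : ℝ := (dotR v.1 w.2 - dotR w.1 v.2) / 2

def tau (g h : Hn n) : Hn n := (g.1 - h.1 + cc g.2 h.2, g.2 - h.2)

lemma hconv_eq (a b : Hn n → ℂ) (g : Hn n) :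
    hconv a b g = ∫ h : Hn n, a h * b (tau g h) := rfl

lemma AopH_eq (k : Hn n → ℂ) (g : Hn n) :
    AopH k g = ∫ t in Set.Iic g.1, k (t, g.2) := rfl

lemma dotR_sub_left (x y z : Fin n → ℝ) : dotR (x - y) z = dotR x z - dotR y z := by
  simp [dotR, sub_mul, Finset.sum_sub_distrib]

lemma dotR_sub_right (x y z : Fin n → ℝ) : dotR x (y - z) = dotR x y - dotR x z := by
  simp [dotR, mul_sub, Finset.sum_sub_distrib]

lemma tau_tau (g h k : Hn n) : tau (tau g k) (tau h k) = tau g h := by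
  unfold tau cc
  refine Prod.ext ?_ ?_
  · simp only [Prod.fst_sub, Prod.snd_sub, dotR_sub_left, dotR_sub_right]
    ring
  · exact sub_sub_sub_cancel_right _ _ _

lemma continuous_dotR2 : Continuous fun p : (Fin n → ℝ) × (Fin n → ℝ) => dotR p.1 p.2 := by
  unfold dotR
  exact continuous_finset_sum _ fun j _ =>
    ((continuous_apply j).comp continuous_fst).mul ((continuous_apply j).comp continuous_snd)

lemma continuous_cc2 : Continuous fun p : Vn n × Vn n => cc p.1 p.2 := by
  unfold cc
  exact ((continuous_dotR2.comp ((continuous_fst.fst).prodMk continuous_snd.snd)).sub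
    (continuous_dotR2.comp ((continuous_snd.fst).prodMk continuous_fst.snd))).div_const 2

lemma continuous_tau2 : Continuous fun p : Hn n × Hn n => tau p.1 p.2 := by
  unfold tau
  exact Continuous.prodMk
    ((continuous_fst.fst.sub continuous_snd.fst).add
      (continuous_cc2.comp ((continuous_fst.snd).prodMk continuous_snd.snd)))
    (continuous_fst.snd.sub continuous_snd.snd)

lemma measurable_tau2 : Measurable fun p : Hn n × Hn n => tau p.1 p.2 :=
  continuous_tau2.measurable

lemma measurable_tau_left (g : Hn n) : Measurable fun h : Hn n => tau g h :=
  measurable_tau2.comp (measurable_const.prodMk measurable_id)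

lemma measurable_tau_right (k : Hn n) : Measurable fun h : Hn n => tau h k :=
  measurable_tau2.comp (measurable_id.prodMk measurable_const)

lemma mp_fiberwise {α β : Type*} [MeasurableSpace α] [MeasurableSpace β]
    {μ : Measure α} {ν : Measure β} [SFinite μ] [SFinite ν]
    {f : α × β → α} (hf : Measurable f)
    (hsl : ∀ y : β, MeasurePreserving (fun x => f (x, y)) μ μ) :
    MeasurePreserving (fun p : α × β => (f p, p.2)) (μ.prod ν) (μ.prod ν) := by
  have hm : Measurable fun p : α × β => (f p, p.2) := hf.prodMk measurable_snd
  refine ⟨hm, ?_⟩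
  ext s hs'
  rw [Measure.map_apply hm hs', Measure.prod_apply_symm (hm hs'), Measure.prod_apply_symm hs']
  refine lintegral_congr fun y => ?_
  have h1 : ((fun x => (x, y)) ⁻¹' ((fun p : α × β => (f p, p.2)) ⁻¹' s))
      = (fun x => f (x, y)) ⁻¹' ((fun x => (x, y)) ⁻¹' s) := rfl
  rw [h1]
  exact (hsl y).measure_preimage ((measurable_prodMk_right hs').nullMeasurableSet)

lemma mp_sub_left_V (v : Vn n) : MeasurePreserving (fun w : Vn n => v - w) volume volume :=
  (Measure.measurePreserving_sub_left volume v.1).prod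
    (Measure.measurePreserving_sub_left volume v.2)

lemma mp_sub_right_V (k : Vn n) : MeasurePreserving (fun w : Vn n => w - k) volume volume := by
  have h := (measurePreserving_add_right (volume : Measure (Fin n → ℝ)) (-k.1)).prod
    (measurePreserving_add_right (volume : Measure (Fin n → ℝ)) (-k.2))
  have he : (fun w : Vn n => w - k) = Prod.map (· + -k.1) (· + -k.2) := by
    funext w
    show (w.1 - k.1, w.2 - k.2) = (w.1 + -k.1, w.2 + -k.2)
    rw [sub_eq_add_neg, sub_eq_add_neg]
  rw [he]
  exact h

lemma mp_tau_left (g : Hn n) : MeasurePreserving (fun h : Hn n => tau g h) volume volume := by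
  have h1 : MeasurePreserving (fun p : ℝ × Vn n => (g.1 - p.1 + cc g.2 p.2, p.2))
      ((volume : Measure ℝ).prod volume) ((volume : Measure ℝ).prod volume) := by
    refine mp_fiberwise ?_ ?_
    · exact (measurable_const.sub measurable_fst).add
        (continuous_cc2.measurable.comp (measurable_const.prodMk measurable_snd))
    · intro v
      have he : (fun s : ℝ => g.1 - s + cc g.2 v) = fun s => (g.1 + cc g.2 v) - s := by
        funext s; ring
      rw [he]
      exact Measure.measurePreserving_sub_left volume _
  have h2 : MeasurePreserving (fun p : ℝ × Vn n => (p.1, g.2 - p.2))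
      ((volume : Measure ℝ).prod volume) ((volume : Measure ℝ).prod volume) :=
    (MeasurePreserving.id volume).prod (mp_sub_left_V g.2)
  exact h2.comp h1

lemma mp_tau_right (k : Hn n) : MeasurePreserving (fun h : Hn n => tau h k) volume volume := by
  have h1 : MeasurePreserving (fun p : ℝ × Vn n => (p.1 - k.1 + cc p.2 k.2, p.2))
      ((volume : Measure ℝ).prod volume) ((volume : Measure ℝ).prod volume) := by
    refine mp_fiberwise ?_ ?_
    · exact (measurable_fst.sub measurable_const).add
        (continuous_cc2.measurable.comp (measurable_snd.prodMk measurable_const))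
    · intro v
      have he : (fun s : ℝ => s - k.1 + cc v k.2) = fun s => s + (cc v k.2 - k.1) := by
        funext s; ring
      rw [he]
      exact measurePreserving_add_right volume _
  have h2 : MeasurePreserving (fun p : ℝ × Vn n => (p.1, p.2 - k.2))
      ((volume : Measure ℝ).prod volume) ((volume : Measure ℝ).prod volume) :=
    (MeasurePreserving.id volume).prod (mp_sub_right_V k.2)
  exact h2.comp h1

lemma mp_shift (u : ℝ) : MeasurePreserving (fun h : Hn n => (h.1 + u, h.2)) volume volume :=
  (measurePreserving_add_right volume u).prod (MeasurePreserving.id volume)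


section helpers

variable {α β : Type*} [MeasurableSpace α] [MeasurableSpace β] {μ : Measure α} {ν : Measure β}

lemma mp_integral_comp {T : α → β} (hT : MeasurePreserving T μ ν) {φ : β → ℂ}
    (hφ : AEStronglyMeasurable φ ν) : ∫ x, φ (T x) ∂μ = ∫ y, φ y ∂ν := by
  rw [← hT.map_eq] at hφ ⊢
  exact (integral_map hT.measurable.aemeasurable hφ).symm

lemma mp_integrable_comp {T : α → β} (hT : MeasurePreserving T μ ν) {φ : β → ℂ}
    (hφ : AEStronglyMeasurable φ ν) (h : Integrable φ ν) : Integrable (fun x => φ (T x)) μ := by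
  rw [← hT.map_eq] at hφ h
  exact (integrable_map_measure hφ hT.measurable.aemeasurable).mp h

lemma mp_integrable_comp_real {T : α → β} (hT : MeasurePreserving T μ ν) {φ : β → ℝ}
    (hφ : AEStronglyMeasurable φ ν) (h : Integrable φ ν) : Integrable (fun x => φ (T x)) μ := by
  rw [← hT.map_eq] at hφ h
  exact (integrable_map_measure hφ hT.measurable.aemeasurable).mp h

lemma mp_ae_comp {T : α → β} {P : β → Prop} (hT : MeasurePreserving T μ ν)
    (h : ∀ᵐ y ∂ν, P y) : ∀ᵐ x ∂μ, P (T x) := by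
  rw [← hT.map_eq] at h
  exact ae_of_ae_map hT.measurable.aemeasurable h

end helpers

lemma ae_of_ae_snd {P : Vn n → Prop} (h : ∀ᵐ v : Vn n, P v) : ∀ᵐ g : Hn n, P g.2 := by
  rw [ae_iff] at h ⊢
  obtain ⟨B, hsub, hmeas, hB⟩ := exists_measurable_superset_of_null h
  have hss : {g : Hn n | ¬ P g.2} ⊆ (Set.univ : Set ℝ) ×ˢ B := fun g hg => ⟨trivial, hsub hg⟩
  refine measure_mono_null hss ?_
  rw [show (volume : Measure (Hn n)) = (volume : Measure ℝ).prod volume from rfl,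
    Measure.prod_prod, hB, mul_zero]

lemma ae_slice {P : Hn n → Prop} (h : ∀ᵐ g : Hn n, P g) :
    ∀ᵐ v : Vn n, ∀ᵐ t : ℝ, P (t, v) := by
  have hswap : ∀ᵐ q : Vn n × ℝ ∂((volume : Measure (Vn n)).prod volume), P (q.2, q.1) :=
    mp_ae_comp Measure.measurePreserving_swap h
  exact Measure.ae_ae_of_ae_prod hswap

lemma sm_hconv {a b : Hn n → ℂ} (sa : StronglyMeasurable a) (sb : StronglyMeasurable b) :
    StronglyMeasurable (hconv a b) := by
  have h : StronglyMeasurable fun p : Hn n × Hn n => a p.2 * b (tau p.1 p.2) :=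
    (sa.comp_measurable measurable_snd).mul (sb.comp_measurable measurable_tau2)
  exact h.integral_prod_right'

lemma sm_AopH {k : Hn n → ℂ} (sk : StronglyMeasurable k) : StronglyMeasurable (AopH k) := by
  have h : StronglyMeasurable fun p : Hn n × ℝ =>
      ({q : Hn n × ℝ | q.2 ≤ q.1.1}.indicator (fun q => k (q.2, q.1.2)) p) := by
    refine StronglyMeasurable.indicator ?_ ?_
    · exact sk.comp_measurable (measurable_snd.prodMk measurable_fst.snd)
    · exact measurableSet_le measurable_snd measurable_fst.fst
  have h2 := h.integral_prod_right' (ν := volume)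
  have he : AopH k = fun g : Hn n =>
      ∫ t : ℝ, {q : Hn n × ℝ | q.2 ≤ q.1.1}.indicator (fun q => k (q.2, q.1.2)) (g, t) := by
    funext g
    rw [AopH_eq, ← integral_indicator measurableSet_Iic]
    refine integral_congr_ae (Filter.Eventually.of_forall fun t => ?_)
    by_cases ht : t ≤ g.1
    · simp [Set.indicator_apply, Set.mem_Iic, Set.mem_setOf_eq, ht]
    · simp [Set.indicator_apply, Set.mem_Iic, Set.mem_setOf_eq, ht]
  rw [he]
  exact h2

lemma hconv_congr {a a' b b' : Hn n → ℂ} (ha : a =ᵐ[volume] a') (hb : b =ᵐ[volume] b') :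
    hconv a b = hconv a' b' := by
  funext g
  rw [hconv_eq, hconv_eq]
  refine integral_congr_ae ?_
  filter_upwards [ha, mp_ae_comp (mp_tau_left g) hb] with h h1 h2
  rw [h1, h2]

lemma key_prod_int {a b : Hn n → ℂ} (sa : StronglyMeasurable a) (sb : StronglyMeasurable b)
    (ha : Integrable a) (hb : Integrable b) :
    Integrable (fun p : Hn n × Hn n => a p.2 * b (tau p.1 p.2))
      ((volume : Measure (Hn n)).prod volume) := by
  have hΦ : MeasurePreserving (fun p : Hn n × Hn n => (tau p.1 p.2, p.2))
      ((volume : Measure (Hn n)).prod volume) ((volume : Measure (Hn n)).prod volume) :=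
    mp_fiberwise measurable_tau2 fun k => mp_tau_right k
  have hint : Integrable (fun q : Hn n × Hn n => b q.1 * a q.2)
      ((volume : Measure (Hn n)).prod volume) := hb.mul_prod ha
  have hsm : AEStronglyMeasurable (fun q : Hn n × Hn n => b q.1 * a q.2)
      ((volume : Measure (Hn n)).prod volume) :=
    ((sb.comp_measurable measurable_fst).mul (sa.comp_measurable measurable_snd)).aestronglyMeasurable
  have h := mp_integrable_comp hΦ hsm hint
  exact h.congr (Filter.Eventually.of_forall fun p => mul_comm _ _)

lemma ae_conv_int {a b : Hn n → ℂ} (sa : StronglyMeasurable a) (sb : StronglyMeasurable b)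
    (ha : Integrable a) (hb : Integrable b) :
    ∀ᵐ g : Hn n, Integrable (fun h => a h * b (tau g h)) volume :=
  (key_prod_int sa sb ha hb).prod_right_ae

lemma integrable_hconv {a b : Hn n → ℂ} (sa : StronglyMeasurable a) (sb : StronglyMeasurable b)
    (ha : Integrable a) (hb : Integrable b) : Integrable (hconv a b) volume :=
  (key_prod_int sa sb ha hb).integral_prod_left


lemma hconv_assoc {a b c : Hn n → ℂ} (sa : StronglyMeasurable a) (sb : StronglyMeasurable b)
    (sc : StronglyMeasurable c) (ha : Integrable a) (hb : Integrable b) (hc : Integrable c) :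
    hconv (hconv a b) c =ᵐ[volume] hconv a (hconv b c) := by
  have hΘb : MeasurePreserving (fun w : Hn n × (Hn n × Hn n) => (tau w.1 w.2.1, w.2))
      ((volume : Measure (Hn n)).prod ((volume : Measure (Hn n)).prod volume))
      ((volume : Measure (Hn n)).prod ((volume : Measure (Hn n)).prod volume)) :=
    mp_fiberwise (measurable_tau2.comp (measurable_fst.prodMk measurable_snd.fst))
      (fun y => mp_tau_right y.1)
  have hΘa : MeasurePreserving
      (fun w : Hn n × (Hn n × Hn n) => (w.1, (tau w.2.1 w.2.2, w.2.2)))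
      ((volume : Measure (Hn n)).prod ((volume : Measure (Hn n)).prod volume))
      ((volume : Measure (Hn n)).prod ((volume : Measure (Hn n)).prod volume)) :=
    (MeasurePreserving.id volume).prod (mp_fiberwise measurable_tau2 fun k => mp_tau_right k)
  have hΘ := hΘa.comp hΘb
  have hψint : Integrable (fun w : Hn n × (Hn n × Hn n) => c w.1 * (b w.2.1 * a w.2.2))
      ((volume : Measure (Hn n)).prod ((volume : Measure (Hn n)).prod volume)) :=
    hc.mul_prod (hb.mul_prod ha)
  have hψsm : AEStronglyMeasurable (fun w : Hn n × (Hn n × Hn n) => c w.1 * (b w.2.1 * a w.2.2))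
      ((volume : Measure (Hn n)).prod ((volume : Measure (Hn n)).prod volume)) :=
    ((sc.comp_measurable measurable_fst).mul
      ((sb.comp_measurable measurable_snd.fst).mul
        (sa.comp_measurable measurable_snd.snd))).aestronglyMeasurable
  have hJ : Integrable
      (fun w : Hn n × (Hn n × Hn n) => a w.2.2 * b (tau w.2.1 w.2.2) * c (tau w.1 w.2.1))
      ((volume : Measure (Hn n)).prod ((volume : Measure (Hn n)).prod volume)) := by
    have h := mp_integrable_comp hΘ hψsm hψint
    refine h.congr (Filter.Eventually.of_forall fun w => ?_)
    show c (tau w.1 w.2.1) * (b (tau w.2.1 w.2.2) * a w.2.2)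
        = a w.2.2 * b (tau w.2.1 w.2.2) * c (tau w.1 w.2.1)
    ring
  filter_upwards [hJ.prod_right_ae] with g hg
  have lhs1 : hconv (hconv a b) c g
      = ∫ h : Hn n, ∫ k : Hn n, a k * b (tau h k) * c (tau g h) := by
    rw [hconv_eq]
    refine integral_congr_ae (Filter.Eventually.of_forall fun h => ?_)
    show hconv a b h * c (tau g h) = ∫ k : Hn n, a k * b (tau h k) * c (tau g h)
    rw [hconv_eq, ← integral_mul_const]
  have swap1 : (∫ h : Hn n, ∫ k : Hn n, a k * b (tau h k) * c (tau g h))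
      = ∫ k : Hn n, ∫ h : Hn n, a k * b (tau h k) * c (tau g h) :=
    integral_integral_swap hg
  have rhs1 : hconv a (hconv b c) g
      = ∫ k : Hn n, ∫ h : Hn n, a k * b (tau h k) * c (tau g h) := by
    rw [hconv_eq]
    refine integral_congr_ae (Filter.Eventually.of_forall fun k => ?_)
    have hsub : hconv b c (tau g k) = ∫ h : Hn n, b (tau h k) * c (tau g h) := by
      rw [hconv_eq]
      have hsm2 : AEStronglyMeasurable (fun h : Hn n => b h * c (tau (tau g k) h)) volume :=
        (sb.mul (sc.comp_measurable (measurable_tau_left _))).aestronglyMeasurable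
      rw [← mp_integral_comp (mp_tau_right k) hsm2]
      refine integral_congr_ae (Filter.Eventually.of_forall fun h => ?_)
      show b (tau h k) * c (tau (tau g k) (tau h k)) = b (tau h k) * c (tau g h)
      rw [tau_tau]
    show a k * hconv b c (tau g k) = ∫ h : Hn n, a k * b (tau h k) * c (tau g h)
    rw [hsub, ← integral_const_mul]
    refine integral_congr_ae (Filter.Eventually.of_forall fun h => ?_)
    show a k * (b (tau h k) * c (tau g h)) = a k * b (tau h k) * c (tau g h)
    ring
  rw [lhs1, swap1, rhs1]

lemma hconv_sub_right {a f f' : Hn n → ℂ} (sa : StronglyMeasurable a)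
    (sf : StronglyMeasurable f) (sf' : StronglyMeasurable f') (ha : Integrable a)
    (hf : Integrable f) (hf' : Integrable f') :
    hconv a (fun x => f x - f' x) =ᵐ[volume] fun g => hconv a f g - hconv a f' g := by
  filter_upwards [ae_conv_int sa sf ha hf, ae_conv_int sa sf' ha hf'] with g h1 h2
  have : hconv a (fun x => f x - f' x) g
      = ∫ h : Hn n, (a h * f (tau g h) - a h * f' (tau g h)) := by
    rw [hconv_eq]
    refine integral_congr_ae (Filter.Eventually.of_forall fun h => ?_)
    show a h * (f (tau g h) - f' (tau g h)) = a h * f (tau g h) - a h * f' (tau g h)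
    ring
  rw [this, integral_sub h1 h2, hconv_eq a f, hconv_eq a f']

lemma hconv_sub_left {f f' b : Hn n → ℂ} (sf : StronglyMeasurable f)
    (sf' : StronglyMeasurable f') (sb : StronglyMeasurable b) (hf : Integrable f)
    (hf' : Integrable f') (hb : Integrable b) :
    hconv (fun x => f x - f' x) b =ᵐ[volume] fun g => hconv f b g - hconv f' b g := by
  filter_upwards [ae_conv_int sf sb hf hb, ae_conv_int sf' sb hf' hb] with g h1 h2
  have : hconv (fun x => f x - f' x) b g
      = ∫ h : Hn n, (f h * b (tau g h) - f' h * b (tau g h)) := by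
    rw [hconv_eq]
    refine integral_congr_ae (Filter.Eventually.of_forall fun h => ?_)
    show (f h - f' h) * b (tau g h) = f h * b (tau g h) - f' h * b (tau g h)
    ring
  rw [this, integral_sub h1 h2, hconv_eq f b, hconv_eq f' b]

lemma AopH_congr {f f' : Hn n → ℂ} (h : f =ᵐ[volume] f') : AopH f =ᵐ[volume] AopH f' := by
  have h2 : ∀ᵐ v : Vn n, ∀ s : ℝ, AopH f (s, v) = AopH f' (s, v) := by
    filter_upwards [ae_slice h] with v hv
    intro s
    rw [AopH_eq, AopH_eq]
    exact integral_congr_ae (ae_restrict_of_ae hv)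
  filter_upwards [ae_of_ae_snd h2] with g hg
  exact hg g.1

lemma AopH_add {u v : Hn n → ℂ} (hu : Integrable u) (hv : Integrable v) :
    AopH (fun g => u g + v g) =ᵐ[volume] fun g => AopH u g + AopH v g := by
  have hu' : ∀ᵐ w : Vn n, Integrable (fun t => u (t, w)) volume := Integrable.prod_left_ae hu
  have hv' : ∀ᵐ w : Vn n, Integrable (fun t => v (t, w)) volume := Integrable.prod_left_ae hv
  have key : ∀ᵐ w : Vn n, ∀ s : ℝ,
      AopH (fun g => u g + v g) (s, w) = AopH u (s, w) + AopH v (s, w) := by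
    filter_upwards [hu', hv'] with w h1 h2
    intro s
    rw [AopH_eq, AopH_eq, AopH_eq]
    exact integral_add h1.integrableOn h2.integrableOn
  filter_upwards [ae_of_ae_snd key] with g hg
  exact hg g.1


def N (b : Hn n → ℂ) : Vn n → ℝ := fun v => ∫ t : ℝ, ‖b (t, v)‖

def nn (b : Hn n → ℂ) : Vn n → ℝ≥0∞ := fun v => ∫⁻ t : ℝ, (‖b (t, v)‖₊ : ℝ≥0∞)

lemma sm_N {b : Hn n → ℂ} (sb : StronglyMeasurable b) : StronglyMeasurable (N b) := by
  unfold N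
  exact StronglyMeasurable.integral_prod_left' (μ := volume) sb.norm

lemma integrable_N {b : Hn n → ℂ} (hb : Integrable b) : Integrable (N b) volume :=
  Integrable.integral_norm_prod_right hb

lemma meas_nn {b : Hn n → ℂ} (sb : StronglyMeasurable b) : Measurable (nn b) := by
  unfold nn
  exact Measurable.lintegral_prod_left (f := fun t (v : Vn n) => (‖b (t, v)‖₊ : ℝ≥0∞))
    sb.measurable.nnnorm.coe_nnreal_ennreal

lemma nn_fin {b : Hn n → ℂ} (sb : StronglyMeasurable b) (hb : Integrable b) :
    ∫⁻ v : Vn n, nn b v ≠ ⊤ := by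
  have h : ∫⁻ v : Vn n, nn b v = ∫⁻ g : Hn n, (‖b g‖₊ : ℝ≥0∞) :=
    (lintegral_prod_symm _ sb.measurable.nnnorm.coe_nnreal_ennreal.aemeasurable).symm
  rw [h]
  exact hb.2.ne

lemma enorm_N_le {b : Hn n → ℂ} (w : Vn n) : (‖N b w‖₊ : ℝ≥0∞) ≤ nn b w := by
  have h := enorm_integral_le_lintegral_enorm (μ := (volume : Measure ℝ))
    (fun t : ℝ => ‖b (t, w)‖)
  unfold N nn
  simpa only [enorm_norm, enorm_eq_nnnorm, nnnorm_norm] using h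

lemma K1 {a b : Hn n → ℂ} (sa : StronglyMeasurable a) (sb : StronglyMeasurable b)
    (ha : Integrable a) (hb : Integrable b) :
    ∀ᵐ v : Vn n, Integrable (fun h : Hn n => ‖a h‖ * N b (v - h.2)) volume := by
  have hΨ₀ : MeasurePreserving (fun q : Vn n × Hn n => (q.1 - q.2.2, q.2))
      ((volume : Measure (Vn n)).prod volume) ((volume : Measure (Vn n)).prod volume) :=
    mp_fiberwise (measurable_fst.sub measurable_snd.snd) (fun h => mp_sub_right_V h.2)
  have hΨ : MeasurePreserving (fun q : Vn n × Hn n => (q.2, q.1 - q.2.2))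
      ((volume : Measure (Vn n)).prod volume) ((volume : Measure (Hn n)).prod volume) :=
    Measure.measurePreserving_swap.comp hΨ₀
  have hξ : Integrable (fun r : Hn n × Vn n => ‖a r.1‖ * N b r.2)
      ((volume : Measure (Hn n)).prod volume) := ha.norm.mul_prod (integrable_N hb)
  have hξsm : AEStronglyMeasurable (fun r : Hn n × Vn n => ‖a r.1‖ * N b r.2)
      ((volume : Measure (Hn n)).prod volume) :=
    ((sa.norm.comp_measurable measurable_fst).mul
      ((sm_N sb).comp_measurable measurable_snd)).aestronglyMeasurable
  have hbig := mp_integrable_comp_real hΨ hξsm hξ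
  exact hbig.prod_right_ae

lemma K2fin {a b : Hn n → ℂ} (sa : StronglyMeasurable a) (sb : StronglyMeasurable b)
    (ha : Integrable a) (hb : Integrable b) :
    ∀ᵐ v : Vn n, (∫⁻ w : Vn n, nn a w * nn b (v - w)) < ⊤ := by
  have m1 : Measurable fun q : Vn n × Vn n => nn a q.2 * nn b (q.1 - q.2) :=
    ((meas_nn sa).comp measurable_snd).mul
      ((meas_nn sb).comp (measurable_fst.sub measurable_snd))
  refine ae_lt_top (Measurable.lintegral_prod_right (f := fun v w => nn a w * nn b (v - w)) m1) ?_
  have hswap : ∫⁻ v : Vn n, ∫⁻ w : Vn n, nn a w * nn b (v - w)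
      = ∫⁻ w : Vn n, ∫⁻ v : Vn n, nn a w * nn b (v - w) :=
    lintegral_lintegral_swap m1.aemeasurable
  rw [hswap]
  have hin : ∀ w : Vn n, ∫⁻ v : Vn n, nn a w * nn b (v - w) = nn a w * ∫⁻ v : Vn n, nn b v := by
    intro w
    rw [lintegral_const_mul _ (show Measurable fun v : Vn n => nn b (v - w) from
      (meas_nn sb).comp (measurable_id.sub measurable_const))]
    congr 1
    exact (mp_sub_right_V w).lintegral_comp (meas_nn sb)
  rw [lintegral_congr hin, lintegral_mul_const _ (meas_nn sa)]
  exact ENNReal.mul_ne_top (nn_fin sa ha) (nn_fin sb hb)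

lemma K2 {a b : Hn n → ℂ} (sa : StronglyMeasurable a) (sb : StronglyMeasurable b)
    (ha : Integrable a) (hb : Integrable b) :
    ∀ᵐ v : Vn n, ∀ s : ℝ,
      Integrable (fun h : Hn n => N a h.2 * ‖b (tau (s, v) h)‖) volume := by
  filter_upwards [K2fin sa sb ha hb] with v hv
  intro s
  constructor
  · exact (((sm_N sa).comp_measurable measurable_snd).mul
      ((sb.norm).comp_measurable (measurable_tau_left (s, v)))).aestronglyMeasurable
  · show (∫⁻ h : Hn n, (‖N a h.2 * ‖b (tau (s, v) h)‖‖₊ : ℝ≥0∞)) < ⊤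
    calc ∫⁻ h : Hn n, (‖N a h.2 * ‖b (tau (s, v) h)‖‖₊ : ℝ≥0∞)
        ≤ ∫⁻ h : Hn n, nn a h.2 * (‖b (tau (s, v) h)‖₊ : ℝ≥0∞) := by
          refine lintegral_mono fun h => ?_
          rw [nnnorm_mul, ENNReal.coe_mul, nnnorm_norm]
          exact mul_le_mul_left (enorm_N_le _) _
      _ = ∫⁻ w : Vn n, ∫⁻ t : ℝ, nn a w * (‖b (tau (s, v) (t, w))‖₊ : ℝ≥0∞) := by
          exact lintegral_prod_symm _
            (((meas_nn sa).comp measurable_snd).mul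
              ((sb.measurable.nnnorm.coe_nnreal_ennreal).comp (measurable_tau_left (s, v)))).aemeasurable
      _ = ∫⁻ w : Vn n, nn a w * nn b (v - w) := by
          refine lintegral_congr fun w => ?_
          rw [lintegral_const_mul _ (show Measurable fun t : ℝ =>
              (‖b (tau (s, v) (t, w))‖₊ : ℝ≥0∞) from
            (sb.measurable.nnnorm.coe_nnreal_ennreal).comp
              ((measurable_tau_left (s, v)).comp measurable_prodMk_right))]
          congr 1
          have hmp : MeasurePreserving (fun t : ℝ => (s + cc v w) - t) volume volume :=
            Measure.measurePreserving_sub_left volume _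
          have h1 : ∫⁻ t : ℝ, (‖b (tau (s, v) (t, w))‖₊ : ℝ≥0∞)
              = ∫⁻ t : ℝ, (‖b ((s + cc v w) - t, v - w)‖₊ : ℝ≥0∞) := by
            refine lintegral_congr fun t => ?_
            have : tau (s, v) (t, w) = ((s + cc v w) - t, v - w) := by
              unfold tau
              refine Prod.ext ?_ rfl
              show s - t + cc v w = s + cc v w - t
              ring
            rw [this]
          rw [h1]
          exact hmp.lintegral_comp (sb.measurable.nnnorm.coe_nnreal_ennreal.comp (measurable_prodMk_right))
      _ < ⊤ := hv


lemma LA1 {a b : Hn n → ℂ} (sa : StronglyMeasurable a) (sb : StronglyMeasurable b)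
    (ha : Integrable a) (hb : Integrable b) :
    AopH (hconv a b) =ᵐ[volume] hconv a (AopH b) := by
  have hb' : ∀ᵐ w : Vn n, Integrable (fun t => b (t, w)) volume := Integrable.prod_left_ae hb
  have key : ∀ᵐ v : Vn n, ∀ s : ℝ, AopH (hconv a b) (s, v) = hconv a (AopH b) (s, v) := by
    filter_upwards [K1 sa sb ha hb] with v hv
    have hslice : ∀ᵐ h : Hn n, Integrable (fun t => b (t, v - h.2)) volume :=
      ae_of_ae_snd (mp_ae_comp (mp_sub_left_V v) hb')
    intro s
    set S : Set (ℝ × Hn n) := {q : ℝ × Hn n | q.1 ≤ s} with hS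
    have hSmeas : MeasurableSet S := measurableSet_le measurable_fst measurable_const
    set F : ℝ × Hn n → ℂ :=
      fun q => a q.2 * b (q.1 - q.2.1 + cc v q.2.2, v - q.2.2) with hF
    have hFsm : StronglyMeasurable F := by
      refine (sa.comp_measurable measurable_snd).mul (sb.comp_measurable ?_)
      exact ((measurable_fst.sub measurable_snd.fst).add
        (continuous_cc2.measurable.comp (measurable_const.prodMk measurable_snd.snd))).prodMk
        (measurable_const.sub measurable_snd.snd)
    set G : ℝ × Hn n → ℂ := fun q => S.indicator F q with hG
    have hGsm : StronglyMeasurable G := hFsm.indicator hSmeas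
    have htr : ∀ h : Hn n, Integrable (fun t => b (t, v - h.2)) volume →
        Integrable (fun t : ℝ => b (t - h.1 + cc v h.2, v - h.2)) volume := by
      intro h hh
      have heq : (fun t : ℝ => b (t - h.1 + cc v h.2, v - h.2))
          = fun t => b (t + (cc v h.2 - h.1), v - h.2) := by
        funext t
        rw [show (t - h.1 + cc v h.2 : ℝ) = t + (cc v h.2 - h.1) from by ring]
      rw [heq]
      exact mp_integrable_comp (measurePreserving_add_right volume _)
        hh.aestronglyMeasurable hh
    have hGint : Integrable G ((volume : Measure ℝ).prod volume) := by
      refine (integrable_prod_iff' hGsm.aestronglyMeasurable).mpr ⟨?_, ?_⟩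
      · filter_upwards [hslice] with h hh
        have h2 : Integrable (fun t : ℝ => a h * b (t - h.1 + cc v h.2, v - h.2)) volume :=
          (htr h hh).const_mul _
        refine (h2.indicator (measurableSet_Iic (a := s))).congr
          (Filter.Eventually.of_forall fun t => ?_)
        by_cases ht : t ≤ s
        · rw [Set.indicator_of_mem (show t ∈ Iic s from ht)]
          show _ = G (t, h)
          simp only [hG]
          rw [Set.indicator_of_mem (show ((t, h) : ℝ × Hn n) ∈ S from ht)]
        · rw [Set.indicator_of_notMem (show t ∉ Iic s from ht)]
          show _ = G (t, h)
          simp only [hG]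
          rw [Set.indicator_of_notMem (show ((t, h) : ℝ × Hn n) ∉ S from ht)]
      · refine Integrable.mono' hv (hGsm.norm.integral_prod_left' (μ := volume)).aestronglyMeasurable ?_
        filter_upwards [hslice] with h hh
        have hnn : 0 ≤ ∫ t, ‖G (t, h)‖ := integral_nonneg fun t => norm_nonneg _
        rw [Real.norm_of_nonneg hnn]
        have e1 : (fun t => ‖G (t, h)‖)
            = (Iic s).indicator (fun t => ‖a h‖ * ‖b (t - h.1 + cc v h.2, v - h.2)‖) := by
          funext t
          by_cases ht : t ≤ s
          · rw [Set.indicator_of_mem (show t ∈ Iic s from ht)]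
            simp only [hG]
            rw [Set.indicator_of_mem (show ((t, h) : ℝ × Hn n) ∈ S from ht)]
            exact norm_mul _ _
          · rw [Set.indicator_of_notMem (show t ∉ Iic s from ht)]
            simp only [hG]
            rw [Set.indicator_of_notMem (show ((t, h) : ℝ × Hn n) ∉ S from ht)]
            exact norm_zero
        rw [e1, integral_indicator measurableSet_Iic, integral_const_mul]
        have hle : ∫ t in Iic s, ‖b (t - h.1 + cc v h.2, v - h.2)‖
            ≤ ∫ t, ‖b (t - h.1 + cc v h.2, v - h.2)‖ :=
          setIntegral_le_integral (htr h hh).norm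
            (Filter.Eventually.of_forall fun t => norm_nonneg _)
        have heq2 : ∫ t : ℝ, ‖b (t - h.1 + cc v h.2, v - h.2)‖ = N b (v - h.2) := by
          have h3 := integral_add_right_eq_self (μ := (volume : Measure ℝ))
            (fun u : ℝ => ‖b (u, v - h.2)‖) (cc v h.2 - h.1)
          rw [show N b (v - h.2) = ∫ u : ℝ, ‖b (u, v - h.2)‖ from rfl, ← h3]
          refine integral_congr_ae (Filter.Eventually.of_forall fun t => ?_)
          show ‖b (t - h.1 + cc v h.2, v - h.2)‖ = ‖b (t + (cc v h.2 - h.1), v - h.2)‖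
          rw [show (t + (cc v h.2 - h.1) : ℝ) = t - h.1 + cc v h.2 from by ring]
        refine mul_le_mul_of_nonneg_left ?_ (norm_nonneg _)
        rw [← heq2]
        exact hle
    have hswap := integral_integral_swap (f := fun t (h : Hn n) => G (t, h)) hGint
    have lhs : AopH (hconv a b) (s, v) = ∫ t : ℝ, ∫ h : Hn n, G (t, h) := by
      rw [AopH_eq, ← integral_indicator measurableSet_Iic]
      refine integral_congr_ae (Filter.Eventually.of_forall fun t => ?_)
      by_cases ht : t ≤ s
      · rw [Set.indicator_of_mem (show t ∈ Iic s from ht)]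
        rw [hconv_eq]
        refine integral_congr_ae (Filter.Eventually.of_forall fun h => ?_)
        show a h * b (tau (t, v) h) = G (t, h)
        simp only [hG]
        rw [Set.indicator_of_mem (show ((t, h) : ℝ × Hn n) ∈ S from ht)]
        rfl
      · rw [Set.indicator_of_notMem (show t ∉ Iic s from ht)]
        show (0 : ℂ) = ∫ h : Hn n, G (t, h)
        have hz : (fun h : Hn n => G (t, h)) = fun _ => (0 : ℂ) := by
          funext h
          simp only [hG]
          rw [Set.indicator_of_notMem (show ((t, h) : ℝ × Hn n) ∉ S from ht)]
        rw [hz, integral_zero]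
    have rhs : hconv a (AopH b) (s, v) = ∫ h : Hn n, ∫ t : ℝ, G (t, h) := by
      rw [hconv_eq]
      refine integral_congr_ae (Filter.Eventually.of_forall fun h => ?_)
      show a h * AopH b (tau (s, v) h) = ∫ t : ℝ, G (t, h)
      have e1 : (fun t => G (t, h)) = fun t =>
          a h * ((Iic (s + (cc v h.2 - h.1))).indicator
            (fun u => b (u, v - h.2)) (t + (cc v h.2 - h.1))) := by
        funext t
        by_cases ht : t ≤ s
        · have hm : t + (cc v h.2 - h.1) ∈ Iic (s + (cc v h.2 - h.1)) := by
            simpa using ht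
          simp only [hG]
          rw [Set.indicator_of_mem (show ((t, h) : ℝ × Hn n) ∈ S from ht),
            Set.indicator_of_mem hm]
          show a h * b (t - h.1 + cc v h.2, v - h.2) = _
          rw [show (t - h.1 + cc v h.2 : ℝ) = t + (cc v h.2 - h.1) from by ring]
        · have hm : t + (cc v h.2 - h.1) ∉ Iic (s + (cc v h.2 - h.1)) := by
            simpa using ht
          simp only [hG]
          rw [Set.indicator_of_notMem (show ((t, h) : ℝ × Hn n) ∉ S from ht),
            Set.indicator_of_notMem hm, mul_zero]
      rw [e1, integral_const_mul,
        integral_add_right_eq_self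
          (fun u => (Iic (s + (cc v h.2 - h.1))).indicator (fun u => b (u, v - h.2)) u)
          (cc v h.2 - h.1),
        integral_indicator measurableSet_Iic]
      congr 1
      rw [show tau (s, v) h = (s + (cc v h.2 - h.1), v - h.2) from
        Prod.ext (show (s - h.1 + cc v h.2 : ℝ) = s + (cc v h.2 - h.1) from by ring) rfl]
      rw [AopH_eq]
    rw [lhs, hswap, rhs]
  filter_upwards [ae_of_ae_snd key] with g hg
  exact hg g.1


lemma AopH_reflect (k : Hn n → ℂ) (h : Hn n) :
    AopH k h = ∫ t : ℝ, (Ici (0:ℝ)).indicator (fun u => k (h.1 - u, h.2)) t := by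
  rw [AopH_eq, ← integral_indicator measurableSet_Iic]
  have h3 := integral_sub_left_eq_self
    (fun u => (Iic h.1).indicator (fun t => k (t, h.2)) u) (volume : Measure ℝ) h.1
  rw [← h3]
  refine integral_congr_ae (Filter.Eventually.of_forall fun t => ?_)
  show (Iic h.1).indicator (fun u => k (u, h.2)) (h.1 - t)
      = (Ici 0).indicator (fun u => k (h.1 - u, h.2)) t
  by_cases ht : (0:ℝ) ≤ t
  · rw [Set.indicator_of_mem (show h.1 - t ∈ Iic h.1 from by simpa using ht),
      Set.indicator_of_mem (show t ∈ Ici (0:ℝ) from ht)]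
  · rw [Set.indicator_of_notMem (show h.1 - t ∉ Iic h.1 from by simpa using ht),
      Set.indicator_of_notMem (show t ∉ Ici (0:ℝ) from ht)]

lemma LA2 {a b : Hn n → ℂ} (sa : StronglyMeasurable a) (sb : StronglyMeasurable b)
    (ha : Integrable a) (hb : Integrable b) :
    hconv (AopH a) b =ᵐ[volume] hconv a (AopH b) := by
  have ha' : ∀ᵐ w : Vn n, Integrable (fun t => a (t, w)) volume := Integrable.prod_left_ae ha
  have hb' : ∀ᵐ w : Vn n, Integrable (fun t => b (t, w)) volume := Integrable.prod_left_ae hb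
  have key : ∀ᵐ v : Vn n, ∀ s : ℝ,
      hconv (AopH a) b (s, v) = hconv a (AopH b) (s, v) := by
    filter_upwards [K1 sa sb ha hb, K2 sa sb ha hb] with v hv1 hv2
    intro s
    have hv2s := hv2 s
    have hsliceA : ∀ᵐ h : Hn n, Integrable (fun t => a (t, h.2)) volume := ae_of_ae_snd ha'
    have hsliceB : ∀ᵐ h : Hn n, Integrable (fun t => b (t, v - h.2)) volume :=
      ae_of_ae_snd (mp_ae_comp (mp_sub_left_V v) hb')
    set T : Set (Hn n × ℝ) := {q : Hn n × ℝ | 0 ≤ q.2} with hT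
    have hTmeas : MeasurableSet T := measurableSet_le measurable_const measurable_snd
    set W₁ : Hn n × ℝ → ℂ :=
      fun q => T.indicator (fun q : Hn n × ℝ => a (q.1.1 - q.2, q.1.2) * b (tau (s, v) q.1)) q
      with hW₁
    set W₂ : Hn n × ℝ → ℂ :=
      fun q => T.indicator (fun q : Hn n × ℝ =>
        a q.1 * b ((tau (s, v) q.1).1 - q.2, (tau (s, v) q.1).2)) q with hW₂
    have hτm : Measurable fun q : Hn n × ℝ => tau (s, v) q.1 :=
      (measurable_tau_left (s, v)).comp measurable_fst
    have hW₁sm : StronglyMeasurable W₁ := by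
      refine StronglyMeasurable.indicator ?_ hTmeas
      exact (sa.comp_measurable
          (((measurable_fst.fst.sub measurable_snd).prodMk measurable_fst.snd))).mul
        (sb.comp_measurable hτm)
    have hW₂sm : StronglyMeasurable W₂ := by
      refine StronglyMeasurable.indicator ?_ hTmeas
      exact (sa.comp_measurable measurable_fst).mul
        (sb.comp_measurable ((hτm.fst.sub measurable_snd).prodMk hτm.snd))
    -- slicewise forms
    have hW₁slice : ∀ h : Hn n, (fun t => W₁ (h, t))
        = fun t => ((Ici (0:ℝ)).indicator (fun u => a (h.1 - u, h.2)) t) * b (tau (s, v) h) := by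
      intro h
      funext t
      by_cases ht : (0:ℝ) ≤ t
      · simp only [hW₁]
        rw [Set.indicator_of_mem (show ((h, t) : Hn n × ℝ) ∈ T from ht),
          Set.indicator_of_mem (show t ∈ Ici (0:ℝ) from ht)]
      · simp only [hW₁]
        rw [Set.indicator_of_notMem (show ((h, t) : Hn n × ℝ) ∉ T from ht),
          Set.indicator_of_notMem (show t ∉ Ici (0:ℝ) from ht), zero_mul]
    have hW₂slice : ∀ h : Hn n, (fun t => W₂ (h, t))
        = fun t => a h * ((Ici (0:ℝ)).indicator
          (fun u => b ((tau (s, v) h).1 - u, (tau (s, v) h).2)) t) := by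
      intro h
      funext t
      by_cases ht : (0:ℝ) ≤ t
      · simp only [hW₂]
        rw [Set.indicator_of_mem (show ((h, t) : Hn n × ℝ) ∈ T from ht),
          Set.indicator_of_mem (show t ∈ Ici (0:ℝ) from ht)]
      · simp only [hW₂]
        rw [Set.indicator_of_notMem (show ((h, t) : Hn n × ℝ) ∉ T from ht),
          Set.indicator_of_notMem (show t ∉ Ici (0:ℝ) from ht), mul_zero]
    -- integrability of W₁
    have hrefA : ∀ h : Hn n, Integrable (fun t => a (t, h.2)) volume →
        Integrable (fun t : ℝ => a (h.1 - t, h.2)) volume := by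
      intro h hh
      exact mp_integrable_comp (Measure.measurePreserving_sub_left volume h.1)
        hh.aestronglyMeasurable hh
    have hrefB : ∀ h : Hn n, Integrable (fun t => b (t, v - h.2)) volume →
        Integrable (fun t : ℝ => b ((tau (s, v) h).1 - t, (tau (s, v) h).2)) volume := by
      intro h hh
      exact mp_integrable_comp (Measure.measurePreserving_sub_left volume (tau (s, v) h).1)
        hh.aestronglyMeasurable hh
    have hNa_le : ∀ h : Hn n, Integrable (fun t => a (t, h.2)) volume →
        ∫ t in Ici (0:ℝ), ‖a (h.1 - t, h.2)‖ ≤ N a h.2 := by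
      intro h hh
      have h1 : ∫ t : ℝ, ‖a (h.1 - t, h.2)‖ = N a h.2 :=
        integral_sub_left_eq_self (fun u => ‖a (u, h.2)‖) (volume : Measure ℝ) h.1
      rw [← h1]
      exact setIntegral_le_integral (hrefA h hh).norm
        (Filter.Eventually.of_forall fun t => norm_nonneg _)
    have hNb_le : ∀ h : Hn n, Integrable (fun t => b (t, v - h.2)) volume →
        ∫ t in Ici (0:ℝ), ‖b ((tau (s, v) h).1 - t, (tau (s, v) h).2)‖ ≤ N b (v - h.2) := by
      intro h hh
      have h1 : ∫ t : ℝ, ‖b ((tau (s, v) h).1 - t, (tau (s, v) h).2)‖ = N b (v - h.2) :=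
        integral_sub_left_eq_self (fun u => ‖b (u, v - h.2)‖) (volume : Measure ℝ) (tau (s, v) h).1
      rw [← h1]
      exact setIntegral_le_integral (hrefB h hh).norm
        (Filter.Eventually.of_forall fun t => norm_nonneg _)
    have hW₁int : Integrable W₁ ((volume : Measure (Hn n)).prod volume) := by
      refine (integrable_prod_iff hW₁sm.aestronglyMeasurable).mpr ⟨?_, ?_⟩
      · filter_upwards [hsliceA] with h hh
        rw [hW₁slice h]
        exact (((hrefA h hh).indicator measurableSet_Ici).mul_const _)
      · refine Integrable.mono' hv2s
          (hW₁sm.norm.integral_prod_right' (ν := volume)).aestronglyMeasurable ?_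
        filter_upwards [hsliceA] with h hh
        have hnn : 0 ≤ ∫ t, ‖W₁ (h, t)‖ := integral_nonneg fun t => norm_nonneg _
        rw [Real.norm_of_nonneg hnn]
        have e1 : (fun t => ‖W₁ (h, t)‖) = fun t =>
            ((Ici (0:ℝ)).indicator (fun u => ‖a (h.1 - u, h.2)‖) t) * ‖b (tau (s, v) h)‖ := by
          funext t
          rw [congrFun (hW₁slice h) t, norm_mul, norm_indicator_eq_indicator_norm]
        rw [e1, integral_mul_const, integral_indicator measurableSet_Ici]
        exact mul_le_mul_of_nonneg_right (hNa_le h hh) (norm_nonneg _)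
    have hW₂int : Integrable W₂ ((volume : Measure (Hn n)).prod volume) := by
      refine (integrable_prod_iff hW₂sm.aestronglyMeasurable).mpr ⟨?_, ?_⟩
      · filter_upwards [hsliceB] with h hh
        rw [hW₂slice h]
        exact ((hrefB h hh).indicator measurableSet_Ici).const_mul _
      · refine Integrable.mono' hv1
          (hW₂sm.norm.integral_prod_right' (ν := volume)).aestronglyMeasurable ?_
        filter_upwards [hsliceB] with h hh
        have hnn : 0 ≤ ∫ t, ‖W₂ (h, t)‖ := integral_nonneg fun t => norm_nonneg _
        rw [Real.norm_of_nonneg hnn]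
        have e1 : (fun t => ‖W₂ (h, t)‖) = fun t =>
            ‖a h‖ * ((Ici (0:ℝ)).indicator
              (fun u => ‖b ((tau (s, v) h).1 - u, (tau (s, v) h).2)‖) t) := by
          funext t
          rw [congrFun (hW₂slice h) t, norm_mul, norm_indicator_eq_indicator_norm]
        rw [e1, integral_const_mul, integral_indicator measurableSet_Ici]
        exact mul_le_mul_of_nonneg_left (hNb_le h hh) (norm_nonneg _)
    -- the two swaps
    have hswap₁ := integral_integral_swap (f := fun (h : Hn n) (t : ℝ) => W₁ (h, t)) hW₁int
    have hswap₂ := integral_integral_swap (f := fun (h : Hn n) (t : ℝ) => W₂ (h, t)) hW₂int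
    -- middle identity : for every t, ∫ h, W₁ (h, t) = ∫ h, W₂ (h, t)
    have hmid : ∀ t : ℝ, (∫ h : Hn n, W₁ (h, t)) = ∫ h : Hn n, W₂ (h, t) := by
      intro t
      by_cases ht : (0:ℝ) ≤ t
      · have e1 : (fun h : Hn n => W₁ (h, t))
            = fun h : Hn n => a (h.1 - t, h.2) * b (tau (s, v) h) := by
          funext h
          simp only [hW₁]
          rw [Set.indicator_of_mem (show ((h, t) : Hn n × ℝ) ∈ T from ht)]
        have e2 : (fun h : Hn n => W₂ (h, t))
            = fun h : Hn n => a h * b ((tau (s, v) h).1 - t, (tau (s, v) h).2) := by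
          funext h
          simp only [hW₂]
          rw [Set.indicator_of_mem (show ((h, t) : Hn n × ℝ) ∈ T from ht)]
        rw [e1, e2]
        have hsm : AEStronglyMeasurable
            (fun h : Hn n => a (h.1 - t, h.2) * b (tau (s, v) h)) volume :=
          ((sa.comp_measurable ((measurable_fst.sub measurable_const).prodMk
            measurable_snd)).mul (sb.comp_measurable (measurable_tau_left (s, v)))).aestronglyMeasurable
        rw [← mp_integral_comp (mp_shift t) hsm]
        refine integral_congr_ae (Filter.Eventually.of_forall fun h => ?_)
        show a ((h.1 + t) - t, h.2) * b (tau (s, v) (h.1 + t, h.2))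
            = a h * b ((tau (s, v) h).1 - t, (tau (s, v) h).2)
        rw [add_sub_cancel_right]
        have harg : tau (s, v) (h.1 + t, h.2)
            = ((tau (s, v) h).1 - t, (tau (s, v) h).2) := by
          unfold tau
          refine Prod.ext ?_ rfl
          show s - (h.1 + t) + cc v h.2 = (s - h.1 + cc v h.2) - t
          ring
        rw [harg]
      · have e1 : (fun h : Hn n => W₁ (h, t)) = fun _ : Hn n => (0:ℂ) := by
          funext h
          simp only [hW₁]
          rw [Set.indicator_of_notMem (show ((h, t) : Hn n × ℝ) ∉ T from ht)]
        have e2 : (fun h : Hn n => W₂ (h, t)) = fun _ : Hn n => (0:ℂ) := by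
          funext h
          simp only [hW₂]
          rw [Set.indicator_of_notMem (show ((h, t) : Hn n × ℝ) ∉ T from ht)]
        rw [e1, e2]
    -- endpoints
    have lhs : hconv (AopH a) b (s, v) = ∫ h : Hn n, ∫ t : ℝ, W₁ (h, t) := by
      rw [hconv_eq]
      refine integral_congr_ae (Filter.Eventually.of_forall fun h => ?_)
      show AopH a h * b (tau (s, v) h) = ∫ t : ℝ, W₁ (h, t)
      rw [AopH_reflect, ← integral_mul_const, hW₁slice h]
    have rhs : hconv a (AopH b) (s, v) = ∫ h : Hn n, ∫ t : ℝ, W₂ (h, t) := by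
      rw [hconv_eq]
      refine integral_congr_ae (Filter.Eventually.of_forall fun h => ?_)
      show a h * AopH b (tau (s, v) h) = ∫ t : ℝ, W₂ (h, t)
      rw [AopH_reflect, ← integral_const_mul, hW₂slice h]
    rw [lhs, rhs, hswap₁, hswap₂]
    exact integral_congr_ae (Filter.Eventually.of_forall fun t => hmid t)
  filter_upwards [ae_of_ae_snd key] with g hg
  exact hg g.1



lemma main_core {a₁ a₂ a₃ : Hn n → ℂ}
    (s₁ : StronglyMeasurable a₁) (s₂ : StronglyMeasurable a₂) (s₃ : StronglyMeasurable a₃)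
    (h₁ : Integrable a₁) (h₂ : Integrable a₂) (h₃ : Integrable a₃) :
    pbracket (hconv a₁ a₂) a₃ =ᵐ[volume]
      fun g => hconv (pbracket a₁ a₃) a₂ g + hconv a₁ (pbracket a₂ a₃) g := by
  set B13 : Hn n → ℂ := fun g => hconv a₁ a₃ g - hconv a₃ a₁ g with hB13
  set B23 : Hn n → ℂ := fun g => hconv a₂ a₃ g - hconv a₃ a₂ g with hB23
  have s13 : StronglyMeasurable B13 := (sm_hconv s₁ s₃).sub (sm_hconv s₃ s₁)
  have s23 : StronglyMeasurable B23 := (sm_hconv s₂ s₃).sub (sm_hconv s₃ s₂)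
  have i13 : Integrable B13 volume :=
    (integrable_hconv s₁ s₃ h₁ h₃).sub (integrable_hconv s₃ s₁ h₃ h₁)
  have i23 : Integrable B23 volume :=
    (integrable_hconv s₂ s₃ h₂ h₃).sub (integrable_hconv s₃ s₂ h₃ h₂)
  have iA : Integrable (hconv a₁ B23) volume := integrable_hconv s₁ s23 h₁ i23
  have iB : Integrable (hconv B13 a₂) volume := integrable_hconv s13 s₂ i13 h₂
  have hD : (fun g => hconv (hconv a₁ a₂) a₃ g - hconv a₃ (hconv a₁ a₂) g) =ᵐ[volume]
      (fun g => hconv a₁ B23 g + hconv B13 a₂ g) := by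
    have e1 : hconv (hconv a₁ a₂) a₃ =ᵐ[volume] hconv a₁ (hconv a₂ a₃) :=
      hconv_assoc s₁ s₂ s₃ h₁ h₂ h₃
    have e2 : hconv a₃ (hconv a₁ a₂) =ᵐ[volume] hconv (hconv a₃ a₁) a₂ :=
      (hconv_assoc s₃ s₁ s₂ h₃ h₁ h₂).symm
    have e3 : hconv a₁ B23 =ᵐ[volume]
        fun g => hconv a₁ (hconv a₂ a₃) g - hconv a₁ (hconv a₃ a₂) g :=
      hconv_sub_right s₁ (sm_hconv s₂ s₃) (sm_hconv s₃ s₂) h₁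
        (integrable_hconv s₂ s₃ h₂ h₃) (integrable_hconv s₃ s₂ h₃ h₂)
    have e4 : hconv B13 a₂ =ᵐ[volume]
        fun g => hconv (hconv a₁ a₃) a₂ g - hconv (hconv a₃ a₁) a₂ g :=
      hconv_sub_left (sm_hconv s₁ s₃) (sm_hconv s₃ s₁) s₂
        (integrable_hconv s₁ s₃ h₁ h₃) (integrable_hconv s₃ s₁ h₃ h₁) h₂
    have e5 : hconv a₁ (hconv a₃ a₂) =ᵐ[volume] hconv (hconv a₁ a₃) a₂ :=
      (hconv_assoc s₁ s₃ s₂ h₁ h₃ h₂).symm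
    filter_upwards [e1, e2, e3, e4, e5] with g he1 he2 he3 he4 he5
    simp only [he1, he2, he3, he4, he5]
    ring
  have step1 : pbracket (hconv a₁ a₂) a₃ =ᵐ[volume]
      AopH (fun g => hconv a₁ B23 g + hconv B13 a₂ g) := AopH_congr hD
  have step2 : AopH (fun g => hconv a₁ B23 g + hconv B13 a₂ g) =ᵐ[volume]
      fun g => AopH (hconv a₁ B23) g + AopH (hconv B13 a₂) g := AopH_add iA iB
  have e6 : AopH (hconv a₁ B23) =ᵐ[volume] hconv a₁ (AopH B23) := LA1 s₁ s23 h₁ i23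
  have e7 : AopH (hconv B13 a₂) =ᵐ[volume] hconv (AopH B13) a₂ :=
    (LA1 s13 s₂ i13 h₂).trans (LA2 s13 s₂ i13 h₂).symm
  filter_upwards [step1, step2, e6, e7] with g hg1 hg2 hg3 hg4
  simp only [hg1, hg2, hg3, hg4]
  exact add_comm _ _

end PBL


open PBL
set_option maxHeartbeats 1000000

/-- The p-mechanical bracket satisfies the Leibniz rule
`⟦k₁ ⋆ k₂, k₃⟧ = ⟦k₁, k₃⟧ ⋆ k₂ + k₁ ⋆ ⟦k₂, k₃⟧` almost everywhere, whenever all the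
convolutions and antiderivatives involved are given by absolutely convergent
integrals. -/
theorem pbracket_leibniz (n : ℕ) (hn : 1 ≤ n) (k₁ k₂ k₃ : Hn n → ℂ)
    (h₁ : Integrable k₁) (h₂ : Integrable k₂) (h₃ : Integrable k₃)
    (h₁₂ : Integrable (hconv k₁ k₂))
    (hc₁₃ : Integrable (fun g : Hn n => hconv k₁ k₃ g - hconv k₃ k₁ g))
    (hc₂₃ : Integrable (fun g : Hn n => hconv k₂ k₃ g - hconv k₃ k₂ g))
    (hc : Integrable (fun g : Hn n =>
      hconv (hconv k₁ k₂) k₃ g - hconv k₃ (hconv k₁ k₂) g))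
    (hA₁₃ : Integrable (pbracket k₁ k₃))
    (hA₂₃ : Integrable (pbracket k₂ k₃))
    (hA : Integrable (pbracket (hconv k₁ k₂) k₃)) :
    pbracket (hconv k₁ k₂) k₃ =ᵐ[volume]
      fun g => hconv (pbracket k₁ k₃) k₂ g + hconv k₁ (pbracket k₂ k₃) g := by
  obtain ⟨a₁, s₁, e₁⟩ : ∃ a₁ : Hn n → ℂ, StronglyMeasurable a₁ ∧ k₁ =ᵐ[volume] a₁ :=
    ⟨h₁.aestronglyMeasurable.mk k₁, h₁.aestronglyMeasurable.stronglyMeasurable_mk,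
      h₁.aestronglyMeasurable.ae_eq_mk⟩
  obtain ⟨a₂, s₂, e₂⟩ : ∃ a₂ : Hn n → ℂ, StronglyMeasurable a₂ ∧ k₂ =ᵐ[volume] a₂ :=
    ⟨h₂.aestronglyMeasurable.mk k₂, h₂.aestronglyMeasurable.stronglyMeasurable_mk,
      h₂.aestronglyMeasurable.ae_eq_mk⟩
  obtain ⟨a₃, s₃, e₃⟩ : ∃ a₃ : Hn n → ℂ, StronglyMeasurable a₃ ∧ k₃ =ᵐ[volume] a₃ :=
    ⟨h₃.aestronglyMeasurable.mk k₃, h₃.aestronglyMeasurable.stronglyMeasurable_mk,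
      h₃.aestronglyMeasurable.ae_eq_mk⟩
  have i₁ : Integrable a₁ volume := h₁.congr e₁
  have i₂ : Integrable a₂ volume := h₂.congr e₂
  have i₃ : Integrable a₃ volume := h₃.congr e₃
  have E12 : hconv k₁ k₂ = hconv a₁ a₂ := hconv_congr e₁ e₂
  have E13 : hconv k₁ k₃ = hconv a₁ a₃ := hconv_congr e₁ e₃
  have E31 : hconv k₃ k₁ = hconv a₃ a₁ := hconv_congr e₃ e₁
  have E23 : hconv k₂ k₃ = hconv a₂ a₃ := hconv_congr e₂ e₃
  have E32 : hconv k₃ k₂ = hconv a₃ a₂ := hconv_congr e₃ e₂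
  have P13 : pbracket k₁ k₃ = pbracket a₁ a₃ := by unfold pbracket; rw [E13, E31]
  have P23 : pbracket k₂ k₃ = pbracket a₂ a₃ := by unfold pbracket; rw [E23, E32]
  have hE12 : hconv k₁ k₂ =ᵐ[volume] hconv a₁ a₂ := by rw [E12]
  have PL : pbracket (hconv k₁ k₂) k₃ = pbracket (hconv a₁ a₂) a₃ := by
    unfold pbracket
    rw [hconv_congr hE12 e₃, hconv_congr e₃ hE12]
  have hP13 : pbracket k₁ k₃ =ᵐ[volume] pbracket a₁ a₃ := by rw [P13]
  have hP23 : pbracket k₂ k₃ =ᵐ[volume] pbracket a₂ a₃ := by rw [P23]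
  rw [PL, show hconv (pbracket k₁ k₃) k₂ = hconv (pbracket a₁ a₃) a₂ from
      hconv_congr hP13 e₂,
    show hconv k₁ (pbracket k₂ k₃) = hconv a₁ (pbracket a₂ a₃) from
      hconv_congr e₁ hP23]
  exact main_core s₁ s₂ s₃ i₁ i₂ i₃
end
end

section
/- Let H : ℝ × ℝⁿ × ℝⁿ → ℂ and f : ℝ → (ℝ × ℝⁿ × ℝⁿ → ℂ) be such that for every t: (i) (s,x,y) ↦ (1 + |s| + ‖x‖ + ‖y‖) f(t)(s,x,y) and (1 + |s| + ‖x‖ + ‖y‖) H(s,x,y) are integrable and ⟦f(t), H⟧ is integrable; (ii) for almost every g the time derivative ∂f/∂t(t)(g) exists and equals ⟦f(t), H⟧(g) (the p-mechanical dynamic equation); (iii) for fixed q, p ∈ ℝⁿ, differentiation under the integral sign is valid: d/dt ∫ f(t)(s,x,y) e^{i(⟨q,x⟩+⟨p,y⟩)} ds dx dy = ∫ ∂f/∂t(t)(s,x,y) e^{i(⟨q,x⟩+⟨p,y⟩)} ds dx dy. Then the classical observable f₀(t; q,p) := (f(t))^(q,p) satisfies the Hamilton equation d/dt f₀(t; q,p)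 = {f₀(t;·,·), Ĥ}(q,p) = Σ_{j=1}^{n} ( ∂f₀/∂q_j · ∂Ĥ/∂p_j − ∂f₀/∂p_j · ∂Ĥ/∂q_j )(t; q,p). -/
open MeasureTheory

noncomputable section

namespace PM

variable {n : ℕ}

/-! ### dotR basics -/

lemma dotR_add_left (x x' y : Fin n → ℝ) : dotR (x + x') y = dotR x y + dotR x' y := by
  simp [dotR, add_mul, Finset.sum_add_distrib]

lemma dotR_sub_left (x x' y : Fin n → ℝ) : dotR (x - x') y = dotR x y - dotR x' y := by
  simp [dotR, sub_mul, Finset.sum_sub_distrib]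

lemma dotR_add_right (x y y' : Fin n → ℝ) : dotR x (y + y') = dotR x y + dotR x y' := by
  simp [dotR, mul_add, Finset.sum_add_distrib]

lemma dotR_sub_right (x y y' : Fin n → ℝ) : dotR x (y - y') = dotR x y - dotR x y' := by
  simp [dotR, mul_sub, Finset.sum_sub_distrib]

lemma dotR_zero_left (y : Fin n → ℝ) : dotR 0 y = 0 := by simp [dotR]

lemma dotR_single_one (j : Fin n) (x : Fin n → ℝ) : dotR (Pi.single j 1) x = x j := by
  simp [dotR, Pi.single_apply, ite_mul]

lemma abs_dotR_le (x y : Fin n → ℝ) : |dotR x y| ≤ n * (‖x‖ * ‖y‖) := by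
  calc |dotR x y| ≤ ∑ j, |x j * y j| := Finset.abs_sum_le_sum_abs _ _
    _ ≤ ∑ _j : Fin n, ‖x‖ * ‖y‖ := by
        refine Finset.sum_le_sum fun j _ => ?_
        rw [abs_mul]
        exact mul_le_mul (by simpa using norm_le_pi_norm x j)
          (by simpa using norm_le_pi_norm y j) (abs_nonneg _) (norm_nonneg _)
    _ = n * (‖x‖ * ‖y‖) := by simp [mul_comm]

lemma continuous_dotR_uncurry : Continuous fun z : (Fin n → ℝ) × (Fin n → ℝ) => dotR z.1 z.2 := by
  unfold dotR
  exact continuous_finset_sum _ fun j _ =>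
    ((continuous_apply j).comp continuous_fst).mul ((continuous_apply j).comp continuous_snd)

/-! ### weight -/

def wH (g : Hn n) : ℝ := 1 + |g.1| + ‖g.2.1‖ + ‖g.2.2‖

lemma one_le_wH (g : Hn n) : 1 ≤ wH g := by
  have := abs_nonneg g.1; have := norm_nonneg g.2.1; have := norm_nonneg g.2.2
  unfold wH; linarith

lemma wH_pos (g : Hn n) : 0 < wH g := lt_of_lt_of_le one_pos (one_le_wH g)

lemma continuous_wH : Continuous (wH (n := n)) := by
  unfold wH; fun_prop

/-! ### character -/

lemma norm_charQP (q p : Fin n → ℝ) (g : Hn n) : ‖charQP q p g‖ = 1 := by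
  rw [charQP, mul_comm]
  exact Complex.norm_exp_ofReal_mul_I _

lemma continuous_charQP (q p : Fin n → ℝ) : Continuous (charQP (n := n) q p) := by
  unfold charQP
  refine Complex.continuous_exp.comp (continuous_const.mul (Complex.continuous_ofReal.comp ?_))
  refine Continuous.add ?_ ?_
  · exact (continuous_dotR_uncurry.comp (continuous_const.prodMk
      (continuous_fst.comp continuous_snd)))
  · exact (continuous_dotR_uncurry.comp (continuous_const.prodMk
      (continuous_snd.comp continuous_snd)))

lemma charQP_zero (g : Hn n) : charQP 0 0 g = 1 := by
  simp [charQP, dotR_zero_left]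

lemma norm_exp_I_mul_sub_le (a b : ℝ) :
    ‖Complex.exp (Complex.I * a) - Complex.exp (Complex.I * b)‖ ≤ 2 * |a - b| := by
  have key : Complex.exp (Complex.I * a) - Complex.exp (Complex.I * b)
      = Complex.exp (Complex.I * b) * (Complex.exp (Complex.I * (a - b)) - 1) := by
    rw [mul_sub, mul_one, ← Complex.exp_add]; ring_nf
  rw [key, norm_mul]
  have h1 : ‖Complex.exp (Complex.I * (b : ℂ))‖ = 1 := by
    rw [mul_comm]; exact Complex.norm_exp_ofReal_mul_I _
  rw [h1, one_mul]
  have habs : ‖Complex.I * ((a : ℂ) - b)‖ = |a - b| := by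
    rw [norm_mul, Complex.norm_I, one_mul, ← Complex.ofReal_sub, Complex.norm_real, Real.norm_eq_abs]
  by_cases hab : |a - b| ≤ 1
  · have := Complex.norm_exp_sub_one_le (x := Complex.I * ((a : ℂ) - b)) (by rw [habs]; exact hab)
    rw [habs] at this
    simpa [Complex.ofReal_sub] using this
  · push_neg at hab
    have h2 : ‖Complex.exp (Complex.I * ((a : ℂ) - b)) - 1‖ ≤ 2 := by
      refine (norm_sub_le _ _).trans ?_
      have : ‖Complex.exp (Complex.I * ((a : ℂ) - b))‖ = 1 := by
        rw [show ((a : ℂ) - b) = ((a - b : ℝ) : ℂ) by push_cast; ring, mul_comm]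
        exact Complex.norm_exp_ofReal_mul_I _
      rw [this]; norm_num
    calc ‖Complex.exp (Complex.I * ((a:ℂ) - b)) - 1‖ ≤ 2 := by
          simpa [Complex.ofReal_sub] using h2
      _ ≤ 2 * |a - b| := by nlinarith

/-! ### group operations -/

def hmul (h g : Hn n) : Hn n :=
  (h.1 + g.1 + (dotR h.2.1 g.2.2 - dotR g.2.1 h.2.2) / 2, h.2.1 + g.2.1, h.2.2 + g.2.2)

def hdiv (h g : Hn n) : Hn n :=
  (g.1 - h.1 + (dotR g.2.1 h.2.2 - dotR h.2.1 g.2.2) / 2, g.2.1 - h.2.1, g.2.2 - h.2.2)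

lemma hdiv_hmul (h g : Hn n) : hdiv h (hmul h g) = g := by
  unfold hdiv hmul
  ext <;> simp [dotR_add_left, dotR_add_right] <;> ring

lemma hmul_hdiv (h g : Hn n) : hmul h (hdiv h g) = g := by
  unfold hdiv hmul
  ext <;> simp [dotR_sub_left, dotR_sub_right] <;> ring

lemma continuous_hmul_uncurry : Continuous fun z : Hn n × Hn n => hmul z.1 z.2 := by
  unfold hmul
  refine Continuous.prodMk ?_ (Continuous.prodMk ?_ ?_)
  · refine Continuous.add (Continuous.add ?_ ?_) ?_
    · exact continuous_fst.fst
    · exact continuous_snd.fst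
    · refine Continuous.div_const (Continuous.sub ?_ ?_) 2
      · exact continuous_dotR_uncurry.comp
          ((continuous_fst.snd.fst).prodMk (continuous_snd.snd.snd))
      · exact continuous_dotR_uncurry.comp
          ((continuous_snd.snd.fst).prodMk (continuous_fst.snd.snd))
  · exact (continuous_fst.snd.fst).add (continuous_snd.snd.fst)
  · exact (continuous_fst.snd.snd).add (continuous_snd.snd.snd)

lemma continuous_hmul (h : Hn n) : Continuous (hmul h) :=
  continuous_hmul_uncurry.comp (continuous_const.prodMk continuous_id)

lemma continuous_hdiv (h : Hn n) : Continuous (hdiv h) := by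
  unfold hdiv
  refine Continuous.prodMk ?_ (Continuous.prodMk ?_ ?_)
  · refine Continuous.add (Continuous.sub continuous_fst continuous_const) ?_
    refine Continuous.div_const (Continuous.sub ?_ ?_) 2
    · exact continuous_dotR_uncurry.comp ((continuous_snd.fst).prodMk continuous_const)
    · exact continuous_dotR_uncurry.comp (continuous_const.prodMk (continuous_snd.snd))
  · exact (continuous_snd.fst).sub continuous_const
  · exact (continuous_snd.snd).sub continuous_const

/-- `g ↦ h · g` as a measurable equivalence. -/
def hmulEquiv (h : Hn n) : Hn n ≃ᵐ Hn n where
  toFun := hmul h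
  invFun := hdiv h
  left_inv := hdiv_hmul h
  right_inv := hmul_hdiv h
  measurable_toFun := (continuous_hmul h).measurable
  measurable_invFun := (continuous_hdiv h).measurable

lemma volume_Hn_eq_prod :
    (volume : Measure (Hn n)) =
      (volume : Measure ℝ).prod (volume : Measure ((Fin n → ℝ) × (Fin n → ℝ))) :=
  Measure.volume_eq_prod _ _

instance : (volume : Measure ((Fin n → ℝ) × (Fin n → ℝ))).IsAddLeftInvariant := by
  rw [Measure.volume_eq_prod]; infer_instance

instance : (volume : Measure (Hn n)).IsAddLeftInvariant := by
  rw [Measure.volume_eq_prod]; infer_instance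

lemma mp_shear (c : (Fin n → ℝ) × (Fin n → ℝ) → ℝ) (hc : Measurable c) :
    MeasurePreserving (fun g : Hn n => (g.1 + c g.2, g.2)) volume volume := by
  rw [volume_Hn_eq_prod]
  have h1 : MeasurePreserving
      (fun z : ((Fin n → ℝ) × (Fin n → ℝ)) × ℝ => (z.1, z.2 + c z.1))
      (volume.prod volume) (volume.prod volume) := by
    refine MeasurePreserving.skew_product (g := fun xy (s : ℝ) => s + c xy)
      (MeasurePreserving.id (volume : Measure ((Fin n → ℝ) × (Fin n → ℝ)))) ?_ ?_
    · exact measurable_snd.add (hc.comp measurable_fst)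
    · exact Filter.Eventually.of_forall fun xy =>
        (measurePreserving_add_right volume (c xy)).map_eq
  have h2 : (fun g : ℝ × ((Fin n → ℝ) × (Fin n → ℝ)) => (g.1 + c g.2, g.2))
      = Prod.swap ∘ (fun z : ((Fin n → ℝ) × (Fin n → ℝ)) × ℝ => (z.1, z.2 + c z.1)) ∘ Prod.swap := by
    funext g; rfl
  rw [h2]
  exact (Measure.measurePreserving_swap
    (μ := (volume : Measure ((Fin n → ℝ) × (Fin n → ℝ)))) (ν := (volume : Measure ℝ))).comp
    (h1.comp (Measure.measurePreserving_swap))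

lemma mp_hmul (h : Hn n) : MeasurePreserving (hmul h) volume volume := by
  have hS : MeasurePreserving
      (fun g : Hn n => (g.1 + (dotR h.2.1 g.2.2 - dotR g.2.1 h.2.2) / 2, g.2))
      volume volume := by
    refine mp_shear (fun xy => (dotR h.2.1 xy.2 - dotR xy.1 h.2.2) / 2) ?_
    refine Measurable.div_const (Measurable.sub ?_ ?_) 2
    · exact continuous_dotR_uncurry.measurable.comp
        (measurable_const.prodMk measurable_snd)
    · exact continuous_dotR_uncurry.measurable.comp
        (measurable_fst.prodMk measurable_const)
  have hT : MeasurePreserving (fun g : Hn n => (h.1, h.2.1, h.2.2) + g) volume volume :=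
    measurePreserving_add_left volume _
  have : hmul h = (fun g : Hn n => (h.1, h.2.1, h.2.2) + g) ∘
      (fun g : Hn n => (g.1 + (dotR h.2.1 g.2.2 - dotR g.2.1 h.2.2) / 2, g.2)) := by
    funext g
    show _ = ((h.1, h.2.1, h.2.2) : Hn n) + _
    unfold hmul
    ext <;> simp [Prod.add_def] <;> ring
  rw [this]
  exact hT.comp hS

lemma mp_hmulEquiv (h : Hn n) : MeasurePreserving (hmulEquiv h) volume volume := mp_hmul h

/-- The skew product `(h, g) ↦ (h, h·g)` as a measurable equivalence. -/
def skewEquiv : (Hn n × Hn n) ≃ᵐ (Hn n × Hn n) where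
  toFun z := (z.1, hmul z.1 z.2)
  invFun z := (z.1, hdiv z.1 z.2)
  left_inv z := by simp [hdiv_hmul]
  right_inv z := by simp [hmul_hdiv]
  measurable_toFun := by
    exact measurable_fst.prodMk continuous_hmul_uncurry.measurable
  measurable_invFun := by
    have : Continuous fun z : Hn n × Hn n => hdiv z.1 z.2 := by
      unfold hdiv
      refine Continuous.prodMk ?_ (Continuous.prodMk ?_ ?_)
      · refine Continuous.add (continuous_snd.fst.sub continuous_fst.fst) ?_
        refine Continuous.div_const (Continuous.sub ?_ ?_) 2
        · exact continuous_dotR_uncurry.comp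
            ((continuous_snd.snd.fst).prodMk (continuous_fst.snd.snd))
        · exact continuous_dotR_uncurry.comp
            ((continuous_fst.snd.fst).prodMk (continuous_snd.snd.snd))
      · exact (continuous_snd.snd.fst).sub (continuous_fst.snd.fst)
      · exact (continuous_snd.snd.snd).sub (continuous_fst.snd.snd)
    exact measurable_fst.prodMk this.measurable
  
lemma mp_skewEquiv : MeasurePreserving (skewEquiv (n := n)) volume volume := by
  have : (volume : Measure (Hn n × Hn n)) = volume.prod volume := Measure.volume_eq_prod _ _
  rw [this]
  refine MeasurePreserving.skew_product (g := fun h g => hmul h g)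
    (MeasurePreserving.id (volume : Measure (Hn n)))
    continuous_hmul_uncurry.measurable ?_
  exact Filter.Eventually.of_forall fun h => (mp_hmul h).map_eq

lemma integral_comp_skew (F : Hn n × Hn n → ℂ) :
    ∫ z : Hn n × Hn n, F (z.1, hmul z.1 z.2) = ∫ z, F z :=
  mp_skewEquiv.integral_comp skewEquiv.measurableEmbedding F

lemma integrable_comp_skew_iff (F : Hn n × Hn n → ℂ) :
    Integrable (fun z : Hn n × Hn n => F (z.1, hmul z.1 z.2)) volume ↔ Integrable F volume :=
  mp_skewEquiv.integrable_comp_emb skewEquiv.measurableEmbedding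

lemma charQP_hmul (q p : Fin n → ℝ) (h g : Hn n) :
    charQP q p (hmul h g) = charQP q p h * charQP q p g := by
  unfold charQP hmul
  rw [← Complex.exp_add]
  congr 1
  push_cast [dotR_add_right]
  ring

/-! ### Integrability infrastructure -/

section Integrab

variable {k k₁ k₂ : Hn n → ℂ} {q p : Fin n → ℝ}

lemma aesm_of_wk (hk : Integrable fun g : Hn n => ((wH g : ℝ) : ℂ) * k g) :
    AEStronglyMeasurable k volume := by
  have hcont : Continuous fun g : Hn n => (((wH g : ℝ) : ℂ))⁻¹ :=
    (Complex.continuous_ofReal.comp continuous_wH).inv₀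
      (fun g => Complex.ofReal_ne_zero.mpr (ne_of_gt (wH_pos g)))
  have : k = fun g => (((wH g : ℝ) : ℂ))⁻¹ * (((wH g : ℝ) : ℂ) * k g) := by
    funext g
    rw [← mul_assoc, inv_mul_cancel₀ (by exact_mod_cast ne_of_gt (wH_pos g)), one_mul]
  rw [this]
  exact hcont.aestronglyMeasurable.mul hk.1

lemma norm_wk (g : Hn n) (k : Hn n → ℂ) : ‖((wH g : ℝ) : ℂ) * k g‖ = wH g * ‖k g‖ := by
  rw [norm_mul, Complex.norm_real, Real.norm_eq_abs, abs_of_pos (wH_pos g)]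

lemma integrable_of_wk (hk : Integrable fun g : Hn n => ((wH g : ℝ) : ℂ) * k g) :
    Integrable k := by
  refine hk.norm.mono' (aesm_of_wk hk) (Filter.Eventually.of_forall fun g => ?_)
  rw [norm_wk]
  nlinarith [one_le_wH g, norm_nonneg (k g), wH_pos g]

lemma integrable_coeff_mul (c : Hn n → ℝ) (hcm : Measurable c) (hb : ∀ g, |c g| ≤ wH g)
    (hk : Integrable fun g : Hn n => ((wH g : ℝ) : ℂ) * k g) :
    Integrable fun g : Hn n => (c g : ℂ) * (k g * charQP q p g) := by
  refine hk.norm.mono' ?_ (Filter.Eventually.of_forall fun g => ?_)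
  · exact ((Complex.measurable_ofReal.comp hcm).aestronglyMeasurable).mul
      ((aesm_of_wk hk).mul (continuous_charQP q p).aestronglyMeasurable)
  · rw [norm_wk, norm_mul, norm_mul, norm_charQP, mul_one, Complex.norm_real,
      Real.norm_eq_abs]
    exact mul_le_mul_of_nonneg_right (hb g) (norm_nonneg _)

lemma integrable_mul_char (hk : Integrable k) :
    Integrable fun g : Hn n => k g * charQP q p g := by
  refine hk.norm.mono' (hk.1.mul (continuous_charQP q p).aestronglyMeasurable)
    (Filter.Eventually.of_forall fun g => ?_)
  rw [norm_mul, norm_charQP, mul_one]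

lemma integrable_prod_block
    (hk₁ : Integrable fun g : Hn n => ((wH g : ℝ) : ℂ) * k₁ g)
    (hk₂ : Integrable fun g : Hn n => ((wH g : ℝ) : ℂ) * k₂ g)
    (C : ℝ) (c : Hn n × Hn n → ℝ) (hcm : Measurable c)
    (hb : ∀ z, |c z| ≤ C * (wH z.1 * wH z.2)) :
    Integrable (fun z : Hn n × Hn n =>
      (c z : ℂ) * ((k₁ z.1 * charQP q p z.1) * (k₂ z.2 * charQP q p z.2))) volume := by
  rw [Measure.volume_eq_prod]
  have hD : Integrable (fun z : Hn n × Hn n =>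
      C * (‖((wH z.1 : ℝ) : ℂ) * k₁ z.1‖ * ‖((wH z.2 : ℝ) : ℂ) * k₂ z.2‖))
      (volume.prod volume) := (hk₁.norm.mul_prod hk₂.norm).const_mul C
  refine hD.mono' ?_ (Filter.Eventually.of_forall fun z => ?_)
  · refine ((Complex.measurable_ofReal.comp hcm).aestronglyMeasurable).mul ?_
    have a1 : AEStronglyMeasurable (fun g : Hn n => k₁ g * charQP q p g) volume :=
      (aesm_of_wk hk₁).mul (continuous_charQP q p).aestronglyMeasurable
    have a2 : AEStronglyMeasurable (fun g : Hn n => k₂ g * charQP q p g) volume :=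
      (aesm_of_wk hk₂).mul (continuous_charQP q p).aestronglyMeasurable
    exact a1.comp_fst.mul a2.comp_snd
  · rw [norm_mul, norm_mul, norm_mul, norm_mul, norm_charQP, norm_charQP, mul_one, mul_one,
      Complex.norm_real, Real.norm_eq_abs, norm_wk, norm_wk]
    have h1 : |c z| * (‖k₁ z.1‖ * ‖k₂ z.2‖) ≤
        (C * (wH z.1 * wH z.2)) * (‖k₁ z.1‖ * ‖k₂ z.2‖) :=
      mul_le_mul_of_nonneg_right (hb z)
        (mul_nonneg (norm_nonneg _) (norm_nonneg _))
    calc |c z| * (‖k₁ z.1‖ * ‖k₂ z.2‖) ≤ (C * (wH z.1 * wH z.2)) * (‖k₁ z.1‖ * ‖k₂ z.2‖) := h1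
      _ = C * (wH z.1 * ‖k₁ z.1‖ * (wH z.2 * ‖k₂ z.2‖)) := by ring

/-! ### The twisted product kernel -/

/-- The kernel `(h,g) ↦ c(h,g) · k₁(h) k₂(h⁻¹g) · χ(g)`. -/
def Kf (k₁ k₂ : Hn n → ℂ) (q p : Fin n → ℝ) (c : Hn n × Hn n → ℝ) : Hn n × Hn n → ℂ :=
  fun z => (c z : ℂ) * (k₁ z.1 * k₂ (hdiv z.1 z.2)) * charQP q p z.2

lemma Kf_comp_skew (c : Hn n × Hn n → ℝ) (z : Hn n × Hn n) :
    Kf k₁ k₂ q p c (z.1, hmul z.1 z.2) =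
      (c (z.1, hmul z.1 z.2) : ℂ) *
        ((k₁ z.1 * charQP q p z.1) * (k₂ z.2 * charQP q p z.2)) := by
  unfold Kf
  simp only [hdiv_hmul, charQP_hmul]
  ring

lemma integrable_Kf
    (hk₁ : Integrable fun g : Hn n => ((wH g : ℝ) : ℂ) * k₁ g)
    (hk₂ : Integrable fun g : Hn n => ((wH g : ℝ) : ℂ) * k₂ g)
    (C : ℝ) (c : Hn n × Hn n → ℝ) (hcm : Measurable c)
    (hb : ∀ z : Hn n × Hn n, |c (z.1, hmul z.1 z.2)| ≤ C * (wH z.1 * wH z.2)) :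
    Integrable (Kf k₁ k₂ q p c) volume := by
  rw [← integrable_comp_skew_iff]
  have heq : (fun z : Hn n × Hn n => Kf k₁ k₂ q p c (z.1, hmul z.1 z.2))
      = fun z => ((fun w : Hn n × Hn n => c (w.1, hmul w.1 w.2)) z : ℂ) *
          ((k₁ z.1 * charQP q p z.1) * (k₂ z.2 * charQP q p z.2)) := by
    funext z; exact Kf_comp_skew c z
  rw [heq]
  refine integrable_prod_block hk₁ hk₂ C _ ?_ hb
  exact hcm.comp (measurable_fst.prodMk continuous_hmul_uncurry.measurable)

lemma integral_Kf_eq (c : Hn n × Hn n → ℝ) :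
    ∫ z : Hn n × Hn n, Kf k₁ k₂ q p c z =
      ∫ z : Hn n × Hn n, (c (z.1, hmul z.1 z.2) : ℂ) *
        ((k₁ z.1 * charQP q p z.1) * (k₂ z.2 * charQP q p z.2)) := by
  rw [← integral_comp_skew (Kf k₁ k₂ q p c)]
  congr 1
  funext z
  exact Kf_comp_skew c z

lemma integral_Kf_slice (c₀ : Hn n → ℝ) (g : Hn n) :
    ∫ h : Hn n, Kf k₁ k₂ q p (fun z => c₀ z.2) (h, g) =
      (c₀ g : ℂ) * hconv k₁ k₂ g * charQP q p g := by
  have hrw : (fun h : Hn n => Kf k₁ k₂ q p (fun z => c₀ z.2) (h, g))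
      = fun h => (c₀ g : ℂ) * (k₁ h * k₂ (hdiv h g)) * charQP q p g := rfl
  rw [hrw, integral_mul_const, integral_const_mul]
  rfl

lemma integrable_coeff_conv
    (hk₁ : Integrable fun g : Hn n => ((wH g : ℝ) : ℂ) * k₁ g)
    (hk₂ : Integrable fun g : Hn n => ((wH g : ℝ) : ℂ) * k₂ g)
    (c₀ : Hn n → ℝ) (hc₀ : Measurable c₀) (C : ℝ)
    (hb : ∀ z : Hn n × Hn n, |c₀ (hmul z.1 z.2)| ≤ C * (wH z.1 * wH z.2)) :
    Integrable fun g : Hn n => (c₀ g : ℂ) * hconv k₁ k₂ g * charQP q p g := by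
  have hKf : Integrable (Kf k₁ k₂ q p (fun z => c₀ z.2)) volume :=
    integrable_Kf hk₁ hk₂ C _ (hc₀.comp measurable_snd) hb
  rw [Measure.volume_eq_prod] at hKf
  have h2 : Integrable (fun g : Hn n => ∫ h : Hn n, Kf k₁ k₂ q p (fun z => c₀ z.2) (h, g))
      volume := by
    have := (hKf.swap).integral_prod_left
    exact this
  exact h2.congr (Filter.Eventually.of_forall fun g => integral_Kf_slice c₀ g)

lemma integral_coeff_conv
    (hk₁ : Integrable fun g : Hn n => ((wH g : ℝ) : ℂ) * k₁ g)
    (hk₂ : Integrable fun g : Hn n => ((wH g : ℝ) : ℂ) * k₂ g)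
    (c₀ : Hn n → ℝ) (hc₀ : Measurable c₀) (C : ℝ)
    (hb : ∀ z : Hn n × Hn n, |c₀ (hmul z.1 z.2)| ≤ C * (wH z.1 * wH z.2)) :
    ∫ g : Hn n, (c₀ g : ℂ) * hconv k₁ k₂ g * charQP q p g =
      ∫ z : Hn n × Hn n, (c₀ (hmul z.1 z.2) : ℂ) *
        ((k₁ z.1 * charQP q p z.1) * (k₂ z.2 * charQP q p z.2)) := by
  have hKf : Integrable (Kf k₁ k₂ q p (fun z => c₀ z.2)) volume :=
    integrable_Kf hk₁ hk₂ C _ (hc₀.comp measurable_snd) hb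
  have hKfp : Integrable (Kf k₁ k₂ q p (fun z => c₀ z.2)) (volume.prod volume) := by
    rw [← Measure.volume_eq_prod]; exact hKf
  calc ∫ g : Hn n, (c₀ g : ℂ) * hconv k₁ k₂ g * charQP q p g
      = ∫ g : Hn n, ∫ h : Hn n, Kf k₁ k₂ q p (fun z => c₀ z.2) (h, g) := by
        congr 1; funext g; exact (integral_Kf_slice c₀ g).symm
    _ = ∫ z : Hn n × Hn n, Kf k₁ k₂ q p (fun z => c₀ z.2) (z.2, z.1) ∂(volume.prod volume) := by
        exact MeasureTheory.integral_integral hKfp.swap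
    _ = ∫ z : Hn n × Hn n, Kf k₁ k₂ q p (fun z => c₀ z.2) z ∂(volume.prod volume) := by
        exact MeasureTheory.integral_prod_swap (Kf k₁ k₂ q p (fun z => c₀ z.2))
    _ = ∫ z : Hn n × Hn n, Kf k₁ k₂ q p (fun z => c₀ z.2) z := by
        rw [← Measure.volume_eq_prod]
    _ = _ := integral_Kf_eq _

end Integrab
/-! ### One-dimensional antiderivative lemmas -/

section OneDim

/-- If both `φ` and its antiderivative are integrable, then `∫ φ = 0`. -/
lemma integral_eq_zero_of_antideriv_integrable (φ : ℝ → ℂ) (h1 : Integrable φ)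
    (h3 : Integrable fun s => ∫ t in Set.Iic s, φ t) : ∫ t, φ t = 0 := by
  by_contra hc
  have hT : Filter.Tendsto (fun s => ∫ t in Set.Iic s, φ t) Filter.atTop (nhds (∫ t, φ t)) := by
    have hcover : AECover (volume : Measure ℝ) Filter.atTop (fun s : ℝ => Set.Iic s) :=
      aecover_Iic Filter.tendsto_id
    exact hcover.integral_tendsto_of_countably_generated h1
  set c := ∫ t, φ t with hcdef
  have hε : 0 < ‖c‖ / 2 := half_pos (norm_pos_iff.mpr hc)
  have hev : ∀ᶠ s in Filter.atTop, ‖c‖ / 2 ≤ ‖∫ t in Set.Iic s, φ t‖ := by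
    filter_upwards [hT (Metric.ball_mem_nhds c hε)] with s hs
    have : ‖(∫ t in Set.Iic s, φ t) - c‖ < ‖c‖ / 2 := by
      rw [← dist_eq_norm]; exact hs
    have h4 := norm_sub_norm_le c (∫ t in Set.Iic s, φ t)
    rw [norm_sub_rev] at h4
    linarith
  obtain ⟨s₀, hs₀⟩ := Filter.eventually_atTop.mp hev
  have hfin : volume {s : ℝ | ‖c‖ / 2 ≤ ‖∫ t in Set.Iic s, φ t‖} < ⊤ :=
    h3.measure_norm_ge_lt_top hε
  have hsub : Set.Ici s₀ ⊆ {s : ℝ | ‖c‖ / 2 ≤ ‖∫ t in Set.Iic s, φ t‖} := fun s hs => hs₀ s hs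
  have : (volume : Measure ℝ) (Set.Ici s₀) < ⊤ := lt_of_le_of_lt (measure_mono hsub) hfin
  simp [Real.volume_Ici] at this

/-- The kernel `k(s,t) = 1_{t ≤ s} − 1_{0 ≤ s}`. -/
private def kk (s t : ℝ) : ℝ := (if t ≤ s then (1 : ℝ) else 0) - (if 0 ≤ s then (1 : ℝ) else 0)

private lemma kk_slice_le (t : ℝ) (ht : t ≤ 0) (s : ℝ) :
    kk s t = Set.indicator (Set.Ico t 0) (fun _ => (1 : ℝ)) s := by
  unfold kk
  rcases lt_or_ge s t with h | h
  · rw [if_neg (by linarith), if_neg (by linarith),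
      Set.indicator_of_notMem (fun hm => absurd hm.1 (not_le.mpr h))]
    norm_num
  · rcases lt_or_ge s 0 with h2 | h2
    · rw [if_pos h, if_neg (by linarith), Set.indicator_of_mem (Set.mem_Ico.mpr ⟨h, h2⟩)]
      norm_num
    · rw [if_pos h, if_pos h2,
        Set.indicator_of_notMem (fun hm => absurd hm.2 (not_lt.mpr h2))]
      norm_num

private lemma kk_slice_gt (t : ℝ) (ht : ¬ t ≤ 0) (s : ℝ) :
    kk s t = - Set.indicator (Set.Ico 0 t) (fun _ => (1 : ℝ)) s := by
  have ht' : 0 < t := not_le.mp ht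
  unfold kk
  rcases lt_or_ge s 0 with h | h
  · rw [if_neg (by linarith), if_neg (by linarith),
      Set.indicator_of_notMem (fun hm => absurd hm.1 (not_le.mpr h))]
    norm_num
  · rcases lt_or_ge s t with h2 | h2
    · rw [if_neg (by linarith), if_pos h, Set.indicator_of_mem (Set.mem_Ico.mpr ⟨h, h2⟩)]
      norm_num
    · rw [if_pos h2, if_pos h,
        Set.indicator_of_notMem (fun hm => absurd hm.2 (not_lt.mpr h2))]
      norm_num

private lemma kk_integral_real (t : ℝ) : ∫ s, kk s t = -t := by
  by_cases ht : t ≤ 0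
  · rw [show (fun s => kk s t) = Set.indicator (Set.Ico t 0) (fun _ => (1 : ℝ)) from
      funext (kk_slice_le t ht)]
    rw [MeasureTheory.integral_indicator_const (1 : ℝ) measurableSet_Ico,
      measureReal_def, Real.volume_Ico, ENNReal.toReal_ofReal (by linarith)]
    simp
  · rw [show (fun s => kk s t) = fun s => - Set.indicator (Set.Ico 0 t) (fun _ => (1 : ℝ)) s from
      funext (kk_slice_gt t ht)]
    rw [MeasureTheory.integral_neg,
      MeasureTheory.integral_indicator_const (1 : ℝ) measurableSet_Ico,
      measureReal_def, Real.volume_Ico, ENNReal.toReal_ofReal (by linarith [not_le.mp ht])]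
    simp

private lemma kk_integral (t : ℝ) : ∫ s, ((kk s t : ℝ) : ℂ) = ((-t : ℝ) : ℂ) := by
  have h : ∫ s : ℝ, ((kk s t : ℝ) : ℂ) = ((∫ s : ℝ, kk s t : ℝ) : ℂ) := _root_.integral_ofReal
  rw [h, kk_integral_real]

private lemma kk_slice_integrable (t : ℝ) (c : ℂ) :
    Integrable fun s : ℝ => ((kk s t : ℝ) : ℂ) * c := by
  by_cases ht : t ≤ 0
  · have heq : (fun s : ℝ => ((kk s t : ℝ) : ℂ) * c) =
        fun s => Set.indicator (Set.Ico t 0) (fun _ => c) s := by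
      funext s
      rw [kk_slice_le t ht s]
      by_cases hs : s ∈ Set.Ico t 0 <;> simp [hs]
    rw [heq]
    rw [integrable_indicator_iff measurableSet_Ico]
    exact (integrableOn_const_iff (C := c)).mpr (Or.inr (by rw [Real.volume_Ico]; exact ENNReal.ofReal_lt_top))
  · have heq : (fun s : ℝ => ((kk s t : ℝ) : ℂ) * c) =
        fun s => - Set.indicator (Set.Ico 0 t) (fun _ => c) s := by
      funext s
      rw [kk_slice_gt t ht s]
      by_cases hs : s ∈ Set.Ico 0 t <;> simp [hs]
    rw [heq]
    refine Integrable.neg ?_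
    rw [integrable_indicator_iff measurableSet_Ico]
    exact (integrableOn_const_iff (C := c)).mpr (Or.inr (by rw [Real.volume_Ico]; exact ENNReal.ofReal_lt_top))

private lemma kk_measurable : Measurable fun z : ℝ × ℝ => kk z.1 z.2 := by
  unfold kk
  refine Measurable.sub ?_ ?_
  · exact Measurable.ite (measurableSet_le measurable_snd measurable_fst)
      measurable_const measurable_const
  · exact Measurable.ite (measurableSet_le measurable_const measurable_fst)
      measurable_const measurable_const

private lemma kk_norm_slice (t : ℝ) (c : ℂ) :
    ∫ s, ‖((kk s t : ℝ) : ℂ) * c‖ = |t| * ‖c‖ := by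
  have hind : ∀ s : ℝ, ‖((kk s t : ℝ) : ℂ) * c‖ =
      Set.indicator (Set.Ico (min t 0) (max t 0)) (fun _ => ‖c‖) s := by
    intro s
    by_cases ht : t ≤ 0
    · rw [norm_mul, kk_slice_le t ht s, min_eq_left ht, max_eq_right ht]
      by_cases hs : s ∈ Set.Ico t 0 <;> simp [hs]
    · have ht' := le_of_lt (not_le.mp ht)
      rw [norm_mul, kk_slice_gt t ht s, min_eq_right ht', max_eq_left ht']
      by_cases hs : s ∈ Set.Ico 0 t <;> simp [hs]
  calc ∫ s, ‖((kk s t : ℝ) : ℂ) * c‖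
      = ∫ s, Set.indicator (Set.Ico (min t 0) (max t 0)) (fun _ => ‖c‖) s := by
        congr 1; funext s; exact hind s
    _ = (volume (Set.Ico (min t 0) (max t 0))).toReal * ‖c‖ := by
        rw [MeasureTheory.integral_indicator_const _ measurableSet_Ico]; simp [measureReal_def]
    _ = |t| * ‖c‖ := by
        congr 1
        rcases le_total t 0 with h | h
        · rw [min_eq_left h, max_eq_right h, Real.volume_Ico,
            ENNReal.toReal_ofReal (by linarith), abs_of_nonpos h]
          ring
        · rw [min_eq_right h, max_eq_left h, Real.volume_Ico,
            ENNReal.toReal_ofReal (by linarith), abs_of_nonneg h]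
          ring

/-- The key one-dimensional identity: if `∫ φ = 0` then `∫ A φ = − ∫ t φ(t) dt`. -/
lemma integral_antideriv (φ : ℝ → ℂ) (h1 : Integrable φ)
    (h2 : Integrable fun s : ℝ => (s : ℂ) * φ s) (h4 : ∫ t, φ t = 0) :
    ∫ s, (∫ t in Set.Iic s, φ t) = - ∫ s : ℝ, (s : ℂ) * φ s := by
  have hrepr : ∀ s, (∫ t in Set.Iic s, φ t) = ∫ t, ((kk s t : ℝ) : ℂ) * φ t := by
    intro s
    have e1 : ∀ t, ((kk s t : ℝ) : ℂ) * φ t =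
        Set.indicator (Set.Iic s) φ t - (if (0:ℝ) ≤ s then (1:ℂ) else 0) * φ t := by
      intro t
      by_cases h : t ≤ s <;> by_cases h' : (0:ℝ) ≤ s <;>
        simp [kk, Set.indicator_apply, Set.mem_Iic, h, h'] <;> ring
    calc (∫ t in Set.Iic s, φ t)
        = ∫ t, Set.indicator (Set.Iic s) φ t := (integral_indicator measurableSet_Iic).symm
      _ = ∫ t, Set.indicator (Set.Iic s) φ t - (if (0:ℝ) ≤ s then (1:ℂ) else 0) * φ t := by
          rw [integral_sub (h1.indicator measurableSet_Iic) (h1.const_mul _)]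
          rw [integral_const_mul, h4, mul_zero, sub_zero]
      _ = ∫ t, ((kk s t : ℝ) : ℂ) * φ t := by congr 1; funext t; exact (e1 t).symm
  -- product integrability
  have hP : Integrable (fun z : ℝ × ℝ => ((kk z.1 z.2 : ℝ) : ℂ) * φ z.2)
      ((volume : Measure ℝ).prod volume) := by
    have haesm : AEStronglyMeasurable (fun z : ℝ × ℝ => ((kk z.1 z.2 : ℝ) : ℂ) * φ z.2)
        ((volume : Measure ℝ).prod volume) := by
      refine AEStronglyMeasurable.mul ?_ h1.1.comp_snd
      exact (Complex.measurable_ofReal.comp kk_measurable).aestronglyMeasurable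
    rw [integrable_prod_iff' haesm]
    constructor
    · exact Filter.Eventually.of_forall fun t => kk_slice_integrable t (φ t)
    · have : (fun t => ∫ s, ‖((kk s t : ℝ) : ℂ) * φ t‖) = fun t => |t| * ‖φ t‖ := by
        funext t; exact kk_norm_slice t (φ t)
      rw [this]
      have hn := h2.norm
      simp only [norm_mul, Complex.norm_real, Real.norm_eq_abs] at hn
      exact hn
  calc ∫ s, (∫ t in Set.Iic s, φ t)
      = ∫ s, ∫ t, ((kk s t : ℝ) : ℂ) * φ t := by congr 1; funext s; exact hrepr s
    _ = ∫ t, ∫ s, ((kk s t : ℝ) : ℂ) * φ t := integral_integral_swap hP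
    _ = ∫ t, ((-t : ℝ) : ℂ) * φ t := by
        congr 1; funext t
        rw [integral_mul_const, kk_integral]
    _ = - ∫ s : ℝ, (s : ℂ) * φ s := by
        rw [← integral_neg]
        congr 1; funext t
        push_cast
        ring

end OneDim

/-! ### `khat` of the antiderivative -/

section KhatAop

variable {q p : Fin n → ℝ}

lemma khat_AopH (F : Hn n → ℂ) (q p : Fin n → ℝ) (hiF : Integrable F)
    (hsF : Integrable fun g : Hn n => (g.1 : ℂ) * F g)
    (hAF : Integrable (AopH F)) :
    ∫ g : Hn n, AopH F g * charQP q p g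
      = - ∫ g : Hn n, (g.1 : ℂ) * F g * charQP q p g := by
  -- character on the base
  set cP : ((Fin n → ℝ) × (Fin n → ℝ)) → ℂ :=
    fun xy => Complex.exp (Complex.I * ((dotR q xy.1 + dotR p xy.2 : ℝ) : ℂ)) with hcP
  have hchar : ∀ g : Hn n, charQP q p g = cP g.2 := fun g => rfl
  have hAFc : Integrable (fun g : Hn n => AopH F g * charQP q p g) := integrable_mul_char hAF
  have hsFc : Integrable (fun g : Hn n => (g.1 : ℂ) * F g * charQP q p g) := by
    have := integrable_mul_char (q := q) (p := p) hsF
    exact this.congr (Filter.Eventually.of_forall fun g => by ring)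
  -- move everything to the product measure
  have hAFp : Integrable (fun z : ℝ × ((Fin n → ℝ) × (Fin n → ℝ)) => AopH F z * cP z.2)
      ((volume : Measure ℝ).prod volume) := by
    rw [← Measure.volume_eq_prod]; exact hAFc
  have hsFp : Integrable (fun z : ℝ × ((Fin n → ℝ) × (Fin n → ℝ)) => (z.1 : ℂ) * F z * cP z.2)
      ((volume : Measure ℝ).prod volume) := by
    rw [← Measure.volume_eq_prod]; exact hsFc
  have hs1 : ∀ᵐ xy : (Fin n → ℝ) × (Fin n → ℝ) ∂volume,
      Integrable fun s => F (s, xy) := by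
    have : Integrable F ((volume : Measure ℝ).prod volume) := by
      rw [← Measure.volume_eq_prod]; exact hiF
    exact this.prod_left_ae
  have hs2 : ∀ᵐ xy : (Fin n → ℝ) × (Fin n → ℝ) ∂volume,
      Integrable fun s : ℝ => (s : ℂ) * F (s, xy) := by
    have : Integrable (fun z : ℝ × ((Fin n → ℝ) × (Fin n → ℝ)) => (z.1 : ℂ) * F z)
        ((volume : Measure ℝ).prod volume) := by
      rw [← Measure.volume_eq_prod]; exact hsF
    exact this.prod_left_ae
  have hs3 : ∀ᵐ xy : (Fin n → ℝ) × (Fin n → ℝ) ∂volume,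
      Integrable fun s => AopH F (s, xy) := by
    have : Integrable (AopH F) ((volume : Measure ℝ).prod volume) := by
      rw [← Measure.volume_eq_prod]; exact hAF
    exact this.prod_left_ae
  calc ∫ g : Hn n, AopH F g * charQP q p g
      = ∫ xy : (Fin n → ℝ) × (Fin n → ℝ), ∫ s : ℝ, AopH F (s, xy) * cP xy := by
        rw [show (∫ g : Hn n, AopH F g * charQP q p g)
            = ∫ z : ℝ × ((Fin n → ℝ) × (Fin n → ℝ)), AopH F z * cP z.2
              ∂((volume : Measure ℝ).prod volume) by rw [← Measure.volume_eq_prod]; rfl]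
        exact integral_prod_symm _ hAFp
    _ = ∫ xy : (Fin n → ℝ) × (Fin n → ℝ), ∫ s : ℝ, - ((s : ℂ) * F (s, xy) * cP xy) := by
        refine integral_congr_ae ?_
        filter_upwards [hs1, hs2, hs3] with xy h1 h2 h3
        have h0 : ∫ t : ℝ, F (t, xy) = 0 :=
          integral_eq_zero_of_antideriv_integrable _ h1 (by
            refine h3.congr (Filter.Eventually.of_forall fun s => ?_)
            rfl)
        have key : ∫ s : ℝ, (∫ t in Set.Iic s, F (t, xy)) = - ∫ s : ℝ, (s : ℂ) * F (s, xy) :=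
          integral_antideriv _ h1 h2 h0
        calc ∫ s : ℝ, AopH F (s, xy) * cP xy
            = (∫ s : ℝ, AopH F (s, xy)) * cP xy := integral_mul_const _ _
          _ = (∫ s : ℝ, (∫ t in Set.Iic s, F (t, xy))) * cP xy := rfl
          _ = (- ∫ s : ℝ, (s : ℂ) * F (s, xy)) * cP xy := by rw [key]
          _ = ∫ s : ℝ, - ((s : ℂ) * F (s, xy) * cP xy) := by
              rw [neg_mul, ← integral_mul_const, ← integral_neg]
    _ = - ∫ xy : (Fin n → ℝ) × (Fin n → ℝ), ∫ s : ℝ, (s : ℂ) * F (s, xy) * cP xy := by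
        rw [← integral_neg]
        congr 1; funext xy
        rw [integral_neg]
    _ = - ∫ g : Hn n, (g.1 : ℂ) * F g * charQP q p g := by
        congr 1
        rw [show (∫ g : Hn n, (g.1 : ℂ) * F g * charQP q p g)
            = ∫ z : ℝ × ((Fin n → ℝ) × (Fin n → ℝ)), (z.1 : ℂ) * F z * cP z.2
              ∂((volume : Measure ℝ).prod volume) by rw [← Measure.volume_eq_prod]; rfl]
        exact (integral_prod_symm _ hsFp).symm

end KhatAop
/-! ### The s-moment of the commutator -/

section Moment

variable {k₁ k₂ : Hn n → ℂ} {q p : Fin n → ℝ}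

lemma abs_fst_le_wH (g : Hn n) : |g.1| ≤ wH g := by
  have := norm_nonneg g.2.1; have := norm_nonneg g.2.2; unfold wH; linarith

lemma norm_x_le_wH (g : Hn n) : ‖g.2.1‖ ≤ wH g := by
  have := abs_nonneg g.1; have := norm_nonneg g.2.2; unfold wH; linarith

lemma norm_y_le_wH (g : Hn n) : ‖g.2.2‖ ≤ wH g := by
  have := abs_nonneg g.1; have := norm_nonneg g.2.1; unfold wH; linarith

lemma c1_bound (z : Hn n × Hn n) :
    |(hmul z.1 z.2).1| ≤ (n + 2 : ℝ) * (wH z.1 * wH z.2) := by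
  obtain ⟨a, b⟩ := z
  have h1 : |a.1| ≤ wH a := abs_fst_le_wH a
  have h2 : |b.1| ≤ wH b := abs_fst_le_wH b
  have hwa := one_le_wH a
  have hwb := one_le_wH b
  have hd1 : |dotR a.2.1 b.2.2| ≤ n * (‖a.2.1‖ * ‖b.2.2‖) := abs_dotR_le _ _
  have hd2 : |dotR b.2.1 a.2.2| ≤ n * (‖b.2.1‖ * ‖a.2.2‖) := abs_dotR_le _ _
  have hm1 : ‖a.2.1‖ * ‖b.2.2‖ ≤ wH a * wH b :=
    mul_le_mul (norm_x_le_wH a) (norm_y_le_wH b) (norm_nonneg _) (by linarith)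
  have hm2 : ‖b.2.1‖ * ‖a.2.2‖ ≤ wH a * wH b := by
    calc ‖b.2.1‖ * ‖a.2.2‖ ≤ wH b * wH a :=
          mul_le_mul (norm_x_le_wH b) (norm_y_le_wH a) (norm_nonneg _) (by linarith)
      _ = wH a * wH b := mul_comm _ _
  have hwa' : wH a ≤ wH a * wH b := le_mul_of_one_le_right (by linarith) hwb
  have hwb' : wH b ≤ wH a * wH b := le_mul_of_one_le_left (by linarith) hwa
  have habs : |(hmul a b).1| ≤ |a.1| + |b.1| + (|dotR a.2.1 b.2.2| + |dotR b.2.1 a.2.2|) / 2 := by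
    unfold hmul
    calc |a.1 + b.1 + (dotR a.2.1 b.2.2 - dotR b.2.1 a.2.2) / 2|
        ≤ |a.1 + b.1| + |(dotR a.2.1 b.2.2 - dotR b.2.1 a.2.2) / 2| := abs_add_le _ _
      _ ≤ |a.1| + |b.1| + (|dotR a.2.1 b.2.2| + |dotR b.2.1 a.2.2|) / 2 := by
          have := abs_add_le a.1 b.1
          have h3 : |(dotR a.2.1 b.2.2 - dotR b.2.1 a.2.2) / 2|
              ≤ (|dotR a.2.1 b.2.2| + |dotR b.2.1 a.2.2|) / 2 := by
            rw [abs_div]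
            have := abs_sub (dotR a.2.1 b.2.2) (dotR b.2.1 a.2.2)
            simp only [abs_two]
            linarith [abs_sub_abs_le_abs_sub (dotR a.2.1 b.2.2) (dotR b.2.1 a.2.2),
              abs_sub (dotR a.2.1 b.2.2) (dotR b.2.1 a.2.2)]
          linarith
  have hn0 : (0 : ℝ) ≤ n := Nat.cast_nonneg n
  have hkey : n * (‖a.2.1‖ * ‖b.2.2‖) ≤ n * (wH a * wH b) := by
    exact mul_le_mul_of_nonneg_left hm1 hn0
  have hkey2 : n * (‖b.2.1‖ * ‖a.2.2‖) ≤ n * (wH a * wH b) :=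
    mul_le_mul_of_nonneg_left hm2 hn0
  calc |(hmul a b).1| ≤ |a.1| + |b.1| + (|dotR a.2.1 b.2.2| + |dotR b.2.1 a.2.2|) / 2 := habs
    _ ≤ wH a * wH b + wH a * wH b + (n * (wH a * wH b) + n * (wH a * wH b)) / 2 := by
        have e1 : |a.1| ≤ wH a * wH b := le_trans h1 hwa'
        have e2 : |b.1| ≤ wH a * wH b := le_trans h2 hwb'
        have e3 : |dotR a.2.1 b.2.2| ≤ n * (wH a * wH b) := le_trans hd1 hkey
        have e4 : |dotR b.2.1 a.2.2| ≤ n * (wH a * wH b) := le_trans hd2 hkey2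
        linarith
    _ = (n + 2 : ℝ) * (wH a * wH b) := by ring

lemma c1_measurable : Measurable fun g : Hn n => g.1 := measurable_fst

lemma one_le_wH_mul (z : Hn n × Hn n) : (1 : ℝ) ≤ wH z.1 * wH z.2 := by
  nlinarith [one_le_wH z.1, one_le_wH z.2]

lemma smoment_comm
    (hk₁ : Integrable fun g : Hn n => ((wH g : ℝ) : ℂ) * k₁ g)
    (hk₂ : Integrable fun g : Hn n => ((wH g : ℝ) : ℂ) * k₂ g) :
    ∫ g : Hn n, (g.1 : ℂ) * (hconv k₁ k₂ g - hconv k₂ k₁ g) * charQP q p g =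
      ∫ z : Hn n × Hn n, ((dotR z.1.2.1 z.2.2.2 - dotR z.2.2.1 z.1.2.2 : ℝ) : ℂ) *
        ((k₁ z.1 * charQP q p z.1) * (k₂ z.2 * charQP q p z.2)) := by
  have hA : Integrable fun g : Hn n => (g.1 : ℂ) * hconv k₁ k₂ g * charQP q p g :=
    integrable_coeff_conv hk₁ hk₂ _ c1_measurable (n + 2) c1_bound
  have hB : Integrable fun g : Hn n => (g.1 : ℂ) * hconv k₂ k₁ g * charQP q p g :=
    integrable_coeff_conv hk₂ hk₁ _ c1_measurable (n + 2) c1_bound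
  have hsplit : ∫ g : Hn n, (g.1 : ℂ) * (hconv k₁ k₂ g - hconv k₂ k₁ g) * charQP q p g
      = (∫ g : Hn n, (g.1 : ℂ) * hconv k₁ k₂ g * charQP q p g)
        - ∫ g : Hn n, (g.1 : ℂ) * hconv k₂ k₁ g * charQP q p g := by
    rw [← integral_sub hA hB]
    congr 1; funext g; ring
  rw [hsplit,
    integral_coeff_conv hk₁ hk₂ _ c1_measurable (n + 2) c1_bound,
    integral_coeff_conv hk₂ hk₁ _ c1_measurable (n + 2) c1_bound]
  -- swap the second integral
  have hswap : ∫ z : Hn n × Hn n, ((hmul z.1 z.2).1 : ℂ) *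
        ((k₂ z.1 * charQP q p z.1) * (k₁ z.2 * charQP q p z.2))
      = ∫ z : Hn n × Hn n, ((hmul z.2 z.1).1 : ℂ) *
        ((k₂ z.2 * charQP q p z.2) * (k₁ z.1 * charQP q p z.1)) := by
    rw [show (∫ z : Hn n × Hn n, ((hmul z.1 z.2).1 : ℂ) *
        ((k₂ z.1 * charQP q p z.1) * (k₁ z.2 * charQP q p z.2)))
      = ∫ z : Hn n × Hn n, ((hmul z.1 z.2).1 : ℂ) *
        ((k₂ z.1 * charQP q p z.1) * (k₁ z.2 * charQP q p z.2)) ∂(volume.prod volume)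
      from by rw [← Measure.volume_eq_prod]]
    rw [show (∫ z : Hn n × Hn n, ((hmul z.2 z.1).1 : ℂ) *
        ((k₂ z.2 * charQP q p z.2) * (k₁ z.1 * charQP q p z.1)))
      = ∫ z : Hn n × Hn n, ((hmul z.2 z.1).1 : ℂ) *
        ((k₂ z.2 * charQP q p z.2) * (k₁ z.1 * charQP q p z.1)) ∂(volume.prod volume)
      from by rw [← Measure.volume_eq_prod]]
    exact (MeasureTheory.integral_prod_swap
      (fun z : Hn n × Hn n => ((hmul z.1 z.2).1 : ℂ) *
        ((k₂ z.1 * charQP q p z.1) * (k₁ z.2 * charQP q p z.2)))).symm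
  rw [hswap]
  -- combine into a single integral
  have hIA : Integrable (fun z : Hn n × Hn n => ((hmul z.1 z.2).1 : ℂ) *
      ((k₁ z.1 * charQP q p z.1) * (k₂ z.2 * charQP q p z.2))) volume :=
    integrable_prod_block hk₁ hk₂ (n + 2) _
      (continuous_hmul_uncurry.measurable.fst) c1_bound
  have hIB : Integrable (fun z : Hn n × Hn n => ((hmul z.2 z.1).1 : ℂ) *
      ((k₂ z.2 * charQP q p z.2) * (k₁ z.1 * charQP q p z.1))) volume := by
    have base : Integrable (fun z : Hn n × Hn n => ((hmul z.2 z.1).1 : ℂ) *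
        ((k₁ z.1 * charQP q p z.1) * (k₂ z.2 * charQP q p z.2))) volume := by
      refine integrable_prod_block hk₁ hk₂ (n + 2) _ ?_ ?_
      · exact (continuous_hmul_uncurry.measurable.comp
          (measurable_snd.prodMk measurable_fst)).fst
      · intro z
        calc |(hmul z.2 z.1).1| ≤ (n + 2 : ℝ) * (wH z.2 * wH z.1) := c1_bound (z.2, z.1)
          _ = (n + 2 : ℝ) * (wH z.1 * wH z.2) := by ring
    exact base.congr (Filter.Eventually.of_forall fun z => by ring)
  rw [← integral_sub hIA hIB]
  congr 1; funext z
  unfold hmul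
  push_cast
  ring

end Moment
/-! ### `khat` of the p-mechanical bracket -/

section KhatPbracket

variable {k₁ k₂ : Hn n → ℂ} {q p : Fin n → ℝ}

/-- moment integrand in the `x`-direction -/
lemma integrable_xmoment (j : Fin n)
    (hk : Integrable fun g : Hn n => ((wH g : ℝ) : ℂ) * k₁ g) :
    Integrable fun g : Hn n => (g.2.1 j : ℂ) * (k₁ g * charQP q p g) := by
  refine integrable_coeff_mul _ ?_ ?_ hk
  · exact (measurable_pi_apply j).comp (measurable_fst.comp measurable_snd)
  · intro g
    calc |g.2.1 j| = ‖g.2.1 j‖ := rfl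
      _ ≤ ‖g.2.1‖ := norm_le_pi_norm _ j
      _ ≤ wH g := norm_x_le_wH g

lemma integrable_ymoment (j : Fin n)
    (hk : Integrable fun g : Hn n => ((wH g : ℝ) : ℂ) * k₁ g) :
    Integrable fun g : Hn n => (g.2.2 j : ℂ) * (k₁ g * charQP q p g) := by
  refine integrable_coeff_mul _ ?_ ?_ hk
  · exact (measurable_pi_apply j).comp (measurable_snd.comp measurable_snd)
  · intro g
    calc |g.2.2 j| = ‖g.2.2 j‖ := rfl
      _ ≤ ‖g.2.2‖ := norm_le_pi_norm _ j
      _ ≤ wH g := norm_y_le_wH g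

lemma integral_dot_expand
    (hk₁ : Integrable fun g : Hn n => ((wH g : ℝ) : ℂ) * k₁ g)
    (hk₂ : Integrable fun g : Hn n => ((wH g : ℝ) : ℂ) * k₂ g) :
    ∫ z : Hn n × Hn n, ((dotR z.1.2.1 z.2.2.2 - dotR z.2.2.1 z.1.2.2 : ℝ) : ℂ) *
        ((k₁ z.1 * charQP q p z.1) * (k₂ z.2 * charQP q p z.2))
      = ∑ j : Fin n,
          ((∫ g : Hn n, (g.2.1 j : ℂ) * (k₁ g * charQP q p g)) *
              (∫ g : Hn n, (g.2.2 j : ℂ) * (k₂ g * charQP q p g)) -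
            (∫ g : Hn n, (g.2.2 j : ℂ) * (k₁ g * charQP q p g)) *
              (∫ g : Hn n, (g.2.1 j : ℂ) * (k₂ g * charQP q p g))) := by
  have hterm1 : ∀ j : Fin n, Integrable (fun z : Hn n × Hn n =>
      ((z.1.2.1 j : ℂ) * (k₁ z.1 * charQP q p z.1)) *
      ((z.2.2.2 j : ℂ) * (k₂ z.2 * charQP q p z.2))) volume := by
    intro j
    rw [Measure.volume_eq_prod]
    exact (integrable_xmoment j hk₁).mul_prod (integrable_ymoment j hk₂)
  have hterm2 : ∀ j : Fin n, Integrable (fun z : Hn n × Hn n =>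
      ((z.1.2.2 j : ℂ) * (k₁ z.1 * charQP q p z.1)) *
      ((z.2.2.1 j : ℂ) * (k₂ z.2 * charQP q p z.2))) volume := by
    intro j
    rw [Measure.volume_eq_prod]
    exact (integrable_ymoment j hk₁).mul_prod (integrable_xmoment j hk₂)
  have hexp : ∀ z : Hn n × Hn n,
      ((dotR z.1.2.1 z.2.2.2 - dotR z.2.2.1 z.1.2.2 : ℝ) : ℂ) *
        ((k₁ z.1 * charQP q p z.1) * (k₂ z.2 * charQP q p z.2))
      = ∑ j : Fin n,
          (((z.1.2.1 j : ℂ) * (k₁ z.1 * charQP q p z.1)) *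
            ((z.2.2.2 j : ℂ) * (k₂ z.2 * charQP q p z.2)) -
           ((z.1.2.2 j : ℂ) * (k₁ z.1 * charQP q p z.1)) *
            ((z.2.2.1 j : ℂ) * (k₂ z.2 * charQP q p z.2))) := by
    intro z
    simp only [dotR, Complex.ofReal_sub, Complex.ofReal_sum, Complex.ofReal_mul, sub_mul,
      Finset.sum_mul, ← Finset.sum_sub_distrib]
    refine Finset.sum_congr rfl fun j _ => ?_
    ring
  calc ∫ z : Hn n × Hn n, ((dotR z.1.2.1 z.2.2.2 - dotR z.2.2.1 z.1.2.2 : ℝ) : ℂ) *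
        ((k₁ z.1 * charQP q p z.1) * (k₂ z.2 * charQP q p z.2))
      = ∫ z : Hn n × Hn n, ∑ j : Fin n,
          (((z.1.2.1 j : ℂ) * (k₁ z.1 * charQP q p z.1)) *
            ((z.2.2.2 j : ℂ) * (k₂ z.2 * charQP q p z.2)) -
           ((z.1.2.2 j : ℂ) * (k₁ z.1 * charQP q p z.1)) *
            ((z.2.2.1 j : ℂ) * (k₂ z.2 * charQP q p z.2))) := by
        congr 1; funext z; exact hexp z
    _ = ∑ j : Fin n, ∫ z : Hn n × Hn n,
          (((z.1.2.1 j : ℂ) * (k₁ z.1 * charQP q p z.1)) *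
            ((z.2.2.2 j : ℂ) * (k₂ z.2 * charQP q p z.2)) -
           ((z.1.2.2 j : ℂ) * (k₁ z.1 * charQP q p z.1)) *
            ((z.2.2.1 j : ℂ) * (k₂ z.2 * charQP q p z.2))) := by
        exact integral_finset_sum Finset.univ fun j _ => (hterm1 j).sub (hterm2 j)
    _ = _ := by
        refine Finset.sum_congr rfl fun j _ => ?_
        rw [integral_sub (hterm1 j) (hterm2 j)]
        congr 1
        · rw [show (∫ z : Hn n × Hn n, ((z.1.2.1 j : ℂ) * (k₁ z.1 * charQP q p z.1)) *
              ((z.2.2.2 j : ℂ) * (k₂ z.2 * charQP q p z.2)))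
            = ∫ z : Hn n × Hn n, ((z.1.2.1 j : ℂ) * (k₁ z.1 * charQP q p z.1)) *
              ((z.2.2.2 j : ℂ) * (k₂ z.2 * charQP q p z.2)) ∂(volume.prod volume)
            from by rw [← Measure.volume_eq_prod]]
          exact integral_prod_mul (fun g : Hn n => (g.2.1 j : ℂ) * (k₁ g * charQP q p g))
            (fun g : Hn n => (g.2.2 j : ℂ) * (k₂ g * charQP q p g))
        · rw [show (∫ z : Hn n × Hn n, ((z.1.2.2 j : ℂ) * (k₁ z.1 * charQP q p z.1)) *
              ((z.2.2.1 j : ℂ) * (k₂ z.2 * charQP q p z.2)))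
            = ∫ z : Hn n × Hn n, ((z.1.2.2 j : ℂ) * (k₁ z.1 * charQP q p z.1)) *
              ((z.2.2.1 j : ℂ) * (k₂ z.2 * charQP q p z.2)) ∂(volume.prod volume)
            from by rw [← Measure.volume_eq_prod]]
          exact integral_prod_mul (fun g : Hn n => (g.2.2 j : ℂ) * (k₁ g * charQP q p g))
            (fun g : Hn n => (g.2.1 j : ℂ) * (k₂ g * charQP q p g))

lemma integrable_conv
    (hk₁ : Integrable fun g : Hn n => ((wH g : ℝ) : ℂ) * k₁ g)
    (hk₂ : Integrable fun g : Hn n => ((wH g : ℝ) : ℂ) * k₂ g) :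
    Integrable (hconv k₁ k₂) := by
  have h := integrable_coeff_conv (q := 0) (p := 0) hk₁ hk₂ (fun _ => 1) measurable_const 1
    (fun z => by
      rw [abs_one, one_mul]
      exact one_le_wH_mul z)
  refine h.congr (Filter.Eventually.of_forall fun g => ?_)
  simp [charQP_zero]

lemma integrable_smul_conv
    (hk₁ : Integrable fun g : Hn n => ((wH g : ℝ) : ℂ) * k₁ g)
    (hk₂ : Integrable fun g : Hn n => ((wH g : ℝ) : ℂ) * k₂ g) :
    Integrable fun g : Hn n => (g.1 : ℂ) * hconv k₁ k₂ g := by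
  have h := integrable_coeff_conv (q := 0) (p := 0) hk₁ hk₂ _ c1_measurable (n + 2) c1_bound
  refine h.congr (Filter.Eventually.of_forall fun g => ?_)
  simp [charQP_zero]

/-- The central computation:  `khat` of the p-mechanical bracket. -/
lemma khat_pbracket
    (hk₁ : Integrable fun g : Hn n => ((wH g : ℝ) : ℂ) * k₁ g)
    (hk₂ : Integrable fun g : Hn n => ((wH g : ℝ) : ℂ) * k₂ g)
    (hbr : Integrable (pbracket k₁ k₂)) :
    ∫ g : Hn n, pbracket k₁ k₂ g * charQP q p g
      = ∑ j : Fin n,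
          ((Complex.I * ∫ g : Hn n, (g.2.1 j : ℂ) * (k₁ g * charQP q p g)) *
              (Complex.I * ∫ g : Hn n, (g.2.2 j : ℂ) * (k₂ g * charQP q p g)) -
            (Complex.I * ∫ g : Hn n, (g.2.2 j : ℂ) * (k₁ g * charQP q p g)) *
              (Complex.I * ∫ g : Hn n, (g.2.1 j : ℂ) * (k₂ g * charQP q p g))) := by
  have hiF : Integrable (fun g : Hn n => hconv k₁ k₂ g - hconv k₂ k₁ g) :=
    (integrable_conv hk₁ hk₂).sub (integrable_conv hk₂ hk₁)
  have hsF : Integrable fun g : Hn n => (g.1 : ℂ) * (hconv k₁ k₂ g - hconv k₂ k₁ g) := by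
    have h := (integrable_smul_conv hk₁ hk₂).sub (integrable_smul_conv hk₂ hk₁)
    refine h.congr (Filter.Eventually.of_forall fun g => ?_)
    simp only [Pi.sub_apply]
    ring
  have hkey := khat_AopH (fun g : Hn n => hconv k₁ k₂ g - hconv k₂ k₁ g) q p hiF hsF hbr
  calc ∫ g : Hn n, pbracket k₁ k₂ g * charQP q p g
      = - ∫ g : Hn n, (g.1 : ℂ) * (hconv k₁ k₂ g - hconv k₂ k₁ g) * charQP q p g := hkey
    _ = - ∑ j : Fin n,
          ((∫ g : Hn n, (g.2.1 j : ℂ) * (k₁ g * charQP q p g)) *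
              (∫ g : Hn n, (g.2.2 j : ℂ) * (k₂ g * charQP q p g)) -
            (∫ g : Hn n, (g.2.2 j : ℂ) * (k₁ g * charQP q p g)) *
              (∫ g : Hn n, (g.2.1 j : ℂ) * (k₂ g * charQP q p g))) := by
        rw [smoment_comm hk₁ hk₂, integral_dot_expand hk₁ hk₂]
    _ = _ := by
        rw [neg_eq_iff_eq_neg, ← Finset.sum_neg_distrib]
        refine Finset.sum_congr rfl fun j _ => ?_
        have hI := Complex.I_mul_I
        set a := ∫ g : Hn n, (g.2.1 j : ℂ) * (k₁ g * charQP q p g)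
        set b := ∫ g : Hn n, (g.2.2 j : ℂ) * (k₂ g * charQP q p g)
        set c := ∫ g : Hn n, (g.2.2 j : ℂ) * (k₁ g * charQP q p g)
        set d := ∫ g : Hn n, (g.2.1 j : ℂ) * (k₂ g * charQP q p g)
        calc a * b - c * d = -((Complex.I * Complex.I) * (a * b)
              - (Complex.I * Complex.I) * (c * d)) := by rw [hI]; ring
          _ = -(Complex.I * a * (Complex.I * b) - Complex.I * c * (Complex.I * d)) := by ring
  
end KhatPbracket
/-! ### Differentiating `khat` in the parameters -/

section Fderiv

variable {k : Hn n → ℂ} {q p : Fin n → ℝ}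

/-- The real-linear functional `(u,v) ↦ ⟨u, x_g⟩ + ⟨v, y_g⟩`. -/
def ellR (g : Hn n) : ((Fin n → ℝ) × (Fin n → ℝ)) →L[ℝ] ℝ :=
  ∑ j : Fin n,
    (g.2.1 j • ((ContinuousLinearMap.proj j).comp
        (ContinuousLinearMap.fst ℝ (Fin n → ℝ) (Fin n → ℝ)))
      + g.2.2 j • ((ContinuousLinearMap.proj j).comp
        (ContinuousLinearMap.snd ℝ (Fin n → ℝ) (Fin n → ℝ))))

lemma ellR_apply (g : Hn n) (v : (Fin n → ℝ) × (Fin n → ℝ)) :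
    ellR g v = dotR v.1 g.2.1 + dotR v.2 g.2.2 := by
  unfold ellR dotR
  rw [ContinuousLinearMap.sum_apply]
  simp only [ContinuousLinearMap.add_apply, ContinuousLinearMap.smul_apply,
    ContinuousLinearMap.coe_comp', Function.comp_apply, ContinuousLinearMap.proj_apply,
    ContinuousLinearMap.coe_fst', ContinuousLinearMap.coe_snd', smul_eq_mul]
  rw [Finset.sum_add_distrib]
  congr 1 <;> exact Finset.sum_congr rfl fun j _ => mul_comm _ _

lemma continuous_ellR : Continuous fun g : Hn n => ellR g := by
  refine continuous_finset_sum _ fun j _ => Continuous.add ?_ ?_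
  · exact ((continuous_apply j).comp (continuous_fst.comp continuous_snd)).smul
      continuous_const
  · exact ((continuous_apply j).comp (continuous_snd.comp continuous_snd)).smul
      continuous_const

/-- The integrand of the derivative of `khat`. -/
def Fder (k : Hn n → ℂ) (q p : Fin n → ℝ) (g : Hn n) :
    ((Fin n → ℝ) × (Fin n → ℝ)) →L[ℝ] ℂ :=
  (k g * charQP q p g * Complex.I) • (Complex.ofRealCLM.comp (ellR g))

lemma khat_deriv_core (hk : Integrable fun g : Hn n => ((wH g : ℝ) : ℂ) * k g) :
    Integrable (Fder k q p) volume ∧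
      HasFDerivAt (khat k) (∫ g : Hn n, Fder k q p g) (q, p) := by
  have haesm := aesm_of_wk hk
  have hmain := hasFDerivAt_integral_of_dominated_loc_of_lip
    (F := fun (x : (Fin n → ℝ) × (Fin n → ℝ)) (g : Hn n) => k g * charQP x.1 x.2 g)
    (F' := Fder k q p) (x₀ := (q, p))
    (bound := fun g : Hn n => (2 * n) * ((‖g.2.1‖ + ‖g.2.2‖) * ‖k g‖))
    (s := Metric.ball (q, p) 1) (Metric.ball_mem_nhds _ one_pos)
    (Filter.Eventually.of_forall fun x =>
      haesm.mul (continuous_charQP x.1 x.2).aestronglyMeasurable)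
    (integrable_mul_char (integrable_of_wk hk))
    ?f'meas ?lip ?bint ?diff
  · exact ⟨hmain.1, hmain.2⟩
  case f'meas =>
    refine AEStronglyMeasurable.fun_smul (f := fun g : Hn n => k g * charQP q p g * Complex.I)
      (g := fun g : Hn n => Complex.ofRealCLM.comp (ellR g)) ?_ ?_
    · exact (haesm.mul (continuous_charQP q p).aestronglyMeasurable).mul
        aestronglyMeasurable_const
    · exact (Continuous.clm_comp continuous_const continuous_ellR).aestronglyMeasurable
  case lip =>
    refine Filter.Eventually.of_forall fun g => ?_
    rw [lipschitzOnWith_iff_dist_le_mul]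
    intro x _ y _
    rw [dist_eq_norm, dist_eq_norm]
    have hfactor : k g * charQP x.1 x.2 g - k g * charQP y.1 y.2 g
        = k g * (charQP x.1 x.2 g - charQP y.1 y.2 g) := by ring
    rw [hfactor, norm_mul]
    have hexp : ‖charQP x.1 x.2 g - charQP y.1 y.2 g‖
        ≤ 2 * |(dotR x.1 g.2.1 + dotR x.2 g.2.2) - (dotR y.1 g.2.1 + dotR y.2 g.2.2)| :=
      norm_exp_I_mul_sub_le _ _
    have hdot : |(dotR x.1 g.2.1 + dotR x.2 g.2.2) - (dotR y.1 g.2.1 + dotR y.2 g.2.2)|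
        ≤ n * ((‖g.2.1‖ + ‖g.2.2‖) * ‖x - y‖) := by
      have e1 : (dotR x.1 g.2.1 + dotR x.2 g.2.2) - (dotR y.1 g.2.1 + dotR y.2 g.2.2)
          = dotR (x.1 - y.1) g.2.1 + dotR (x.2 - y.2) g.2.2 := by
        rw [dotR_sub_left, dotR_sub_left]; ring
      rw [e1]
      have h1 : |dotR (x.1 - y.1) g.2.1| ≤ n * (‖x.1 - y.1‖ * ‖g.2.1‖) := abs_dotR_le _ _
      have h2 : |dotR (x.2 - y.2) g.2.2| ≤ n * (‖x.2 - y.2‖ * ‖g.2.2‖) := abs_dotR_le _ _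
      have h3 : ‖x.1 - y.1‖ ≤ ‖x - y‖ := by
        have : x.1 - y.1 = (x - y).1 := rfl
        rw [this]; exact norm_fst_le _
      have h4 : ‖x.2 - y.2‖ ≤ ‖x - y‖ := by
        have : x.2 - y.2 = (x - y).2 := rfl
        rw [this]; exact norm_snd_le _
      have habs := abs_add_le (dotR (x.1 - y.1) g.2.1) (dotR (x.2 - y.2) g.2.2)
      have hn0 : (0 : ℝ) ≤ n := Nat.cast_nonneg n
      have h5 : ‖x.1 - y.1‖ * ‖g.2.1‖ ≤ ‖x - y‖ * ‖g.2.1‖ :=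
        mul_le_mul_of_nonneg_right h3 (norm_nonneg _)
      have h6 : ‖x.2 - y.2‖ * ‖g.2.2‖ ≤ ‖x - y‖ * ‖g.2.2‖ :=
        mul_le_mul_of_nonneg_right h4 (norm_nonneg _)
      have h7 : n * (‖x.1 - y.1‖ * ‖g.2.1‖) ≤ n * (‖x - y‖ * ‖g.2.1‖) :=
        mul_le_mul_of_nonneg_left h5 hn0
      have h8 : n * (‖x.2 - y.2‖ * ‖g.2.2‖) ≤ n * (‖x - y‖ * ‖g.2.2‖) :=
        mul_le_mul_of_nonneg_left h6 hn0
      nlinarith [norm_nonneg (x - y)]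
    have hK : ((Real.nnabs ((2 * n) * ((‖g.2.1‖ + ‖g.2.2‖) * ‖k g‖))) : ℝ)
        = (2 * n) * ((‖g.2.1‖ + ‖g.2.2‖) * ‖k g‖) := by
      rw [Real.coe_nnabs]
      refine abs_of_nonneg ?_
      have hn0 : (0 : ℝ) ≤ n := Nat.cast_nonneg n
      positivity
    rw [hK]
    have hnorm := norm_nonneg (k g)
    calc ‖k g‖ * ‖charQP x.1 x.2 g - charQP y.1 y.2 g‖
        ≤ ‖k g‖ * (2 * (n * ((‖g.2.1‖ + ‖g.2.2‖) * ‖x - y‖))) := by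
          refine mul_le_mul_of_nonneg_left ?_ hnorm
          calc ‖charQP x.1 x.2 g - charQP y.1 y.2 g‖
              ≤ 2 * |(dotR x.1 g.2.1 + dotR x.2 g.2.2)
                  - (dotR y.1 g.2.1 + dotR y.2 g.2.2)| := hexp
            _ ≤ 2 * (n * ((‖g.2.1‖ + ‖g.2.2‖) * ‖x - y‖)) := by linarith
      _ = (2 * n) * ((‖g.2.1‖ + ‖g.2.2‖) * ‖k g‖) * ‖x - y‖ := by ring
  case bint =>
    have h0 : Integrable (fun g : Hn n => wH g * ‖k g‖) := by
      have := hk.norm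
      refine this.congr (Filter.Eventually.of_forall fun g => ?_)
      simpa using norm_wk g k
    refine (h0.const_mul (2 * n)).mono' ?_ (Filter.Eventually.of_forall fun g => ?_)
    · refine AEStronglyMeasurable.mul aestronglyMeasurable_const ?_
      exact (((continuous_fst.comp continuous_snd).norm.add
        ((continuous_snd.comp continuous_snd).norm)).aestronglyMeasurable).mul haesm.norm
    · have hn0 : (0 : ℝ) ≤ n := Nat.cast_nonneg n
      have h1 : ‖g.2.1‖ + ‖g.2.2‖ ≤ wH g := by
        have := abs_nonneg g.1; unfold wH; linarith
      rw [Real.norm_eq_abs, abs_of_nonneg (by positivity)]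
      have hkn := norm_nonneg (k g)
      have h2 := mul_le_mul_of_nonneg_right h1 hkn
      nlinarith
  case diff =>
    refine Filter.Eventually.of_forall fun g => ?_
    have hfun : (fun x : (Fin n → ℝ) × (Fin n → ℝ) => k g * charQP x.1 x.2 g)
        = fun x => k g * Complex.exp (Complex.I * ((ellR g x : ℝ) : ℂ)) := by
      funext x
      rw [ellR_apply]
      rfl
    rw [hfun]
    have h0 : HasFDerivAt (fun x : (Fin n → ℝ) × (Fin n → ℝ) => ((ellR g x : ℝ) : ℂ))
        (Complex.ofRealCLM.comp (ellR g)) (q, p) :=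
      (Complex.ofRealCLM.hasFDerivAt).comp (q, p) (ellR g).hasFDerivAt
    have h1 := h0.const_mul Complex.I
    have h2 := h1.cexp
    have h3 := h2.const_mul (k g)
    have hder : Fder k q p g
        = k g • (Complex.exp (Complex.I * ((ellR g (q, p) : ℝ) : ℂ)) •
            (Complex.I • (Complex.ofRealCLM.comp (ellR g)))) := by
      unfold Fder
      rw [smul_smul, smul_smul]
      congr 1
      show k g * charQP q p g * Complex.I
        = k g * Complex.exp (Complex.I * ((ellR g (q, p) : ℝ) : ℂ)) * Complex.I
      rw [ellR_apply]
      rw [show charQP q p g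
        = Complex.exp (Complex.I * ((dotR q g.2.1 + dotR p g.2.2 : ℝ) : ℂ)) from rfl]
    rw [hder]
    exact h3
  
lemma fderiv_khat_apply (hk : Integrable fun g : Hn n => ((wH g : ℝ) : ℂ) * k g)
    (v : (Fin n → ℝ) × (Fin n → ℝ)) :
    fderiv ℝ (khat k) (q, p) v
      = ∫ g : Hn n, (k g * charQP q p g * Complex.I) *
          ((dotR v.1 g.2.1 + dotR v.2 g.2.2 : ℝ) : ℂ) := by
  obtain ⟨hint, hder⟩ := khat_deriv_core (q := q) (p := p) hk
  rw [hder.fderiv]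
  rw [ContinuousLinearMap.integral_apply hint v]
  congr 1
  funext g
  show Fder k q p g v = _
  unfold Fder
  rw [ContinuousLinearMap.smul_apply, ContinuousLinearMap.comp_apply, ellR_apply]
  simp [smul_eq_mul]

lemma fderiv_khat_q (hk : Integrable fun g : Hn n => ((wH g : ℝ) : ℂ) * k g) (j : Fin n) :
    fderiv ℝ (khat k) (q, p) (Pi.single j 1, 0)
      = Complex.I * ∫ g : Hn n, (g.2.1 j : ℂ) * (k g * charQP q p g) := by
  rw [fderiv_khat_apply hk (Pi.single j 1, 0)]
  calc ∫ g : Hn n, (k g * charQP q p g * Complex.I) *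
        ((dotR (Pi.single j 1) g.2.1 + dotR 0 g.2.2 : ℝ) : ℂ)
      = ∫ g : Hn n, Complex.I * ((g.2.1 j : ℂ) * (k g * charQP q p g)) := by
        congr 1; funext g
        rw [dotR_single_one, dotR_zero_left, add_zero]
        ring
    _ = Complex.I * ∫ g : Hn n, (g.2.1 j : ℂ) * (k g * charQP q p g) :=
        integral_const_mul _ _

lemma fderiv_khat_p (hk : Integrable fun g : Hn n => ((wH g : ℝ) : ℂ) * k g) (j : Fin n) :
    fderiv ℝ (khat k) (q, p) (0, Pi.single j 1)
      = Complex.I * ∫ g : Hn n, (g.2.2 j : ℂ) * (k g * charQP q p g) := by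
  rw [fderiv_khat_apply hk (0, Pi.single j 1)]
  calc ∫ g : Hn n, (k g * charQP q p g * Complex.I) *
        ((dotR 0 g.2.1 + dotR (Pi.single j 1) g.2.2 : ℝ) : ℂ)
      = ∫ g : Hn n, Complex.I * ((g.2.2 j : ℂ) * (k g * charQP q p g)) := by
        congr 1; funext g
        rw [dotR_single_one, dotR_zero_left, zero_add]
        ring
    _ = Complex.I * ∫ g : Hn n, (g.2.2 j : ℂ) * (k g * charQP q p g) :=
        integral_const_mul _ _

end Fderiv

end PM

/-! ### Main theorem -/

/-- A solution of the p-mechanical dynamic equation `df/dt = ⟦f, H⟧` yields, under the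
one-dimensional representation `ρ_{(q,p)}`, a classical observable
`f₀(t;q,p) = (f(t))^(q,p)` satisfying the Hamilton equation
`d/dt f₀ = {f₀, Ĥ}(q,p)`. -/
theorem p_dynamics_gives_hamilton_equation (n : ℕ) (hn : 1 ≤ n)
    (H : Hn n → ℂ) (f : ℝ → Hn n → ℂ) (f' : ℝ → Hn n → ℂ) (q p : Fin n → ℝ)
    -- (i) first-order moment integrability of `f t` and `H`, and integrability
    -- of the bracket and of the time derivative
    (hfm : ∀ t : ℝ, Integrable (fun g : Hn n =>
      ((1 + |g.1| + ‖g.2.1‖ + ‖g.2.2‖ : ℝ) : ℂ) * f t g))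
    (hHm : Integrable (fun g : Hn n =>
      ((1 + |g.1| + ‖g.2.1‖ + ‖g.2.2‖ : ℝ) : ℂ) * H g))
    (hbr : ∀ t : ℝ, Integrable (pbracket (f t) H))
    (hf' : ∀ t : ℝ, Integrable (f' t))
    -- (ii) the p-mechanical dynamic equation holds pointwise a.e.
    (hdyn : ∀ t : ℝ, ∀ᵐ g : Hn n ∂volume,
      HasDerivAt (fun τ : ℝ => f τ g) (f' t g) t ∧ f' t g = pbracket (f t) H g)
    -- (iii) differentiation under the integral sign is valid
    (hdiff : ∀ t : ℝ,
      HasDerivAt (fun τ : ℝ => khat (f τ) (q, p)) (khat (f' t) (q, p)) t) :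
    ∀ t : ℝ,
      HasDerivAt (fun τ : ℝ => khat (f τ) (q, p))
        (∑ j : Fin n,
          (fderiv ℝ (khat (f t)) (q, p) (Pi.single j 1, 0) *
              fderiv ℝ (khat H) (q, p) (0, Pi.single j 1) -
            fderiv ℝ (khat (f t)) (q, p) (0, Pi.single j 1) *
              fderiv ℝ (khat H) (q, p) (Pi.single j 1, 0))) t := by
  intro t
  have hfw : Integrable fun g : Hn n => ((PM.wH g : ℝ) : ℂ) * f t g := hfm t
  have hHw : Integrable fun g : Hn n => ((PM.wH g : ℝ) : ℂ) * H g := hHm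
  have key : khat (f' t) (q, p)
      = ∑ j : Fin n,
          (fderiv ℝ (khat (f t)) (q, p) (Pi.single j 1, 0) *
              fderiv ℝ (khat H) (q, p) (0, Pi.single j 1) -
            fderiv ℝ (khat (f t)) (q, p) (0, Pi.single j 1) *
              fderiv ℝ (khat H) (q, p) (Pi.single j 1, 0)) := by
    have h1 : khat (f' t) (q, p) = khat (pbracket (f t) H) (q, p) := by
      unfold khat
      refine integral_congr_ae ?_
      filter_upwards [hdyn t] with g hg
      rw [hg.2]
    rw [h1]
    have h2 : khat (pbracket (f t) H) (q, p)
        = ∫ g : Hn n, pbracket (f t) H g * charQP q p g := rfl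
    rw [h2, PM.khat_pbracket hfw hHw (hbr t)]
    refine Finset.sum_congr rfl fun j _ => ?_
    rw [PM.fderiv_khat_q hfw j, PM.fderiv_khat_p hHw j, PM.fderiv_khat_p hfw j,
      PM.fderiv_khat_q hHw j]
  have hd := hdiff t
  rwa [key] at hd
end
end

section
/- Let ℏ > 0, let H : ℝ × ℝⁿ × ℝⁿ → ℂ and f : ℝ → (ℝ × ℝⁿ × ℝⁿ → ℂ) be such that for every t: (i) f(t), H, the commutator c(t) = f(t) ⋆ H − H ⋆ f(t) and A c(t) are integrable; (ii) for almost every g the time derivative ∂f/∂t(t)(g) exists and equals ⟦f(t), H⟧(g) (the p-mechanical dynamic equation); (iii) for a fixed bounded measurable u : ℝⁿ → ℂ and fixed v ∈ ℝⁿ, differentiation under the integral sign is valid: d/dt (ρ_ℏ(f(t))u)(v) = (ρ_ℏ(∂f/∂t(t))u)(v). Then the quantum observable satisfies the Heisenberg equation: d/dt (ρ_ℏ(f(t))u)(v) = (1/(iℏ)) [ (ρ_ℏ(f(t))(ρ_ℏ(H)u))(v) − (ρ_ℏ(H)(ρ_ℏ(f(t))u))(v) ]. -/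
open MeasureTheory

noncomputable section

/-- The Schrödinger representation of the Heisenberg group on functions `u : ℝⁿ → ℂ`:
`(ρ_ℏ(s,x,y)u)(v) = e^{i(ℏ(s + ⟨x,y⟩/2) + ℏ^{1/2}⟨x,v⟩)} u(v + ℏ^{1/2} y)`. -/
def rhoPoint {n : ℕ} (ℏ : ℝ) (g : Hn n) (u : (Fin n → ℝ) → ℂ) :
    (Fin n → ℝ) → ℂ := fun v =>
  Complex.exp (Complex.I *
      ((ℏ * (g.1 + dotR g.2.1 g.2.2 / 2) + Real.sqrt ℏ * dotR g.2.1 v : ℝ) : ℂ)) *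
    u (v + Real.sqrt ℏ • g.2.2)

/-- The integrated Schrödinger representation:
`(ρ_ℏ(k)u)(v) = ∫ k(s,x,y) (ρ_ℏ(s,x,y)u)(v) ds dx dy`. -/
def rhoOp {n : ℕ} (ℏ : ℝ) (k : Hn n → ℂ) (u : (Fin n → ℝ) → ℂ) :
    (Fin n → ℝ) → ℂ := fun v =>
  ∫ g : Hn n, k g * rhoPoint ℏ g u v

namespace PMech

variable {n : ℕ}

abbrev Wn (n : ℕ) : Type := (Fin n → ℝ) × (Fin n → ℝ)

lemma dotR_add_left (x x' y : Fin n → ℝ) : dotR (x + x') y = dotR x y + dotR x' y := by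
  simp [dotR, add_mul, Finset.sum_add_distrib]

lemma dotR_add_right (x y y' : Fin n → ℝ) : dotR x (y + y') = dotR x y + dotR x y' := by
  simp [dotR, mul_add, Finset.sum_add_distrib]

lemma dotR_smul_right (c : ℝ) (x y : Fin n → ℝ) : dotR x (c • y) = c * dotR x y := by
  unfold dotR
  rw [Finset.mul_sum]
  exact Finset.sum_congr rfl fun i _ => by simp; ring

lemma dotR_neg_left (x y : Fin n → ℝ) : dotR (-x) y = -dotR x y := by
  simp [dotR, Finset.sum_neg_distrib]

lemma dotR_neg_right (x y : Fin n → ℝ) : dotR x (-y) = -dotR x y := by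
  simp [dotR, Finset.sum_neg_distrib]

lemma Continuous.dotR' {α : Type*} [TopologicalSpace α] {f g : α → Fin n → ℝ}
    (hf : Continuous f) (hg : Continuous g) : Continuous fun a => dotR (f a) (g a) := by
  unfold dotR
  exact continuous_finset_sum _ fun i _ =>
    ((continuous_apply i).comp hf).mul ((continuous_apply i).comp hg)

/-- Heisenberg group multiplication. -/
def hmul (h g : Hn n) : Hn n :=
  (h.1 + g.1 + (dotR h.2.1 g.2.2 - dotR g.2.1 h.2.2) / 2, h.2.1 + g.2.1, h.2.2 + g.2.2)

/-- Heisenberg group inverse. -/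
def hinv (h : Hn n) : Hn n := (-h.1, -h.2.1, -h.2.2)

lemma hinv_hmul_cancel (h g : Hn n) : hmul (hinv h) (hmul h g) = g := by
  unfold hmul hinv
  refine Prod.ext ?_ (Prod.ext ?_ ?_)
  · simp only [dotR_add_left, dotR_add_right, dotR_neg_left, dotR_neg_right]; ring
  · simp
  · simp

lemma hmul_hinv_cancel (h g : Hn n) : hmul h (hmul (hinv h) g) = g := by
  unfold hmul hinv
  refine Prod.ext ?_ (Prod.ext ?_ ?_)
  · simp only [dotR_add_left, dotR_add_right, dotR_neg_left, dotR_neg_right]; ring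
  · simp
  · simp

lemma hconv_eq (k₁ k₂ : Hn n → ℂ) (g : Hn n) :
    hconv k₁ k₂ g = ∫ h : Hn n, k₁ h * k₂ (hmul (hinv h) g) := by
  unfold hconv hmul hinv
  congr 1; funext h
  congr 2
  refine Prod.ext ?_ (Prod.ext ?_ ?_)
  · simp only [dotR_neg_left, dotR_neg_right]; ring
  · simp only; abel
  · simp only; abel

lemma continuous_hmul : Continuous fun p : Hn n × Hn n => hmul p.1 p.2 := by
  unfold hmul
  refine Continuous.prodMk ?_ (Continuous.prodMk ?_ ?_)
  · exact (continuous_fst.fst.add continuous_snd.fst).add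
      (((Continuous.dotR' continuous_fst.snd.fst continuous_snd.snd.snd).sub
        (Continuous.dotR' continuous_snd.snd.fst continuous_fst.snd.snd)).div_const 2)
  · exact continuous_fst.snd.fst.add continuous_snd.snd.fst
  · exact continuous_fst.snd.snd.add continuous_snd.snd.snd

end PMech

namespace PMech
variable {n : ℕ}

lemma continuous_phase (ℏ : ℝ) (v : Fin n → ℝ) :
    Continuous fun g : Hn n =>
      (ℏ * (g.1 + dotR g.2.1 g.2.2 / 2) + Real.sqrt ℏ * dotR g.2.1 v : ℝ) := by
  refine Continuous.add ?_ ?_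
  · exact continuous_const.mul (continuous_fst.add
      ((Continuous.dotR' continuous_snd.fst continuous_snd.snd).div_const 2))
  · exact continuous_const.mul (Continuous.dotR' continuous_snd.fst continuous_const)

lemma measurable_rhoPoint (ℏ : ℝ) {u : (Fin n → ℝ) → ℂ} (hu : Measurable u)
    (v : Fin n → ℝ) : Measurable fun g : Hn n => rhoPoint ℏ g u v := by
  unfold rhoPoint
  refine Measurable.mul ?_ ?_
  · exact Complex.measurable_exp.comp
      ((measurable_const.mul (Complex.measurable_ofReal.comp
        (continuous_phase ℏ v).measurable)))
  · exact hu.comp ((show Continuous fun g : Hn n => v + Real.sqrt ℏ • g.2.2 from continuous_const.add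
      (continuous_snd.snd.const_smul (Real.sqrt ℏ))).measurable)

lemma norm_rhoPoint_le (ℏ : ℝ) {u : (Fin n → ℝ) → ℂ} {C : ℝ}
    (hu : ∀ x, ‖u x‖ ≤ C) (g : Hn n) (v : Fin n → ℝ) : ‖rhoPoint ℏ g u v‖ ≤ C := by
  unfold rhoPoint
  rw [norm_mul]
  have h1 : ‖Complex.exp (Complex.I *
      ((ℏ * (g.1 + dotR g.2.1 g.2.2 / 2) + Real.sqrt ℏ * dotR g.2.1 v : ℝ) : ℂ))‖ = 1 := by
    rw [Complex.norm_exp]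
    simp [Complex.mul_re]
  rw [h1, one_mul]
  exact hu _

lemma rhoPoint_hmul {ℏ : ℝ} (hℏ : 0 ≤ ℏ) (h g : Hn n) (u : (Fin n → ℝ) → ℂ)
    (v : Fin n → ℝ) : rhoPoint ℏ (hmul h g) u v = rhoPoint ℏ g (rhoPoint ℏ h u) v := by
  have hr : Real.sqrt ℏ * Real.sqrt ℏ = ℏ := Real.mul_self_sqrt hℏ
  unfold rhoPoint hmul
  simp only
  rw [← mul_assoc, ← Complex.exp_add, ← mul_add, ← Complex.ofReal_add]
  have harg : v + Real.sqrt ℏ • (h.2.2 + g.2.2) = v + Real.sqrt ℏ • g.2.2 + Real.sqrt ℏ • h.2.2 := by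
    rw [smul_add]; abel
  rw [harg]
  have hphase : (ℏ * (h.1 + g.1 + (dotR h.2.1 g.2.2 - dotR g.2.1 h.2.2) / 2 +
        dotR (h.2.1 + g.2.1) (h.2.2 + g.2.2) / 2) + Real.sqrt ℏ * dotR (h.2.1 + g.2.1) v : ℝ)
      = (ℏ * (g.1 + dotR g.2.1 g.2.2 / 2) + Real.sqrt ℏ * dotR g.2.1 v) +
        (ℏ * (h.1 + dotR h.2.1 h.2.2 / 2) +
          Real.sqrt ℏ * dotR h.2.1 (v + Real.sqrt ℏ • g.2.2)) := by
    simp only [dotR_add_left, dotR_add_right, dotR_smul_right]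
    linear_combination (-(dotR h.2.1 g.2.2)) * hr
  rw [hphase]

end PMech

namespace PMech
variable {n : ℕ}

lemma continuous_hmul_left (h : Hn n) : Continuous fun g : Hn n => hmul h g :=
  continuous_hmul.comp (continuous_const.prodMk continuous_id)

lemma continuous_hinv : Continuous fun h : Hn n => hinv h := by
  unfold hinv
  exact (continuous_fst.neg).prodMk ((continuous_snd.fst.neg).prodMk continuous_snd.snd.neg)

/-- Left translation in the Heisenberg group as a measurable equivalence. -/
def hmulEquiv (h : Hn n) : Hn n ≃ᵐ Hn n where
  toFun g := hmul h g
  invFun g := hmul (hinv h) g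
  left_inv g := hinv_hmul_cancel h g
  right_inv g := hmul_hinv_cancel h g
  measurable_toFun := (continuous_hmul_left h).measurable
  measurable_invFun := (continuous_hmul_left (hinv h)).measurable

lemma measurePreserving_hmul (h : Hn n) :
    MeasurePreserving (fun g : Hn n => hmul h g) volume volume := by
  set ψ : Wn n → ℝ := fun w => h.1 + (dotR h.2.1 w.2 - dotR w.1 h.2.2) / 2 with hψ
  have hψc : Continuous ψ := continuous_const.add
    (((Continuous.dotR' continuous_const continuous_snd).sub
      (Continuous.dotR' continuous_fst continuous_const)).div_const 2)
  have M1 : MeasurePreserving (fun p : Wn n × ℝ => (p.1, p.2 + ψ p.1))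
      (volume.prod volume) (volume.prod volume) :=
    (MeasurePreserving.id volume).skew_product (g := fun w s => s + ψ w)
      (show Measurable fun p : Wn n × ℝ => p.2 + ψ p.1 from
        measurable_snd.add (hψc.comp continuous_fst).measurable)
      (Filter.Eventually.of_forall fun w => map_add_right_eq_self volume (ψ w))
  have comp1 : MeasurePreserving (fun g : Hn n => ((g.1 + ψ g.2, g.2) : Hn n))
      volume volume := by
    have hs1 : MeasurePreserving (Prod.swap : Hn n → Wn n × ℝ)
        (volume.prod volume) (volume.prod volume) := Measure.measurePreserving_swap
    have hs2 : MeasurePreserving (Prod.swap : Wn n × ℝ → Hn n)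
        (volume.prod volume) (volume.prod volume) := Measure.measurePreserving_swap
    exact hs2.comp (M1.comp hs1)
  haveI : Measure.IsAddRightInvariant (volume : Measure (Wn n)) :=
    show Measure.IsAddRightInvariant
      ((volume : Measure (Fin n → ℝ)).prod (volume : Measure (Fin n → ℝ))) by infer_instance
  have comp2 : MeasurePreserving (fun g : Hn n => ((g.1, g.2 + h.2) : Hn n))
      volume volume :=
    (MeasurePreserving.id volume).prod (measurePreserving_add_right volume h.2)
  have key : (fun g : Hn n => hmul h g) =
      (fun g : Hn n => ((g.1, g.2 + h.2) : Hn n)) ∘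
        (fun g : Hn n => ((g.1 + ψ g.2, g.2) : Hn n)) := by
    funext g
    unfold hmul
    refine Prod.ext ?_ (Prod.ext ?_ ?_)
    · simp only [Function.comp_apply, hψ]; ring
    · simp only [Function.comp_apply, Prod.fst_add]; exact add_comm _ _
    · simp only [Function.comp_apply, Prod.snd_add]; exact add_comm _ _
  rw [key]
  exact comp2.comp comp1

/-- The map `(h, g) ↦ (h, h·g)` as a measurable equivalence of `ℍⁿ × ℍⁿ`. -/
def pairEquiv : (Hn n × Hn n) ≃ᵐ (Hn n × Hn n) where
  toFun p := (p.1, hmul p.1 p.2)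
  invFun p := (p.1, hmul (hinv p.1) p.2)
  left_inv p := by simp [hinv_hmul_cancel]
  right_inv p := by simp [hmul_hinv_cancel]
  measurable_toFun := (measurable_fst.prodMk continuous_hmul.measurable)
  measurable_invFun := by
    refine measurable_fst.prodMk ?_
    exact (continuous_hmul.comp ((continuous_hinv.comp continuous_fst).prodMk
      continuous_snd)).measurable

lemma measurePreserving_pairEquiv :
    MeasurePreserving (fun p : Hn n × Hn n => (p.1, hmul p.1 p.2)) volume volume :=
  (MeasurePreserving.id volume).skew_product continuous_hmul.measurable
    (Filter.Eventually.of_forall fun h => (measurePreserving_hmul h).map_eq)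

end PMech

namespace PMech

open Filter

lemma limit_zero_of_integrable {F : ℝ → ℂ} {L : ℂ}
    (hF : Integrable F volume) (hT : Tendsto F atTop (nhds L)) : L = 0 := by
  by_contra hL
  have hL2 : ‖L‖ / 2 < ‖L‖ := by
    have : 0 < ‖L‖ := norm_pos_iff.2 hL
    linarith
  have hev : ∀ᶠ s in atTop, ‖L‖ / 2 < ‖F s‖ := hT.norm.eventually (lt_mem_nhds hL2)
  obtain ⟨N, hN⟩ := eventually_atTop.1 hev
  have hsub : Set.Ici N ⊆ {x : ℝ | ‖L‖ / 2 ≤ ‖F x‖} := fun x hx => (hN x hx).le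
  have hfin : volume {x : ℝ | ‖L‖ / 2 ≤ ‖F x‖} < ⊤ :=
    hF.measure_norm_ge_lt_top (div_pos (norm_pos_iff.2 hL) two_pos)
  have : volume (Set.Ici N) < ⊤ := lt_of_le_of_lt (measure_mono hsub) hfin
  rw [Real.volume_Ici] at this
  exact (lt_irrefl _ this).elim

/-- Fourier transform of an antiderivative: if both `k` and `F(s) = ∫_{t<s} k` are
integrable, then `∫ e^{iℏs} F = (i/ℏ) ∫ e^{iℏs} k`. -/
lemma oneD {ℏ : ℝ} (hℏ : ℏ ≠ 0) {k F : ℝ → ℂ} (hk : Integrable k volume)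
    (hF : Integrable F volume) (hFk : ∀ s, F s = ∫ t in Set.Iic s, k t) :
    ∫ s : ℝ, Complex.exp (Complex.I * ℏ * s) * F s
      = (Complex.I / ℏ) * ∫ s : ℝ, Complex.exp (Complex.I * ℏ * s) * k s := by
  set c : ℂ := Complex.I * ℏ with hc
  have hc0 : c ≠ 0 := mul_ne_zero Complex.I_ne_zero (by exact_mod_cast hℏ)
  set E : ℝ → ℂ := fun s => Complex.exp (c * s) with hE
  have hEc : Continuous E := Complex.continuous_exp.comp
    (continuous_const.mul Complex.continuous_ofReal)
  have hEnorm : ∀ s : ℝ, ‖E s‖ = 1 := by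
    intro s
    rw [hE, Complex.norm_exp]
    simp [hc, Complex.mul_re, Complex.mul_im]
  have hEd : ∀ s : ℝ, HasDerivAt E (c * E s) s := by
    intro s
    have h1 := ((hasDerivAt_id (s : ℂ)).const_mul c).cexp
    have h2 := h1.comp_ofReal
    simpa [hE, mul_comm] using h2
  -- integrability of E * F and E * k
  have hEF : Integrable (fun s => E s * F s) volume :=
    hF.bdd_mul hEc.aestronglyMeasurable (Filter.Eventually.of_forall fun s => (hEnorm s).le)
  have hEk : Integrable (fun s => E s * k s) volume :=
    hk.bdd_mul hEc.aestronglyMeasurable (Filter.Eventually.of_forall fun s => (hEnorm s).le)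
  -- the finite-interval integration by parts identity
  have base : ∀ α β : ℝ, α ≤ β →
      ∫ s in Set.Ioc α β, c * E s = E β - E α := by
    intro α β hαβ
    rw [← intervalIntegral.integral_of_le hαβ]
    exact intervalIntegral.integral_eq_sub_of_hasDerivAt (fun x _ => hEd x)
      ((hEc.const_smul c).intervalIntegrable α β)
  have interval : ∀ a b : ℝ, a ≤ b →
      c * ∫ s in Set.Ioc a b, E s * F s
        = E b * F b - E a * F a - ∫ t in Set.Ioc a b, E t * k t := by
    intro a b hab
    have hFs : ∀ s : ℝ, F s = ∫ t : ℝ, (Set.Iio s).indicator k t := by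
      intro s
      rw [hFk s, integral_Iic_eq_integral_Iio, ← integral_indicator measurableSet_Iio]
    set S : Set (ℝ × ℝ) := {p : ℝ × ℝ | p.2 < p.1} with hS
    have hSm : MeasurableSet S := measurableSet_lt measurable_snd measurable_fst
    set J : ℝ × ℝ → ℂ := S.indicator (fun p => (c * E p.1) * k p.2) with hJ
    have hbase_int : Integrable (fun p : ℝ × ℝ => (c * E p.1) * k p.2)
        ((volume.restrict (Set.Ioc a b)).prod volume) :=
      Integrable.mul_prod ((continuous_const.mul hEc).integrableOn_Ioc) hk
    have hJint : Integrable J ((volume.restrict (Set.Ioc a b)).prod volume) :=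
      hbase_int.indicator hSm
    have hJs : ∀ s t : ℝ, J (s, t) = (Set.Iio s).indicator k t * (c * E s) := by
      intro s t
      by_cases ht : t < s
      · rw [hJ, Set.indicator_of_mem (by simpa [hS] using ht),
          Set.indicator_of_mem (by simpa using ht)]
        ring
      · rw [hJ, Set.indicator_of_notMem (by simpa [hS] using ht),
          Set.indicator_of_notMem (by simpa using ht), zero_mul]
    have lhs1 : c * ∫ s in Set.Ioc a b, E s * F s = ∫ s in Set.Ioc a b, ∫ t : ℝ, J (s, t) := by
      rw [← integral_const_mul]
      refine integral_congr_ae (Filter.Eventually.of_forall fun s => ?_)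
      show c * (E s * F s) = ∫ t : ℝ, J (s, t)
      have hfs : ∫ t : ℝ, J (s, t) = F s * (c * E s) := by
        rw [show (fun t => J (s, t)) = fun t => (Set.Iio s).indicator k t * (c * E s)
            from funext fun t => hJs s t,
          integral_mul_const, integral_indicator measurableSet_Iio,
          ← integral_Iic_eq_integral_Iio, ← hFk s]
      rw [hfs]; ring
    have hswap : ∫ s in Set.Ioc a b, ∫ t : ℝ, J (s, t)
        = ∫ t : ℝ, ∫ s in Set.Ioc a b, J (s, t) :=
      integral_integral_swap hJint
    have hJt : ∀ s t : ℝ, J (s, t) = (Set.Ioi t).indicator (fun s => c * E s) s * k t := by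
      intro s t
      by_cases hts : t < s
      · rw [hJ, Set.indicator_of_mem (by simpa [hS] using hts),
          Set.indicator_of_mem (by simpa using hts)]
      · rw [hJ, Set.indicator_of_notMem (by simpa [hS] using hts),
          Set.indicator_of_notMem (by simpa using hts), zero_mul]
    have inner_eval : ∀ t : ℝ, ∫ s in Set.Ioc a b, J (s, t)
        = (if t ≤ b then E b - E (max a t) else 0) * k t := by
      intro t
      have h1 : (fun s => J (s, t)) = fun s => (Set.Ioi t).indicator (fun s => c * E s) s * k t :=
        funext fun s => hJt s t
      rw [h1, integral_mul_const, setIntegral_indicator measurableSet_Ioi,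
        Set.Ioc_inter_Ioi]
      by_cases htb : t ≤ b
      · rw [if_pos htb]
        have : (max a t) ≤ b := max_le hab htb
        rw [show a ⊔ t = max a t from rfl, base (max a t) b this]
      · rw [if_neg htb]
        push_neg at htb
        rw [show a ⊔ t = max a t from rfl, Set.Ioc_eq_empty (by
          intro hlt
          exact absurd (lt_of_le_of_lt (le_max_right a t) hlt) (not_lt.2 htb.le)),
          setIntegral_empty]
    -- outer integral
    have hint1 : Integrable ((Set.Iic a).indicator fun t => (E b - E a) * k t) volume :=
      (hk.const_mul _).indicator measurableSet_Iic
    have hint2' : Integrable (fun t => (E b - E t) * k t) volume :=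
      hk.bdd_mul (continuous_const.sub hEc).aestronglyMeasurable
        (Filter.Eventually.of_forall fun t => by
          calc ‖E b - E t‖ ≤ ‖E b‖ + ‖E t‖ := norm_sub_le _ _
          _ = 2 := by rw [hEnorm, hEnorm]; norm_num)
    have hint2 : Integrable ((Set.Ioc a b).indicator fun t => (E b - E t) * k t) volume :=
      hint2'.indicator measurableSet_Ioc
    have hsplit : ∀ t : ℝ, (if t ≤ b then E b - E (max a t) else 0) * k t
        = (Set.Iic a).indicator (fun t => (E b - E a) * k t) t
          + (Set.Ioc a b).indicator (fun t => (E b - E t) * k t) t := by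
      intro t
      by_cases h1 : t ≤ a
      · rw [Set.indicator_of_mem (by simpa using h1),
          Set.indicator_of_notMem (fun hmem => absurd h1 (not_le.2 hmem.1)),
          if_pos (h1.trans hab), max_eq_left h1]
        ring
      · push_neg at h1
        by_cases h2 : t ≤ b
        · rw [if_pos h2, Set.indicator_of_notMem (by simpa using h1),
            Set.indicator_of_mem (Set.mem_Ioc.2 ⟨h1, h2⟩), max_eq_right h1.le]
          ring
        · rw [if_neg h2, Set.indicator_of_notMem (by simpa using h1),
            Set.indicator_of_notMem (fun hmem => h2 hmem.2), zero_mul, add_zero]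
    have houter : ∫ t : ℝ, (if t ≤ b then E b - E (max a t) else 0) * k t
        = E b * F b - E a * F a - ∫ t in Set.Ioc a b, E t * k t := by
      rw [show (fun t : ℝ => (if t ≤ b then E b - E (max a t) else 0) * k t)
          = fun t => (Set.Iic a).indicator (fun t => (E b - E a) * k t) t
            + (Set.Ioc a b).indicator (fun t => (E b - E t) * k t) t from funext hsplit]
      rw [integral_add hint1 hint2, integral_indicator measurableSet_Iic,
        integral_indicator measurableSet_Ioc]
      have e1 : ∫ t in Set.Iic a, (E b - E a) * k t = (E b - E a) * F a := by
        rw [integral_const_mul, ← hFk a]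
      have e2 : ∫ t in Set.Ioc a b, (E b - E t) * k t
          = E b * (F b - F a) - ∫ t in Set.Ioc a b, E t * k t := by
        have hsub : ∀ t : ℝ, (E b - E t) * k t = E b * k t - E t * k t := fun t => by ring
        rw [show (fun t : ℝ => (E b - E t) * k t)
            = fun t => E b * k t - E t * k t from funext hsub]
        rw [integral_sub ((hk.integrableOn.const_mul _)) hEk.integrableOn,
          integral_const_mul]
        have : ∫ t in Set.Ioc a b, k t = F b - F a := by
          rw [hFk b, hFk a, ← (show Set.Iic b \ Set.Iic a = Set.Ioc a b by
              ext x; simp only [Set.mem_diff, Set.mem_Iic, Set.mem_Ioc, not_le]; exact and_comm),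
            integral_diff measurableSet_Iic hk.integrableOn (Set.Iic_subset_Iic.2 hab)]
        rw [this]
      rw [e1, e2]
      ring
    calc c * ∫ s in Set.Ioc a b, E s * F s
        = ∫ s in Set.Ioc a b, ∫ t : ℝ, J (s, t) := lhs1
      _ = ∫ t : ℝ, ∫ s in Set.Ioc a b, J (s, t) := hswap
      _ = ∫ t : ℝ, (if t ≤ b then E b - E (max a t) else 0) * k t :=
          integral_congr_ae (Filter.Eventually.of_forall fun t => inner_eval t)
      _ = E b * F b - E a * F a - ∫ t in Set.Ioc a b, E t * k t := houter
  -- limits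
  have hFtop : Tendsto F atTop (nhds (∫ t, k t)) := by
    have h1 : Tendsto (fun b : ℝ => ∫ t in Set.Iic b, k t) atTop
        (nhds (∫ t in ⋃ b : ℝ, Set.Iic b, k t)) :=
      tendsto_setIntegral_of_monotone (fun b => measurableSet_Iic)
        (fun a b hab => Set.Iic_subset_Iic.2 hab) (by rw [Set.iUnion_Iic]; exact hk.integrableOn)
    rw [Set.iUnion_Iic, Measure.restrict_univ] at h1
    exact h1.congr (fun b => (hFk b).symm)
  have hL0 : (∫ t, k t) = 0 := limit_zero_of_integrable hF hFtop
  rw [hL0] at hFtop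
  have hFbot : Tendsto (fun i : ℕ => F (-(i : ℝ))) atTop (nhds 0) := by
    have h1 : Tendsto (fun i : ℕ => ∫ t in Set.Iic (-(i : ℝ)), k t) atTop
        (nhds (∫ t in ⋂ i : ℕ, Set.Iic (-(i : ℝ)), k t)) :=
      tendsto_setIntegral_of_antitone (fun i => measurableSet_Iic)
        (fun i j hij => Set.Iic_subset_Iic.2 (by exact_mod_cast neg_le_neg (by exact_mod_cast hij)))
        ⟨0, hk.integrableOn⟩
    have h2 : (⋂ i : ℕ, Set.Iic (-(i : ℝ))) = ∅ := by
      ext x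
      simp only [Set.mem_iInter, Set.mem_Iic, Set.mem_empty_iff_false, iff_false, not_forall,
        not_le]
      obtain ⟨i, hi⟩ := exists_nat_gt (-x)
      exact ⟨i, by linarith⟩
    rw [h2] at h1
    simpa using h1.congr fun i => (hFk _).symm
  -- sequences
  have hbseq : Tendsto (fun i : ℕ => (i : ℝ)) atTop atTop := tendsto_natCast_atTop_atTop
  have haseq : Tendsto (fun i : ℕ => -(i : ℝ)) atTop atBot :=
    tendsto_neg_atBot_iff.mpr hbseq
  have t1 : Tendsto (fun i : ℕ => ∫ s in (-(i:ℝ))..(i:ℝ), E s * F s) atTop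
      (nhds (∫ s, E s * F s)) := intervalIntegral_tendsto_integral hEF haseq hbseq
  have t2 : Tendsto (fun i : ℕ => ∫ s in (-(i:ℝ))..(i:ℝ), E s * k s) atTop
      (nhds (∫ s, E s * k s)) := intervalIntegral_tendsto_integral hEk haseq hbseq
  have hab : ∀ i : ℕ, (-(i:ℝ)) ≤ (i:ℝ) := fun i => by
    have : (0:ℝ) ≤ i := Nat.cast_nonneg i
    linarith
  have hseq : ∀ i : ℕ, c * ∫ s in (-(i:ℝ))..(i:ℝ), E s * F s
      = E i * F i - E (-(i:ℝ)) * F (-(i:ℝ)) - ∫ s in (-(i:ℝ))..(i:ℝ), E s * k s := by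
    intro i
    rw [intervalIntegral.integral_of_le (hab i), intervalIntegral.integral_of_le (hab i)]
    exact interval _ _ (hab i)
  -- limits of the RHS pieces
  have hterm1 : Tendsto (fun i : ℕ => E i * F i) atTop (nhds 0) := by
    rw [show (0:ℂ) = 0 from rfl]
    have hnorm : Tendsto (fun i : ℕ => ‖E (i:ℝ) * F (i:ℝ)‖) atTop (nhds 0) := by
      have := (hFtop.comp hbseq).norm
      simp only [norm_zero] at this
      refine this.congr fun i => ?_
      rw [norm_mul, hEnorm, one_mul]; rfl
    exact tendsto_zero_iff_norm_tendsto_zero.2 hnorm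
  have hterm2 : Tendsto (fun i : ℕ => E (-(i:ℝ)) * F (-(i:ℝ))) atTop (nhds 0) := by
    have hnorm : Tendsto (fun i : ℕ => ‖E (-(i:ℝ)) * F (-(i:ℝ))‖) atTop (nhds 0) := by
      have := hFbot.norm
      simp only [norm_zero] at this
      refine this.congr fun i => ?_
      rw [norm_mul, hEnorm, one_mul]
    exact tendsto_zero_iff_norm_tendsto_zero.2 hnorm
  have hlhs : Tendsto (fun i : ℕ => c * ∫ s in (-(i:ℝ))..(i:ℝ), E s * F s) atTop
      (nhds (c * ∫ s, E s * F s)) := t1.const_mul c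
  have hrhs : Tendsto (fun i : ℕ => E i * F i - E (-(i:ℝ)) * F (-(i:ℝ))
      - ∫ s in (-(i:ℝ))..(i:ℝ), E s * k s) atTop (nhds (0 - 0 - ∫ s, E s * k s)) :=
    (hterm1.sub hterm2).sub t2
  have key : c * ∫ s, E s * F s = 0 - 0 - ∫ s, E s * k s := by
    refine tendsto_nhds_unique (hlhs.congr fun i => ?_) hrhs
    exact hseq i
  rw [sub_zero, zero_sub] at key
  -- conclude
  have hℏc : (ℏ : ℂ) ≠ 0 := by exact_mod_cast hℏ
  refine mul_left_cancel₀ hc0 ?_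
  rw [key, hc]
  field_simp
  linear_combination (-(∫ s : ℝ, E s * k s)) * Complex.I_sq

end PMech

namespace PMech
variable {n : ℕ}

lemma rhoPoint_decomp (ℏ : ℝ) (u : (Fin n → ℝ) → ℂ) (v : Fin n → ℝ) (g : Hn n) :
    rhoPoint ℏ g u v = Complex.exp (Complex.I * ℏ * g.1) *
      (Complex.exp (Complex.I *
          ((ℏ * (dotR g.2.1 g.2.2 / 2) + Real.sqrt ℏ * dotR g.2.1 v : ℝ) : ℂ)) *
        u (v + Real.sqrt ℏ • g.2.2)) := by
  unfold rhoPoint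
  rw [← mul_assoc, ← Complex.exp_add]
  congr 2
  push_cast
  ring

lemma rhoOp_AopH {ℏ : ℝ} (hℏ : ℏ ≠ 0) {c : Hn n → ℂ} (hcI : Integrable c volume)
    (hAcI : Integrable (AopH c) volume) {u : (Fin n → ℝ) → ℂ} (hu : Measurable u)
    {C : ℝ} (hubd : ∀ x, ‖u x‖ ≤ C) (v : Fin n → ℝ) :
    rhoOp ℏ (AopH c) u v = (Complex.I / ℏ) * rhoOp ℏ c u v := by
  set E : ℝ → ℂ := fun s => Complex.exp (Complex.I * ℏ * s) with hEdef
  set Q : Wn n → ℂ := fun w =>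
    Complex.exp (Complex.I *
        ((ℏ * (dotR w.1 w.2 / 2) + Real.sqrt ℏ * dotR w.1 v : ℝ) : ℂ)) *
      u (v + Real.sqrt ℏ • w.2) with hQdef
  have hdecomp : ∀ g : Hn n, rhoPoint ℏ g u v = E g.1 * Q g.2 := fun g =>
    rhoPoint_decomp ℏ u v g
  have hPmeas : Measurable fun g : Hn n => rhoPoint ℏ g u v := measurable_rhoPoint ℏ hu v
  have hPbd : ∀ g : Hn n, ‖rhoPoint ℏ g u v‖ ≤ C := fun g => norm_rhoPoint_le ℏ hubd g v
  -- integrability of the integrands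
  have int1 : Integrable (fun g : Hn n => AopH c g * (E g.1 * Q g.2)) volume := by
    have h := hAcI.bdd_mul hPmeas.aestronglyMeasurable (Filter.Eventually.of_forall hPbd)
    refine (h.congr (Filter.Eventually.of_forall fun g => ?_))
    show rhoPoint ℏ g u v * AopH c g = AopH c g * (E g.1 * Q g.2)
    rw [hdecomp g]; ring
  have int2 : Integrable (fun g : Hn n => c g * (E g.1 * Q g.2)) volume := by
    have h := hcI.bdd_mul hPmeas.aestronglyMeasurable (Filter.Eventually.of_forall hPbd)
    refine (h.congr (Filter.Eventually.of_forall fun g => ?_))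
    show rhoPoint ℏ g u v * c g = c g * (E g.1 * Q g.2)
    rw [hdecomp g]; ring
  have int1' : Integrable (fun g : Hn n => AopH c g * (E g.1 * Q g.2))
      ((volume : Measure ℝ).prod (volume : Measure (Wn n))) := int1
  have int2' : Integrable (fun g : Hn n => c g * (E g.1 * Q g.2))
      ((volume : Measure ℝ).prod (volume : Measure (Wn n))) := int2
  have hcP : Integrable c ((volume : Measure ℝ).prod (volume : Measure (Wn n))) := hcI
  have hAcP : Integrable (AopH c) ((volume : Measure ℝ).prod (volume : Measure (Wn n))) := hAcI
  have hae1 : ∀ᵐ w : Wn n ∂volume, Integrable (fun s => c (s, w)) volume :=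
    hcP.prod_left_ae
  have hae2 : ∀ᵐ w : Wn n ∂volume, Integrable (fun s => AopH c (s, w)) volume :=
    hAcP.prod_left_ae
  have h3 : ∀ᵐ w : Wn n ∂volume,
      (∫ s : ℝ, AopH c (s, w) * (E s * Q w))
        = (Complex.I / ℏ) * ∫ s : ℝ, c (s, w) * (E s * Q w) := by
    filter_upwards [hae1, hae2] with w h1 h2
    have hFdef : ∀ s : ℝ, AopH c (s, w) = ∫ t in Set.Iic s, c (t, w) := fun s => rfl
    have hone := oneD hℏ h1 h2 hFdef
    calc ∫ s : ℝ, AopH c (s, w) * (E s * Q w)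
        = (∫ s : ℝ, E s * AopH c (s, w)) * Q w := by
          rw [← integral_mul_const]
          exact integral_congr_ae (Filter.Eventually.of_forall fun s => by ring)
      _ = ((Complex.I / ℏ) * ∫ s : ℝ, E s * c (s, w)) * Q w := by rw [hone]
      _ = (Complex.I / ℏ) * ∫ s : ℝ, c (s, w) * (E s * Q w) := by
          rw [mul_assoc, ← integral_mul_const]
          congr 1
          exact integral_congr_ae (Filter.Eventually.of_forall fun s => by ring)
  calc rhoOp ℏ (AopH c) u v
      = ∫ g : Hn n, AopH c g * (E g.1 * Q g.2) := by
        unfold rhoOp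
        refine integral_congr_ae (Filter.Eventually.of_forall fun g => ?_)
        show AopH c g * rhoPoint ℏ g u v = AopH c g * (E g.1 * Q g.2)
        rw [hdecomp g]
    _ = ∫ w : Wn n, ∫ s : ℝ, AopH c (s, w) * (E s * Q w) :=
        integral_prod_symm _ int1'
    _ = ∫ w : Wn n, (Complex.I / ℏ) * ∫ s : ℝ, c (s, w) * (E s * Q w) :=
        integral_congr_ae h3
    _ = (Complex.I / ℏ) * ∫ w : Wn n, ∫ s : ℝ, c (s, w) * (E s * Q w) :=
        integral_const_mul _ _
    _ = (Complex.I / ℏ) * ∫ g : Hn n, c g * (E g.1 * Q g.2) :=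
        congrArg (fun z => (Complex.I / (ℏ:ℂ)) * z) (integral_prod_symm _ int2').symm
    _ = (Complex.I / ℏ) * rhoOp ℏ c u v := by
        unfold rhoOp
        congr 1
        refine integral_congr_ae (Filter.Eventually.of_forall fun g => ?_)
        show c g * (E g.1 * Q g.2) = c g * rhoPoint ℏ g u v
        rw [hdecomp g]

end PMech

namespace PMech
variable {n : ℕ}

lemma conv_rep {ℏ : ℝ} (hℏ : 0 ≤ ℏ) {k₁ k₂ : Hn n → ℂ}
    (hk₁ : Integrable k₁ volume) (hk₂ : Integrable k₂ volume)
    {u : (Fin n → ℝ) → ℂ} (hu : Measurable u) {C : ℝ} (hubd : ∀ x, ‖u x‖ ≤ C)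
    (v : Fin n → ℝ) :
    Integrable (fun g : Hn n => hconv k₁ k₂ g * rhoPoint ℏ g u v) volume ∧
      rhoOp ℏ (hconv k₁ k₂) u v = rhoOp ℏ k₂ (rhoOp ℏ k₁ u) v := by
  set P : Hn n → ℂ := fun g => rhoPoint ℏ g u v with hPdef
  have hPmeas : Measurable P := measurable_rhoPoint ℏ hu v
  have hPbd : ∀ g, ‖P g‖ ≤ C := fun g => norm_rhoPoint_le ℏ hubd g v
  set G : Hn n × Hn n → ℂ := fun p => k₁ p.1 * k₂ p.2 * P (hmul p.1 p.2) with hGdef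
  have hGmeas : AEStronglyMeasurable G ((volume : Measure (Hn n)).prod volume) := by
    have h1 : AEStronglyMeasurable (fun p : Hn n × Hn n => k₁ p.1)
        ((volume : Measure (Hn n)).prod volume) :=
      hk₁.1.comp_quasiMeasurePreserving Measure.quasiMeasurePreserving_fst
    have h2 : AEStronglyMeasurable (fun p : Hn n × Hn n => k₂ p.2)
        ((volume : Measure (Hn n)).prod volume) :=
      hk₂.1.comp_quasiMeasurePreserving Measure.quasiMeasurePreserving_snd
    have h3 : AEStronglyMeasurable (fun p : Hn n × Hn n => P (hmul p.1 p.2))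
        ((volume : Measure (Hn n)).prod volume) :=
      (hPmeas.comp continuous_hmul.measurable).aestronglyMeasurable
    exact (h1.mul h2).mul h3
  have hGint : Integrable G ((volume : Measure (Hn n)).prod volume) := by
    refine Integrable.mono ((hk₁.norm.mul_prod hk₂.norm).const_mul C) hGmeas ?_
    refine Filter.Eventually.of_forall fun p => ?_
    have hC0 : 0 ≤ C := le_trans (norm_nonneg _) (hubd v)
    have h1 : ‖G p‖ = ‖k₁ p.1‖ * ‖k₂ p.2‖ * ‖P (hmul p.1 p.2)‖ := by
      rw [hGdef]; simp [norm_mul]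
    have h2 : ‖C * (‖k₁ p.1‖ * ‖k₂ p.2‖)‖ = C * (‖k₁ p.1‖ * ‖k₂ p.2‖) := by
      rw [Real.norm_eq_abs, abs_of_nonneg (by positivity)]
    rw [h1, h2]
    calc ‖k₁ p.1‖ * ‖k₂ p.2‖ * ‖P (hmul p.1 p.2)‖
        ≤ ‖k₁ p.1‖ * ‖k₂ p.2‖ * C := by
          exact mul_le_mul_of_nonneg_left (hPbd _) (by positivity)
      _ = C * (‖k₁ p.1‖ * ‖k₂ p.2‖) := by ring
  set F : Hn n × Hn n → ℂ := fun p => k₁ p.1 * k₂ (hmul (hinv p.1) p.2) * P p.2 with hFdef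
  have hFΨ : ∀ p : Hn n × Hn n, F (p.1, hmul p.1 p.2) = G p := by
    intro p
    show k₁ p.1 * k₂ (hmul (hinv p.1) (hmul p.1 p.2)) * P (hmul p.1 p.2) = G p
    rw [hinv_hmul_cancel]
  have hFint : Integrable F ((volume : Measure (Hn n)).prod volume) := by
    have hcomp : Integrable (F ∘ fun p : Hn n × Hn n => (p.1, hmul p.1 p.2))
        ((volume : Measure (Hn n)).prod volume) :=
      hGint.congr (Filter.Eventually.of_forall fun p => (hFΨ p).symm)
    exact ((measurePreserving_pairEquiv (n := n)).integrable_comp_emb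
      pairEquiv.measurableEmbedding).mp hcomp
  have key1 : ∀ g : Hn n, hconv k₁ k₂ g * P g = ∫ h : Hn n, F (h, g) := by
    intro g
    rw [hconv_eq, ← integral_mul_const]
  have intLHS : Integrable (fun g : Hn n => hconv k₁ k₂ g * P g) volume := by
    have h := hFint.integral_prod_right
    exact h.congr (Filter.Eventually.of_forall fun g => (key1 g).symm)
  refine ⟨intLHS, ?_⟩
  have swap1 : ∫ g : Hn n, ∫ h : Hn n, F (h, g) = ∫ h : Hn n, ∫ g : Hn n, F (h, g) :=
    integral_integral_swap (f := fun g h => F (h, g)) hFint.swap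
  have inner : ∀ h : Hn n, ∫ g : Hn n, F (h, g) = ∫ g' : Hn n, G (h, g') := by
    intro h
    have hmp := measurePreserving_hmul h
    have hemb := (hmulEquiv h).measurableEmbedding
    have hcv := hmp.integral_comp hemb (fun g => F (h, g))
    rw [← hcv]
    exact integral_congr_ae (Filter.Eventually.of_forall fun g' => hFΨ (h, g'))
  have swap2 : ∫ h : Hn n, ∫ g' : Hn n, G (h, g') = ∫ g' : Hn n, ∫ h : Hn n, G (h, g') :=
    integral_integral_swap (f := fun h g' => G (h, g')) hGint
  have innerR : ∀ g' : Hn n, k₂ g' * rhoPoint ℏ g' (rhoOp ℏ k₁ u) v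
      = ∫ h : Hn n, G (h, g') := by
    intro g'
    have expand : ∀ w : (Fin n → ℝ) → ℂ, rhoPoint ℏ g' w v
        = Complex.exp (Complex.I * ((ℏ * (g'.1 + dotR g'.2.1 g'.2.2 / 2)
            + Real.sqrt ℏ * dotR g'.2.1 v : ℝ) : ℂ))
          * w (v + Real.sqrt ℏ • g'.2.2) := fun w => rfl
    calc k₂ g' * rhoPoint ℏ g' (rhoOp ℏ k₁ u) v
        = k₂ g' * (Complex.exp (Complex.I * ((ℏ * (g'.1 + dotR g'.2.1 g'.2.2 / 2)
            + Real.sqrt ℏ * dotR g'.2.1 v : ℝ) : ℂ))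
            * ∫ h : Hn n, k₁ h * rhoPoint ℏ h u (v + Real.sqrt ℏ • g'.2.2)) := by
          rw [expand]; rfl
      _ = ∫ h : Hn n, k₂ g' * (Complex.exp (Complex.I * ((ℏ * (g'.1 + dotR g'.2.1 g'.2.2 / 2)
            + Real.sqrt ℏ * dotR g'.2.1 v : ℝ) : ℂ))
            * (k₁ h * rhoPoint ℏ h u (v + Real.sqrt ℏ • g'.2.2))) := by
          rw [integral_const_mul, integral_const_mul]
      _ = ∫ h : Hn n, G (h, g') := by
          refine integral_congr_ae (Filter.Eventually.of_forall fun h => ?_)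
          show k₂ g' * (Complex.exp (Complex.I * ((ℏ * (g'.1 + dotR g'.2.1 g'.2.2 / 2)
            + Real.sqrt ℏ * dotR g'.2.1 v : ℝ) : ℂ))
            * (k₁ h * rhoPoint ℏ h u (v + Real.sqrt ℏ • g'.2.2))) = G (h, g')
          have hg : P (hmul h g') = rhoPoint ℏ g' (rhoPoint ℏ h u) v := rhoPoint_hmul hℏ h g' u v
          rw [hGdef]
          show _ = k₁ h * k₂ g' * P (hmul h g')
          rw [hg, expand (rhoPoint ℏ h u)]
          ring
  calc rhoOp ℏ (hconv k₁ k₂) u v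
      = ∫ g : Hn n, ∫ h : Hn n, F (h, g) :=
        integral_congr_ae (Filter.Eventually.of_forall fun g => key1 g)
    _ = ∫ h : Hn n, ∫ g : Hn n, F (h, g) := swap1
    _ = ∫ h : Hn n, ∫ g' : Hn n, G (h, g') :=
        integral_congr_ae (Filter.Eventually.of_forall fun h => inner h)
    _ = ∫ g' : Hn n, ∫ h : Hn n, G (h, g') := swap2
    _ = rhoOp ℏ k₂ (rhoOp ℏ k₁ u) v :=
        integral_congr_ae (Filter.Eventually.of_forall fun g' => (innerR g').symm)

end PMech


/-- A solution of the p-mechanical dynamic equation `df/dt = ⟦f, H⟧` yields, under the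
Schrödinger representation `ρ_ℏ`, a quantum observable satisfying the Heisenberg
equation `d/dt ρ_ℏ(f(t)) = (1/(iℏ))[ρ_ℏ(f(t)), ρ_ℏ(H)]`. -/
theorem p_dynamics_gives_heisenberg_equation (n : ℕ) (hn : 1 ≤ n) (ℏ : ℝ) (hℏ : 0 < ℏ)
    (H : Hn n → ℂ) (f : ℝ → Hn n → ℂ) (f' : ℝ → Hn n → ℂ)
    (u : (Fin n → ℝ) → ℂ) (hu_meas : Measurable u) (C : ℝ)
    (hu_bd : ∀ v, ‖u v‖ ≤ C) (v : Fin n → ℝ)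
    -- (i) integrability of `f t`, `H`, the convolution commutator, its
    -- antiderivative, and the time derivative
    (hf : ∀ t : ℝ, Integrable (f t)) (hH : Integrable H)
    (hc : ∀ t : ℝ, Integrable (fun g : Hn n => hconv (f t) H g - hconv H (f t) g))
    (hAc : ∀ t : ℝ, Integrable (pbracket (f t) H))
    (hf' : ∀ t : ℝ, Integrable (f' t))
    -- (ii) the p-mechanical dynamic equation holds pointwise a.e.
    (hdyn : ∀ t : ℝ, ∀ᵐ g : Hn n ∂volume,
      HasDerivAt (fun τ : ℝ => f τ g) (f' t g) t ∧ f' t g = pbracket (f t) H g)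
    -- (iii) differentiation under the integral sign is valid
    (hdiff : ∀ t : ℝ,
      HasDerivAt (fun τ : ℝ => rhoOp ℏ (f τ) u v) (rhoOp ℏ (f' t) u v) t) :
    ∀ t : ℝ,
      HasDerivAt (fun τ : ℝ => rhoOp ℏ (f τ) u v)
        ((1 / (Complex.I * ℏ)) *
          (rhoOp ℏ (f t) (rhoOp ℏ H u) v - rhoOp ℏ H (rhoOp ℏ (f t) u) v)) t := by
  intro t
  have hℏ0 : (ℏ : ℝ) ≠ 0 := ne_of_gt hℏ
  have hconv1 := PMech.conv_rep hℏ.le hH (hf t) hu_meas hu_bd v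
  have hconv2 := PMech.conv_rep hℏ.le (hf t) hH hu_meas hu_bd v
  have key : rhoOp ℏ (f' t) u v =
      (1 / (Complex.I * ℏ)) *
        (rhoOp ℏ (f t) (rhoOp ℏ H u) v - rhoOp ℏ H (rhoOp ℏ (f t) u) v) := by
    have h1 : rhoOp ℏ (f' t) u v = rhoOp ℏ (pbracket (f t) H) u v := by
      unfold rhoOp
      refine integral_congr_ae ?_
      filter_upwards [hdyn t] with g hg
      rw [hg.2]
    have h2 : rhoOp ℏ (pbracket (f t) H) u v
        = (Complex.I / ℏ) * rhoOp ℏ (fun g => hconv (f t) H g - hconv H (f t) g) u v :=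
      PMech.rhoOp_AopH hℏ0 (hc t) (hAc t) hu_meas hu_bd v
    have h3 : rhoOp ℏ (fun g => hconv (f t) H g - hconv H (f t) g) u v
        = rhoOp ℏ (hconv (f t) H) u v - rhoOp ℏ (hconv H (f t)) u v := by
      unfold rhoOp
      rw [← integral_sub hconv2.1 hconv1.1]
      refine integral_congr_ae (Filter.Eventually.of_forall fun g => ?_)
      show (hconv (f t) H g - hconv H (f t) g) * rhoPoint ℏ g u v = _
      ring
    have h4 : rhoOp ℏ (hconv (f t) H) u v = rhoOp ℏ H (rhoOp ℏ (f t) u) v := hconv2.2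
    have h5 : rhoOp ℏ (hconv H (f t)) u v = rhoOp ℏ (f t) (rhoOp ℏ H u) v := hconv1.2
    have hIrw : (Complex.I / (ℏ : ℂ)) = -(1 / (Complex.I * ℏ)) := by
      have hℏc : (ℏ : ℂ) ≠ 0 := by exact_mod_cast hℏ0
      field_simp
      linear_combination Complex.I_sq
    rw [h1, h2, h3, h4, h5, hIrw]
    ring
  exact key ▸ hdiff t
end
end

section
/- Let f₀ : ℝ × ℝⁿ × ℝⁿ → ℂ be differentiable and let ω ∈ ℝ. Define F(t; s, x, y) = f₀(s, (cos ωt)·x + (sin ωt)·y, −(sin ωt)·x + (cos ωt)·y), i.e. the initial observable composed with the rotation by angle ωt in each (x_j, y_j)-plane. Then F is differentiable in t and satisfies the transport equation of the p-mechanical harmonic oscillator: ∂F/∂t(t; s, x, y) = ω Σ_{j=1}^{n} ( y_j · ∂F/∂x_j(t; s, x, y) − x_j · ∂F/∂y_j(t; s, x, y) ) for all t, s, x, y. In particular, the evolution of a p-mechanical harmonic-oscillator observable is the rotation flow f₀(s, e^{−iωt} z) with z = x + i y. -/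
noncomputable section

/-- The evolved observable of the p-mechanical harmonic oscillator:
`F(t; s, x, y) = f₀(s, (cos ωt)x + (sin ωt)y, −(sin ωt)x + (cos ωt)y)`,
the initial observable composed with the rotation by angle `ωt` in each
`(x_j, y_j)`-plane. -/
def oscF {n : ℕ} (f₀ : Hn n → ℂ) (ω t : ℝ) : Hn n → ℂ := fun g =>
  f₀ (g.1,
      Real.cos (ω * t) • g.2.1 + Real.sin (ω * t) • g.2.2,
      (-Real.sin (ω * t)) • g.2.1 + Real.cos (ω * t) • g.2.2)

/-- The rotation flow `f₀(s, e^{−iωt}z)`, `z = x + iy`, is differentiable in `t` and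
satisfies the transport equation of the p-mechanical harmonic oscillator:
`∂F/∂t = ω Σ_j (y_j ∂F/∂x_j − x_j ∂F/∂y_j)`. -/
theorem harmonic_oscillator_transport (n : ℕ) (hn : 1 ≤ n)
    (f₀ : Hn n → ℂ) (hf₀ : Differentiable ℝ f₀) (ω : ℝ) :
    ∀ (t s : ℝ) (x y : Fin n → ℝ),
      HasDerivAt (fun τ : ℝ => oscF f₀ ω τ (s, x, y))
        ((ω : ℂ) * ∑ j : Fin n,
          ((y j : ℂ) *
              fderiv ℝ (oscF f₀ ω t) (s, x, y) ((0 : ℝ), Pi.single j 1, (0 : Fin n → ℝ)) -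
            (x j : ℂ) *
              fderiv ℝ (oscF f₀ ω t) (s, x, y) ((0 : ℝ), (0 : Fin n → ℝ), Pi.single j 1)))
        t := by
  intro t s x y
  set cc := Real.cos (ω * t) with hcc
  set sn := Real.sin (ω * t) with hsn
  set p : Hn n := (s, cc • x + sn • y, (-sn) • x + cc • y) with hp
  -- derivative of ω * τ
  have hωτ : HasDerivAt (fun τ : ℝ => ω * τ) ω t := by
    simpa using (hasDerivAt_id t).const_mul ω
  have hc : HasDerivAt (fun τ : ℝ => Real.cos (ω * τ)) (-sn * ω) t :=
    (Real.hasDerivAt_cos (ω * t)).comp t hωτ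
  have hs : HasDerivAt (fun τ : ℝ => Real.sin (ω * τ)) (cc * ω) t :=
    (Real.hasDerivAt_sin (ω * t)).comp t hωτ
  -- the curve
  have hγ : HasDerivAt (fun τ : ℝ => ((s, Real.cos (ω*τ) • x + Real.sin (ω*τ) • y,
        (-Real.sin (ω*τ)) • x + Real.cos (ω*τ) • y) : Hn n))
      ((0 : ℝ), (-sn * ω) • x + (cc * ω) • y, (-(cc * ω)) • x + (-sn * ω) • y) t := by
    apply (hasDerivAt_const t s).prodMk
    apply HasDerivAt.prodMk
    · exact (hc.smul_const x).add (hs.smul_const y)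
    · exact ((hs.neg.smul_const x)).add (hc.smul_const y)
  have hDp := (hf₀ p).hasFDerivAt
  set D := fderiv ℝ f₀ p with hD
  have hF : HasDerivAt (fun τ : ℝ => oscF f₀ ω τ (s, x, y))
      (D ((0 : ℝ), (-sn * ω) • x + (cc * ω) • y, (-(cc * ω)) • x + (-sn * ω) • y)) t := by
    exact hDp.comp_hasDerivAt t hγ
  convert hF using 1
  -- compute fderiv of oscF via the linear map L
  set πx : Hn n →L[ℝ] (Fin n → ℝ) :=
    (ContinuousLinearMap.fst ℝ (Fin n → ℝ) (Fin n → ℝ)).comp (ContinuousLinearMap.snd ℝ ℝ ((Fin n → ℝ) × (Fin n → ℝ))) with hπx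
  set πy : Hn n →L[ℝ] (Fin n → ℝ) :=
    (ContinuousLinearMap.snd ℝ (Fin n → ℝ) (Fin n → ℝ)).comp (ContinuousLinearMap.snd ℝ ℝ ((Fin n → ℝ) × (Fin n → ℝ))) with hπy
  set L : Hn n →L[ℝ] Hn n :=
    (ContinuousLinearMap.fst ℝ ℝ ((Fin n → ℝ) × (Fin n → ℝ))).prod
      ((cc • πx + sn • πy).prod ((-sn) • πx + cc • πy)) with hL
  have hLp : L (s, x, y) = p := by
    simp [hL, hπx, hπy, hp, ContinuousLinearMap.prod_apply]
  have hosc : oscF f₀ ω t = f₀ ∘ L := by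
    funext g
    simp [oscF, hL, hπx, hπy, ContinuousLinearMap.prod_apply, Function.comp, hcc, hsn]
  have hfd : fderiv ℝ (oscF f₀ ω t) (s, x, y) = D.comp L := by
    rw [hosc]
    have : HasFDerivAt (f₀ ∘ L) (D.comp L) (s, x, y) := by
      have h1 : HasFDerivAt f₀ D (L (s, x, y)) := by rw [hLp]; exact hDp
      exact h1.comp (s, x, y) L.hasFDerivAt
    exact this.fderiv
  rw [hfd]
  have hLx : ∀ j : Fin n, L ((0 : ℝ), Pi.single j 1, (0 : Fin n → ℝ)) =
      ((0 : ℝ), cc • (Pi.single j 1 : Fin n → ℝ), (-sn) • (Pi.single j 1 : Fin n → ℝ)) := by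
    intro j; simp [hL, hπx, hπy, ContinuousLinearMap.prod_apply]
  have hLy : ∀ j : Fin n, L ((0 : ℝ), (0 : Fin n → ℝ), Pi.single j 1) =
      ((0 : ℝ), sn • (Pi.single j 1 : Fin n → ℝ), cc • (Pi.single j 1 : Fin n → ℝ)) := by
    intro j; simp [hL, hπx, hπy, ContinuousLinearMap.prod_apply]
  simp only [ContinuousLinearMap.comp_apply, hLx, hLy]
  have hmul : ∀ (r : ℝ) (u : Hn n), (r : ℂ) * D u = D (r • u) := by
    intro r u; rw [D.map_smul, Complex.real_smul]
  simp only [hmul]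
  simp only [← map_sub, ← map_sum]
  rw [hmul]
  congr 1
  refine Prod.ext ?_ (Prod.ext ?_ ?_)
  · simp [Prod.fst_sum]
  · show _ = (-sn * ω) • x + (cc * ω) • y
    funext i
    simp only [Prod.smul_snd, Prod.smul_fst, Prod.snd_sum, Prod.fst_sum, Prod.smul_mk,
      Prod.mk_sub_mk, Prod.fst_sub, Prod.snd_sub, Finset.sum_apply, Pi.add_apply,
      Pi.sub_apply, Pi.smul_apply, Pi.single_apply, smul_eq_mul, mul_ite, mul_zero,
      mul_one]
    rw [Finset.sum_sub_distrib]
    simp [Finset.sum_ite_eq', mul_comm, mul_assoc, mul_left_comm]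
    ring
  · show _ = (-(cc * ω)) • x + (-sn * ω) • y
    funext i
    simp only [Prod.smul_snd, Prod.smul_fst, Prod.snd_sum, Prod.fst_sum, Prod.smul_mk,
      Prod.mk_sub_mk, Prod.fst_sub, Prod.snd_sub, Finset.sum_apply, Pi.add_apply,
      Pi.sub_apply, Pi.smul_apply, Pi.single_apply, smul_eq_mul, mul_ite, mul_zero,
      mul_one]
    rw [Finset.sum_sub_distrib]
    simp [Finset.sum_ite_eq', mul_comm, mul_assoc, mul_left_comm]
    ring
end
end
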